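/- arXiv:2307.15657 — 14 statements merged into one kernel-verified Lean document; each statement's English description precedes it below -/
import Mathlib

section
/- Let n, m, k, d be integers with n and d positive, d even, k odd, gcd(m,n)=1, 2m<n, and (3^m+1)d−2=k(3^n−1). Then n is odd, and there exist an even nonnegative integer j with gcd(j,n)=1 and integers t ∈ ℤ and ε ∈ {1,−1} such that d ≡ 3^t · e^ε (mod 3^n−1), where e is an integer satisfying ((3^j+1)/2)·e ≡ (3^n+1)/2 (mod 3^n−1). Conversely, if n is an odd positive integer, j is an even nonnegative integer with gcd(j,n)=1, and d is an integer with ((3^j+1)/2)·d ≡ (3^n+1)/2 (mod 3^n−1), then there exist t ∈ ℤ, ε ∈ {1,−1}, an even positive integer d', and integers k, m with k odd, m ≥ 0, gcd(m,n)=1, and 2m<n, such that d ≡ 3^t·(d')^ε (mod 3^n−1) and (3^m+1)d'−2=k(3^n−1). -/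
lemma aux_redn (n m : ℕ) (N x : ℤ) (hN : (3:ℤ)^n = N + 1) (hx : Even x)
    (h : (3^(m+n)+1)*x ≡ 2+N [ZMOD 2*N]) : ((3:ℤ)^m+1)*x ≡ 2+N [ZMOD 2*N] := by
  obtain ⟨y, hy⟩ := hx
  have key : ((3:ℤ)^m+1)*x ≡ (3^(m+n)+1)*x [ZMOD 2*N] := by
    rw [Int.modEq_iff_dvd]
    exact ⟨3^m * y, by linear_combination (3:ℤ)^m * x * hN + ((3:ℤ)^m * N) * hy⟩
  exact key.trans h

lemma aux_redq (n : ℕ) (N x : ℤ) (hN : (3:ℤ)^n = N + 1) (hx : Even x) :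
    ∀ q m : ℕ, ((3:ℤ)^(m+n*q)+1)*x ≡ 2+N [ZMOD 2*N] → ((3:ℤ)^m+1)*x ≡ 2+N [ZMOD 2*N] := by
  intro q
  induction q with
  | zero => intro m h; simpa using h
  | succ q ih =>
      intro m h
      have h' : ((3:ℤ)^((m+n*q)+n)+1)*x ≡ 2+N [ZMOD 2*N] := by
        have he : (m+n*q)+n = m+n*(q+1) := by ring
        rw [he]; exact h
      exact ih m (aux_redn n (m+n*q) N x hN hx h')

lemma aux_inv (n j : ℕ) (N x : ℤ) (hj : j ≤ n) (hN : (3:ℤ)^n = N + 1) (hx : Even x)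
    (h : ((3:ℤ)^j+1)*x ≡ 2+N [ZMOD 2*N]) :
    ((3:ℤ)^(n-j)+1)*((3:ℤ)^j*x) ≡ 2+N [ZMOD 2*N] := by
  obtain ⟨y, hy⟩ := hx
  have hp : (3:ℤ)^(n-j) * 3^j = 3^n := by rw [← pow_add]; congr 1; omega
  have key : ((3:ℤ)^(n-j)+1)*((3:ℤ)^j*x) ≡ ((3:ℤ)^j+1)*x [ZMOD 2*N] := by
    rw [Int.modEq_iff_dvd]
    exact ⟨-y, by linear_combination -x * hp - x * hN - N * hy⟩
  exact key.trans h

lemma aux_pack (m : ℕ) (N x : ℤ) (hNpos : 0 < N) (hx : Even x)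
    (hC : ((3:ℤ)^m+1)*x ≡ 2+N [ZMOD 2*N]) :
    ∃ d' : ℤ, Even d' ∧ 0 < d' ∧ x ≡ d' [ZMOD N] ∧
      ∃ k : ℤ, Odd k ∧ ((3:ℤ)^m+1)*d' - 2 = k*N := by
  refine ⟨x % (2*N) + 2*N, ?_, ?_, ?_, ?_⟩
  · rw [Int.even_iff]
    have h1 : (x % (2*N)) % 2 = x % 2 := Int.emod_emod_of_dvd x ⟨N, rfl⟩
    have h2 := Int.even_iff.mp hx
    omega
  · have := Int.emod_nonneg x (by positivity : (2:ℤ)*N ≠ 0)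
    omega
  · have h : x ≡ x % (2*N) + 2*N [ZMOD 2*N] :=
      Int.modEq_iff_dvd.mpr ⟨1 - x/(2*N), by rw [Int.emod_def]; ring⟩
    exact h.of_dvd ⟨2, by ring⟩
  · have h : ((3:ℤ)^m+1)*(x % (2*N) + 2*N) ≡ 2+N [ZMOD 2*N] := by
      refine Int.ModEq.trans (Int.ModEq.mul_left _ ?_) hC
      exact Int.modEq_iff_dvd.mpr ⟨x/(2*N) - 1, by rw [Int.emod_def]; ring⟩
    obtain ⟨c, hc⟩ := Int.modEq_iff_dvd.mp h
    exact ⟨1 - 2*c, ⟨-c, by ring⟩, by linear_combination -hc⟩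



theorem stmt1 (n : ℕ) (hn : 0 < n) :
    (∀ (m : ℕ) (k d : ℤ), 0 < d → Even d → Odd k → Nat.gcd m n = 1 → 2 * m < n →
      (3 ^ m + 1) * d - 2 = k * (3 ^ n - 1) →
      Odd n ∧
        ∃ j : ℕ, Even j ∧ Nat.gcd j n = 1 ∧
          ∃ e t ε : ℤ, (ε = 1 ∨ ε = -1) ∧
            ((3 ^ j + 1) / 2) * e ≡ (3 ^ n + 1) / 2 [ZMOD 3 ^ n - 1] ∧
            d * 3 ^ (-t).toNat * e ^ (-ε).toNat ≡ 3 ^ t.toNat * e ^ ε.toNat [ZMOD 3 ^ n - 1]) ∧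
    (Odd n → ∀ (j : ℕ) (d : ℤ), Even j → Nat.gcd j n = 1 →
      ((3 ^ j + 1) / 2) * d ≡ (3 ^ n + 1) / 2 [ZMOD 3 ^ n - 1] →
      ∃ t ε d' : ℤ, (ε = 1 ∨ ε = -1) ∧ Even d' ∧ 0 < d' ∧
        (∃ (k : ℤ) (m : ℕ), Odd k ∧ Nat.gcd m n = 1 ∧ 2 * m < n ∧
          (3 ^ m + 1) * d' - 2 = k * (3 ^ n - 1)) ∧
        d * 3 ^ (-t).toNat * d' ^ (-ε).toNat ≡ 3 ^ t.toNat * d' ^ ε.toNat [ZMOD 3 ^ n - 1]) := by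
  constructor
  · intro m k d hd hde hk hgcd hmn heq
    obtain ⟨a, ha⟩ : Odd ((3:ℤ)^m) := Odd.pow ⟨1, by norm_num⟩
    obtain ⟨b, hb⟩ : Odd ((3:ℤ)^n) := Odd.pow ⟨1, by norm_num⟩
    obtain ⟨c, hc⟩ := hk
    obtain ⟨d₀, hd₀⟩ := hde
    -- n is odd
    have hoddn : Odd n := by
      rw [Nat.odd_iff]
      by_contra hno
      have hev : n % 2 = 0 := by omega
      obtain ⟨s, hs⟩ : ∃ s, n = 2 * s := ⟨n / 2, by omega⟩
      have h4 : (4:ℤ) ∣ 3^n - 1 := by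
        have h9 : (9:ℤ)^s ≡ 1^s [ZMOD 4] := Int.ModEq.pow s (by decide)
        have h9' : (3:ℤ)^n = 9^s := by rw [hs, pow_mul]; norm_num
        rw [h9']
        simpa [Int.modEq_iff_dvd] using h9.symm
      obtain ⟨w, hw⟩ := h4
      have key : 4 * ((a+1)*d₀) - 2 = 4 * (k * w) := by
        rw [hw] at heq
        linear_combination heq - d * ha - (2*a+2) * hd₀
      have : (4:ℤ) ∣ 2 := ⟨(a+1)*d₀ - k*w, by linarith⟩
      norm_num at this
    refine ⟨hoddn, ?_⟩
    rcases Nat.even_or_odd m with hme | hmo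
    · -- m even : j = m, e = d, t = 0, ε = 1
      refine ⟨m, hme, hgcd, d, 0, 1, Or.inl rfl, ?_, ?_⟩
      · rw [ha, hb, show ((2*a+1)+1)/2 = a+1 from by omega,
          show ((2*b+1)+1)/2 = b+1 from by omega]
        rw [Int.modEq_iff_dvd]
        have h2 : (2:ℤ) * ((a+1)*d) = 2 * (1 + k*b) := by
          linear_combination heq - d*ha + k*hb
        have h3 : (a+1)*d = 1 + k*b := by
          exact mul_left_cancel₀ (by norm_num : (2:ℤ) ≠ 0) h2
        exact ⟨-c, by rw [hc] at h3; linear_combination -h3⟩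
      · simp [Int.ModEq]
    · -- m odd : j = n - m, e = 3^m * d, t = -m, ε = 1
      have hmlt : m < n := by omega
      obtain ⟨a', ha'⟩ : Odd ((3:ℤ)^(n-m)) := Odd.pow ⟨1, by norm_num⟩
      have hje : Even (n - m) := Nat.Odd.sub_odd hoddn hmo
      have hjg : Nat.gcd (n-m) n = 1 :=
        (Nat.coprime_self_sub_left (le_of_lt hmlt)).mpr hgcd
      refine ⟨n - m, hje, hjg, (3:ℤ)^m * d, -(m:ℤ), 1, Or.inl rfl, ?_, ?_⟩
      · rw [ha', hb, show ((2*a'+1)+1)/2 = a'+1 from by omega,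
          show ((2*b+1)+1)/2 = b+1 from by omega]
        rw [Int.modEq_iff_dvd]
        have hpow : (3:ℤ)^(n-m) * 3^m = 3^n := by rw [← pow_add]; congr 1; omega
        have h2 : (2:ℤ) * ((a'+1)*((3:ℤ)^m*d)) = 2 * (2*b*d₀ + 1 + k*b) := by
          linear_combination -((3:ℤ)^m*d)*ha' + d*hpow + d*hb + heq + k*hb + 2*b*hd₀
        have h3 : (a'+1)*((3:ℤ)^m*d) = 2*b*d₀ + 1 + k*b :=
          mul_left_cancel₀ (by norm_num : (2:ℤ) ≠ 0) h2
        rw [hc] at h3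
        exact ⟨-d₀ - c, by linear_combination -h3⟩
      · simp [Int.ModEq, mul_comm]
  · intro hodd j d hje hjgcd hcong
    set N : ℤ := 3^n - 1 with hNdef
    have hN1 : (3:ℤ)^n = N + 1 := by rw [hNdef]; ring
    -- 3^j = 4*α₀+1
    obtain ⟨α₀, hα₀⟩ : ∃ α₀ : ℤ, (3:ℤ)^j = 4*α₀+1 := by
      obtain ⟨s, hs⟩ : ∃ s, j = 2*s := ⟨j/2, by obtain ⟨r, hr⟩ := hje; omega⟩
      have h9 : (9:ℤ)^s ≡ 1^s [ZMOD 4] := Int.ModEq.pow s (by decide)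
      have h9' : (3:ℤ)^j = 9^s := by rw [hs, pow_mul]; norm_num
      obtain ⟨w, hw⟩ := Int.modEq_iff_dvd.mp h9
      simp only [one_pow] at hw
      exact ⟨-w, by rw [h9']; linarith [hw]⟩
    -- 3^n = 4*u+3
    obtain ⟨u, hu⟩ : ∃ u : ℤ, (3:ℤ)^n = 4*u+3 := by
      obtain ⟨s, hs⟩ := hodd
      have h9 : (9:ℤ)^s ≡ 1^s [ZMOD 4] := Int.ModEq.pow s (by decide)
      have h9' : (3:ℤ)^n = 3 * 9^s := by rw [hs, pow_succ, pow_mul]; norm_num [mul_comm]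
      obtain ⟨w, hw⟩ := Int.modEq_iff_dvd.mp h9
      simp only [one_pow] at hw
      exact ⟨-3*w, by rw [h9']; linarith [hw]⟩
    have hN2 : N = 4*u+2 := by rw [hNdef, hu]; ring
    have hNpos : 0 < N := by
      have hp : (0:ℤ) < 3^n := by positivity
      rw [hu] at hp
      omega
    -- unpack hypothesis
    rw [hα₀, hu, show ((4*α₀+1)+1)/2 = 2*α₀+1 from by omega,
      show ((4*u+3)+1)/2 = 2*u+2 from by omega] at hcong
    obtain ⟨c, hc⟩ := Int.modEq_iff_dvd.mp hcong
    -- d is even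
    have hdeven : Even d := by
      have hev : Even ((2*α₀+1)*d) := ⟨u+1-(2*u+1)*c, by linear_combination -hc - c*hN2⟩
      rcases Int.even_mul.mp hev with h | h
      · exfalso; rw [Int.even_iff] at h; omega
      · exact h
    have hC : ((3:ℤ)^j+1)*d ≡ 2+N [ZMOD 2*N] := by
      rw [Int.modEq_iff_dvd]
      exact ⟨c, by linear_combination -d*hα₀ + 2*hc + c*hN2 + (1-c)*hu⟩
    -- reduce exponent mod n
    have hC' : ((3:ℤ)^(j % n)+1)*d ≡ 2+N [ZMOD 2*N] := by
      refine aux_redq n N d hN1 hdeven (j/n) (j % n) ?_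
      rw [Nat.mod_add_div]
      exact hC
    have hj₀n : j % n < n := Nat.mod_lt j hn
    have hgcd₀ : Nat.gcd (j % n) n = 1 := by
      rw [Nat.gcd_comm] at hjgcd
      rw [← Nat.gcd_rec]
      exact hjgcd
    by_cases hlt : 2 * (j % n) < n
    · -- m = j % n
      obtain ⟨d', hd'e, hd'pos, hd'm, k, hkodd, hkeq⟩ :=
        aux_pack (j % n) N d hNpos hdeven hC'
      exact ⟨0, 1, d', Or.inl rfl, hd'e, hd'pos,
        ⟨k, j % n, hkodd, hgcd₀, hlt, hkeq⟩, by simpa using hd'm⟩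
    · -- m = n - j % n
      have hne : 2 * (j % n) ≠ n := by obtain ⟨s, hs⟩ := hodd; omega
      have hCi := aux_inv n (j % n) N d (le_of_lt hj₀n) hN1 hdeven hC'
      obtain ⟨d', hd'e, hd'pos, hd'm, k, hkodd, hkeq⟩ :=
        aux_pack (n - j % n) N ((3:ℤ)^(j % n)*d) hNpos (hdeven.mul_left _) hCi
      refine ⟨-((j % n : ℕ) : ℤ), 1, d', Or.inl rfl, hd'e, hd'pos,
        ⟨k, n - j % n, hkodd, (Nat.coprime_self_sub_left (le_of_lt hj₀n)).mpr hgcd₀,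
          by omega, hkeq⟩, ?_⟩
      have e2 : ((-((j % n : ℕ) : ℤ))).toNat = 0 := Int.toNat_neg_nat _
      simp only [neg_neg, Int.toNat_natCast, e2, Int.toNat_one, pow_zero, pow_one, mul_one,
        one_mul, show ((-1:ℤ)).toNat = 0 from rfl]
      rw [mul_comm]
      exact hd'm
end

section
/- Let a be an integer and let m, n be nonnegative integers with n odd and gcd(m,n)=1. Then gcd(a^m+1, a^n−1) equals 1 if a is even and equals 2 if a is odd. Furthermore, if a is odd, then gcd((a^m+1)/2, a^n−1) equals 1 if a ≡ 1 (mod 4) or m is even, and equals 2 if a ≡ 3 (mod 4) and m is odd. -/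
private lemma gcd_pow_modeq (a d : ℤ) :
    ∀ s t : ℕ, (1 : ℤ) ≡ a ^ s [ZMOD d] → (1 : ℤ) ≡ a ^ t [ZMOD d] →
      (1 : ℤ) ≡ a ^ (Nat.gcd s t) [ZMOD d] := by
  intro s
  induction s using Nat.strong_induction_on with
  | _ s ih =>
    intro t hs ht
    rcases Nat.eq_zero_or_pos s with h0 | hpos
    · simpa [h0] using ht
    · rw [Nat.gcd_rec]
      refine ih (t % s) (Nat.mod_lt t hpos) s ?_ hs
      have h1 : (1 : ℤ) ≡ a ^ (s * (t / s)) [ZMOD d] := by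
        simpa [pow_mul] using hs.pow (t / s)
      have h2 : a ^ t = a ^ (t % s) * a ^ (s * (t / s)) := by
        rw [← pow_add, Nat.mod_add_div]
      have h3 : (1 : ℤ) ≡ a ^ (t % s) * a ^ (s * (t / s)) [ZMOD d] := h2 ▸ ht
      have h4 := h3.trans ((Int.ModEq.refl (a ^ (t % s))).mul h1.symm)
      simpa using h4

private lemma dvd_two_of_dvd (a : ℤ) (m n : ℕ) (hn : Odd n) (hmn : Nat.gcd m n = 1)
    (d : ℤ) (h1 : d ∣ a ^ m + 1) (h2 : d ∣ a ^ n - 1) : d ∣ 2 := by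
  have hs : (1 : ℤ) ≡ a ^ (2 * m) [ZMOD d] := by
    rw [Int.modEq_iff_dvd]
    have : a ^ (2 * m) - 1 = (a ^ m + 1) * (a ^ m - 1) := by rw [two_mul, pow_add]; ring
    rw [this]
    exact h1.mul_right _
  have ht : (1 : ℤ) ≡ a ^ n [ZMOD d] := by
    rw [Int.modEq_iff_dvd]; simpa using h2
  have hg : Nat.gcd (2 * m) n = 1 :=
    Nat.Coprime.mul (Nat.coprime_two_left.mpr hn) hmn
  have h5 : (1 : ℤ) ≡ a [ZMOD d] := by
    simpa [hg] using gcd_pow_modeq a d (2 * m) n hs ht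
  have h6 : (1 : ℤ) + 1 ≡ a ^ m + 1 [ZMOD d] := by simpa using (h5.pow m).add_right 1
  have h7 : a ^ m + 1 ≡ 0 [ZMOD d] := (Int.modEq_zero_iff_dvd).mpr h1
  have := (h6.trans h7)
  have h8 := this.dvd
  simpa using h8

theorem stmt2 (a : ℤ) (m n : ℕ) (hn : Odd n) (hmn : Nat.gcd m n = 1) :
    (Even a → Int.gcd (a ^ m + 1) (a ^ n - 1) = 1) ∧
    (Odd a → Int.gcd (a ^ m + 1) (a ^ n - 1) = 2) ∧
    (Odd a →
      ((a % 4 = 1 ∨ Even m) → Int.gcd ((a ^ m + 1) / 2) (a ^ n - 1) = 1) ∧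
      ((a % 4 = 3 ∧ Odd m) → Int.gcd ((a ^ m + 1) / 2) (a ^ n - 1) = 2)) := by
  have hnpos : 0 < n := hn.pos
  set X := a ^ m + 1 with hXdef
  set Y := a ^ n - 1 with hYdef
  have hd2 : (Int.gcd X Y : ℤ) ∣ 2 :=
    dvd_two_of_dvd a m n hn hmn _ (Int.gcd_dvd_left _ _) (Int.gcd_dvd_right _ _)
  have hdnat : Int.gcd X Y ∣ 2 := by exact_mod_cast hd2
  have hYeven_of_odd : Odd a → (2 : ℤ) ∣ Y := by
    intro ha
    have : Odd (a ^ n) := ha.pow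
    rcases this with ⟨k, hk⟩
    exact ⟨k, by rw [hYdef, hk]; ring⟩
  refine ⟨?_, ?_, ?_⟩
  · intro ha
    have h2X : ¬ (2 : ℤ) ∣ Y := by
      intro h
      have h1 : (2 : ℤ) ∣ a ^ n := (ha.two_dvd).trans (dvd_pow_self a hnpos.ne')
      have : (2 : ℤ) ∣ 1 := by
        have := dvd_sub h1 h
        simpa [hYdef] using this
      norm_num at this
    rcases (Nat.prime_two.eq_one_or_self_of_dvd _ hdnat) with h | h
    · exact h
    · exfalso
      apply h2X
      have : (Int.gcd X Y : ℤ) ∣ Y := Int.gcd_dvd_right _ _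
      rw [h] at this
      exact_mod_cast this
  · intro ha
    have hX2 : (2 : ℤ) ∣ X := by
      rcases (ha.pow : Odd (a ^ m)) with ⟨k, hk⟩
      exact ⟨k + 1, by rw [hXdef, hk]; ring⟩
    have h2g : (2 : ℤ) ∣ (Int.gcd X Y : ℤ) := Int.dvd_coe_gcd hX2 (hYeven_of_odd ha)
    have : 2 ∣ Int.gcd X Y := by exact_mod_cast h2g
    exact Nat.dvd_antisymm hdnat this
  · intro ha
    have hX2 : (2 : ℤ) ∣ X := by
      rcases (ha.pow : Odd (a ^ m)) with ⟨k, hk⟩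
      exact ⟨k + 1, by rw [hXdef, hk]; ring⟩
    have hB : 2 * (X / 2) = X := Int.mul_ediv_cancel' hX2
    have hBX : X / 2 ∣ X := ⟨2, by linarith⟩
    have hd2' : (Int.gcd (X / 2) Y : ℤ) ∣ 2 :=
      dvd_two_of_dvd a m n hn hmn _ ((Int.gcd_dvd_left _ _).trans hBX) (Int.gcd_dvd_right _ _)
    have hdnat' : Int.gcd (X / 2) Y ∣ 2 := by exact_mod_cast hd2'
    have hodd4 : a % 4 = 1 ∨ a % 4 = 3 := by
      have := Int.odd_iff.mp ha
      omega
    constructor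
    · rintro (h4 | hmev)
      · have ham : a ^ m ≡ 1 [ZMOD 4] := by
          have h1 : a ≡ 1 [ZMOD 4] := by unfold Int.ModEq; omega
          simpa using h1.pow m
        have hX4 : ¬ (4 : ℤ) ∣ X := by
          intro h
          have h0 : X ≡ 0 [ZMOD 4] := (Int.modEq_zero_iff_dvd).mpr h
          have h2 : X ≡ 2 [ZMOD 4] := by
            have := ham.add_right 1
            simpa [hXdef] using this
          have := (h2.symm.trans h0).dvd
          norm_num at this
        rcases (Nat.prime_two.eq_one_or_self_of_dvd _ hdnat') with h | h
        · exact h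
        · exfalso
          apply hX4
          have hg : (Int.gcd (X / 2) Y : ℤ) ∣ X / 2 := Int.gcd_dvd_left _ _
          rw [h] at hg
          have h2B : (2 : ℤ) ∣ X / 2 := by exact_mod_cast hg
          rcases h2B with ⟨k, hk⟩
          exact ⟨k, by rw [← hB, hk]; ring⟩
      · rcases hmev with ⟨k, hk⟩
        have ha2 : a ^ 2 ≡ 1 [ZMOD 4] := by
          rcases hodd4 with h | h
          · have h1 : a ≡ 1 [ZMOD 4] := by unfold Int.ModEq; omega
            simpa using h1.pow 2
          · have h1 : a ≡ 3 [ZMOD 4] := by unfold Int.ModEq; omega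
            have := h1.pow 2
            have h9 : (3 : ℤ) ^ 2 ≡ 1 [ZMOD 4] := by decide
            exact this.trans h9
        have ham : a ^ m ≡ 1 [ZMOD 4] := by
          have : a ^ m = (a ^ 2) ^ k := by rw [← pow_mul, hk]; ring_nf
          rw [this]
          simpa using ha2.pow k
        have hX4 : ¬ (4 : ℤ) ∣ X := by
          intro h
          have h0 : X ≡ 0 [ZMOD 4] := (Int.modEq_zero_iff_dvd).mpr h
          have h2 : X ≡ 2 [ZMOD 4] := by
            have := ham.add_right 1
            simpa [hXdef] using this
          have := (h2.symm.trans h0).dvd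
          norm_num at this
        rcases (Nat.prime_two.eq_one_or_self_of_dvd _ hdnat') with h | h
        · exact h
        · exfalso
          apply hX4
          have hg : (Int.gcd (X / 2) Y : ℤ) ∣ X / 2 := Int.gcd_dvd_left _ _
          rw [h] at hg
          have h2B : (2 : ℤ) ∣ X / 2 := by exact_mod_cast hg
          rcases h2B with ⟨k, hk⟩
          exact ⟨k, by rw [← hB, hk]; ring⟩
    · rintro ⟨h4, hmodd⟩
      rcases hmodd with ⟨k, hk⟩
      have h1 : a ≡ 3 [ZMOD 4] := by unfold Int.ModEq; omega
      have ha2 : a ^ 2 ≡ 1 [ZMOD 4] := by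
        have := h1.pow 2
        have h9 : (3 : ℤ) ^ 2 ≡ 1 [ZMOD 4] := by decide
        exact this.trans h9
      have ham : a ^ m ≡ 3 [ZMOD 4] := by
        have he : a ^ m = (a ^ 2) ^ k * a := by rw [← pow_mul, ← pow_succ, hk]
        rw [he]
        have h2 : (a ^ 2) ^ k ≡ 1 [ZMOD 4] := by simpa using ha2.pow k
        have := h2.mul h1
        simpa using this
      have hX4 : (4 : ℤ) ∣ X := by
        have h2 : X ≡ 4 [ZMOD 4] := by
          have := ham.add_right 1
          simpa [hXdef] using this
        have h0 : X ≡ 0 [ZMOD 4] := h2.trans (by decide)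
        exact (Int.modEq_zero_iff_dvd).mp h0
      have h2B : (2 : ℤ) ∣ X / 2 := by
        rcases hX4 with ⟨k, hk⟩
        refine ⟨k, ?_⟩
        have : 2 * (X / 2) = 2 * (2 * k) := by rw [hB, hk]; ring
        linarith
      have h2g : (2 : ℤ) ∣ (Int.gcd (X / 2) Y : ℤ) := Int.dvd_coe_gcd h2B (hYeven_of_odd ha)
      have : 2 ∣ Int.gcd (X / 2) Y := by exact_mod_cast h2g
      exact Nat.dvd_antisymm hdnat' this
end

section
/- Let F be a finite field of odd characteristic p and order p^n, and let η be the extended quadratic character of F (η(0)=0, η of a nonzero square is 1, η of a nonsquare is −1). Then η(1−c²)=0 if and only if c ∈ {1,−1}. If p ≡ 3 (mod 4) and n is odd, then there are exactly (p^n−1)/2 elements c ∈ F∖{1,−1} with η(1−c²)=1 and exactly (p^n−3)/2 elements c ∈ F∖{1,−1} with η(1−c²)=−1. Otherwise, there are exactly (p^n−3)/2 elements c ∈ F∖{1,−1} with η(1−c²)=1 and exactly (p^n−1)/2 with η(1−c²)=−1. -/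
private lemma aux_pow3 (n : ℕ) : 3 ^ n % 4 = if n % 2 = 0 then 1 else 3 := by
  induction n with
  | zero => simp
  | succ k ih =>
    rw [pow_succ, Nat.mul_mod, ih]
    rcases Nat.even_or_odd k with h | h
    · have : k % 2 = 0 := Nat.even_iff.mp h
      simp [this, Nat.succ_mod_two_eq_one_iff.mpr this]
    · have : k % 2 = 1 := Nat.odd_iff.mp h
      simp [this, Nat.succ_mod_two_eq_zero_iff.mpr this]

theorem stmt4 (p n : ℕ) (hp : p.Prime) (hpodd : Odd p)
    (F : Type*) [Field F] [Fintype F] (hcard : Fintype.card F = p ^ n)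
    (η : F → ℤ) (hη0 : η 0 = 0)
    (hη : ∀ c : F, c ≠ 0 → (IsSquare c → η c = 1) ∧ (¬ IsSquare c → η c = -1)) :
    (∀ c : F, η (1 - c ^ 2) = 0 ↔ c = 1 ∨ c = -1) ∧
    (p % 4 = 3 → Odd n →
      Nat.card {c : F | c ≠ 1 ∧ c ≠ -1 ∧ η (1 - c ^ 2) = 1} = (p ^ n - 1) / 2 ∧
      Nat.card {c : F | c ≠ 1 ∧ c ≠ -1 ∧ η (1 - c ^ 2) = -1} = (p ^ n - 3) / 2) ∧
    (¬ (p % 4 = 3 ∧ Odd n) →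
      Nat.card {c : F | c ≠ 1 ∧ c ≠ -1 ∧ η (1 - c ^ 2) = 1} = (p ^ n - 3) / 2 ∧
      Nat.card {c : F | c ≠ 1 ∧ c ≠ -1 ∧ η (1 - c ^ 2) = -1} = (p ^ n - 1) / 2) := by
  classical
  set q := p ^ n with hq
  have hqodd : Odd q := hpodd.pow
  have hqodd' : Odd (Fintype.card F) := hcard ▸ hqodd
  have hchar : ringChar F ≠ 2 := by
    intro h
    have h1 := FiniteField.even_card_of_char_two h
    have h2 := Nat.odd_iff.mp hqodd'
    omega
  have hneg1ne : (-1 : F) ≠ 1 := Ring.neg_one_ne_one_of_char_ne_two hchar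
  have h2ne : (2 : F) ≠ 0 := Ring.two_ne_zero hchar
  -- η agrees with quadraticChar
  have heq : ∀ c : F, η c = quadraticChar F c := by
    intro c
    by_cases hc : c = 0
    · simp [hc, hη0]
    · by_cases hs : IsSquare c
      · rw [(hη c hc).1 hs, (quadraticChar_one_iff_isSquare hc).mpr hs]
      · rw [(hη c hc).2 hs, quadraticChar_neg_one_iff_not_isSquare.mpr hs]
  have hηzero : ∀ x : F, η x = 0 ↔ x = 0 := by
    intro x
    constructor
    · intro h
      by_contra hx
      by_cases hs : IsSquare x
      · rw [(hη x hx).1 hs] at h; norm_num at h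
      · rw [(hη x hx).2 hs] at h; norm_num at h
    · intro h; rw [h, hη0]
  have hfac : ∀ c : F, 1 - c ^ 2 = 0 ↔ c = 1 ∨ c = -1 := by
    intro c
    rw [show (1 - c ^ 2 : F) = (1 - c) * (1 + c) by ring, mul_eq_zero]
    constructor
    · rintro (h | h)
      · left; exact (sub_eq_zero.mp h).symm
      · right; exact (neg_eq_of_add_eq_zero_right h).symm
    · rintro (h | h) <;> subst h <;> simp
  have part1 : ∀ c : F, η (1 - c ^ 2) = 0 ↔ c = 1 ∨ c = -1 := by
    intro c; rw [hηzero, hfac]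
  -- multiplying by a nonzero square doesn't change η
  have hmul : ∀ t : F, t ≠ 0 → ∀ y : F, η (t ^ 2 * y) = η y := by
    intro t ht y
    rw [heq, heq, map_mul, map_pow, quadraticChar_sq_one ht, one_mul]
  -- the character sum
  have hsum : ∑ c : F, η (1 - c ^ 2) = - η (-1) := by
    have hkey : ∑ c ∈ Finset.univ.erase (1 : F), η (1 - c ^ 2) =
        ∑ y ∈ Finset.univ.erase (-1 : F), η y := by
      refine Finset.sum_nbij' (fun c => (1 + c) / (1 - c)) (fun y => (y - 1) / (y + 1))
        ?_ ?_ ?_ ?_ ?_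
      · intro c hc
        have hc1 : c ≠ 1 := by simpa using (Finset.mem_erase.mp hc).1
        have hd : (1 : F) - c ≠ 0 := sub_ne_zero.mpr (Ne.symm hc1)
        simp only [Finset.mem_erase, Finset.mem_univ, and_true]
        intro h
        rw [div_eq_iff hd] at h
        apply h2ne
        linear_combination h
      · intro y hy
        have hy1 : y ≠ -1 := by simpa using (Finset.mem_erase.mp hy).1
        have hd : y + 1 ≠ 0 := by
          intro h; exact hy1 (by linear_combination h)
        simp only [Finset.mem_erase, Finset.mem_univ, and_true]
        intro h
        rw [div_eq_iff hd] at h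
        apply h2ne
        linear_combination -h
      · intro c hc
        have hc1 : c ≠ 1 := by simpa using (Finset.mem_erase.mp hc).1
        have hd : (1 : F) - c ≠ 0 := sub_ne_zero.mpr (Ne.symm hc1)
        have hnum : (1 + c) / (1 - c) - 1 = 2 * c / (1 - c) := by field_simp; ring
        have hden : (1 + c) / (1 - c) + 1 = 2 / (1 - c) := by field_simp; ring
        show ((1 + c) / (1 - c) - 1) / ((1 + c) / (1 - c) + 1) = c
        rw [hnum, hden, div_div_div_cancel_right₀ hd, mul_div_cancel_left₀ _ h2ne]
      · intro y hy
        have hy1 : y ≠ -1 := by simpa using (Finset.mem_erase.mp hy).1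
        have hd : y + 1 ≠ 0 := by
          intro h; exact hy1 (by linear_combination h)
        have hnum : 1 + (y - 1) / (y + 1) = 2 * y / (y + 1) := by field_simp; ring
        have hden : 1 - (y - 1) / (y + 1) = 2 / (y + 1) := by field_simp; norm_num
        show (1 + (y - 1) / (y + 1)) / (1 - (y - 1) / (y + 1)) = y
        rw [hnum, hden, div_div_div_cancel_right₀ hd, mul_div_cancel_left₀ _ h2ne]
      · intro c hc
        have hc1 : c ≠ 1 := by simpa using (Finset.mem_erase.mp hc).1
        have hd : (1 : F) - c ≠ 0 := sub_ne_zero.mpr (Ne.symm hc1)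
        have : (1 : F) - c ^ 2 = (1 - c) ^ 2 * ((1 + c) / (1 - c)) := by
          field_simp; ring
        rw [this, hmul _ hd]
    have h1 : ∑ c : F, η (1 - c ^ 2) =
        ∑ c ∈ Finset.univ.erase (1 : F), η (1 - c ^ 2) + η (1 - 1 ^ 2) :=
      (Finset.sum_erase_add _ _ (Finset.mem_univ _)).symm
    have h2 : ∑ y ∈ Finset.univ.erase (-1 : F), η y + η (-1) = ∑ y : F, η y :=
      Finset.sum_erase_add _ _ (Finset.mem_univ _)
    have h3 : ∑ y : F, η y = 0 := by
      simp_rw [heq]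
      exact quadraticChar_sum_zero hchar
    rw [h1, hkey]
    have := h2.trans h3
    simp only [one_pow, sub_self, hη0, add_zero]
    linarith
  -- value at -1
  have hne0 : (-1 : F) ≠ 0 := by norm_num
  have hη1 : Fintype.card F % 4 = 3 → η (-1) = -1 := by
    intro h
    exact (hη _ hne0).2 (fun hs => (FiniteField.isSquare_neg_one_iff.mp hs) h)
  have hη2 : Fintype.card F % 4 ≠ 3 → η (-1) = 1 := by
    intro h
    exact (hη _ hne0).1 (FiniteField.isSquare_neg_one_iff.mpr h)
  -- counting setup
  set P₁ : F → Prop := fun c => c ≠ 1 ∧ c ≠ -1 ∧ η (1 - c ^ 2) = 1 with hP₁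
  set P₂ : F → Prop := fun c => c ≠ 1 ∧ c ≠ -1 ∧ η (1 - c ^ 2) = -1 with hP₂
  set A : Finset F := Finset.univ.filter P₁ with hA
  set B : Finset F := Finset.univ.filter P₂ with hB
  have hcard1 : Nat.card {c : F | P₁ c} = A.card := by
    rw [Nat.card_eq_fintype_card]
    exact Fintype.card_of_subtype A (by simp [hA, hP₁])
  have hcard2 : Nat.card {c : F | P₂ c} = B.card := by
    rw [Nat.card_eq_fintype_card]
    exact Fintype.card_of_subtype B (by simp [hB, hP₂])
  have hdisjAB : Disjoint A B := by
    rw [Finset.disjoint_filter]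
    rintro c _ ⟨_, _, h1⟩ ⟨_, _, h2⟩
    rw [h1] at h2; norm_num at h2
  have hunion : A ∪ B = Finset.univ \ {1, -1} := by
    ext c
    simp only [hA, hB, Finset.mem_union, Finset.mem_filter, Finset.mem_univ, true_and,
      Finset.mem_sdiff, Finset.mem_insert, Finset.mem_singleton, hP₁, hP₂]
    constructor
    · rintro (⟨h1, h2, _⟩ | ⟨h1, h2, _⟩) <;> exact fun h => h.elim h1 h2
    · intro h
      push_neg at h
      obtain ⟨h1, h2⟩ := h
      have hne : η (1 - c ^ 2) ≠ 0 := fun h => ((part1 c).mp h).elim h1 h2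
      have hx : (1 : F) - c ^ 2 ≠ 0 := fun h => hne ((hηzero _).mpr h)
      by_cases hs : IsSquare (1 - c ^ 2)
      · exact Or.inl ⟨h1, h2, (hη _ hx).1 hs⟩
      · exact Or.inr ⟨h1, h2, (hη _ hx).2 hs⟩
  have hq3 : 3 ≤ q := by
    have h2 : 2 ≤ Fintype.card F := Fintype.one_lt_card
    rw [hcard] at h2
    rcases hqodd with ⟨k, hk⟩
    omega
  have hABcard : A.card + B.card = q - 2 := by
    have := Finset.card_union_of_disjoint hdisjAB
    rw [hunion, Finset.card_sdiff_of_subset (by simp)] at this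
    rw [← this]
    have : ({1, -1} : Finset F).card = 2 :=
      Finset.card_pair (Ne.symm hneg1ne)
    rw [this, Finset.card_univ, hcard]
  have hdiff : (A.card : ℤ) - B.card = ∑ c : F, η (1 - c ^ 2) := by
    have hsplit : (Finset.univ : Finset F) = (A ∪ B) ∪ ({1, -1} : Finset F) := by
      rw [hunion]
      rw [Finset.sdiff_union_of_subset (Finset.subset_univ _)]
    have hdisj2 : Disjoint (A ∪ B) ({1, -1} : Finset F) := by
      rw [hunion]
      exact Finset.sdiff_disjoint
    rw [hsplit, Finset.sum_union hdisj2, Finset.sum_union hdisjAB]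
    have hsA : ∑ c ∈ A, η (1 - c ^ 2) = A.card := by
      rw [Finset.sum_congr rfl (fun c hc => ((Finset.mem_filter.mp hc).2).2.2)]
      simp
    have hsB : ∑ c ∈ B, η (1 - c ^ 2) = -B.card := by
      rw [Finset.sum_congr rfl (fun c hc => ((Finset.mem_filter.mp hc).2).2.2)]
      simp
    have hsC : ∑ c ∈ ({1, -1} : Finset F), η (1 - c ^ 2) = 0 := by
      rw [Finset.sum_pair (Ne.symm hneg1ne)]
      norm_num [hη0]
    rw [hsA, hsB, hsC]
    ring
  -- mod-4 arithmetic
  have hp2 : p % 2 = 1 := Nat.odd_iff.mp hpodd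
  have hp4 : p % 4 = 1 ∨ p % 4 = 3 := by
    have := Nat.mod_mod_of_dvd p (by norm_num : 2 ∣ 4)
    omega
  have hqmod : q % 4 = 3 ↔ (p % 4 = 3 ∧ Odd n) := by
    rw [hq, Nat.pow_mod]
    rcases hp4 with h | h
    · rw [h]; simp
    · rw [h, aux_pow3, Nat.odd_iff]
      constructor
      · intro hh
        split at hh <;> omega
      · rintro ⟨-, hn⟩
        rw [if_neg (by omega)]
  refine ⟨part1, ?_, ?_⟩
  · intro hp3 hn
    have hq4 : Fintype.card F % 4 = 3 := by
      rw [hcard]; exact hqmod.mpr ⟨hp3, hn⟩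
    have hs : ∑ c : F, η (1 - c ^ 2) = 1 := by rw [hsum, hη1 hq4]; ring
    rw [hs] at hdiff
    rw [hcard1, hcard2]
    have hq2 : q % 2 = 1 := Nat.odd_iff.mp hqodd
    omega
  · intro hnot
    have hq4 : Fintype.card F % 4 ≠ 3 := by
      rw [hcard]; exact fun h => hnot (hqmod.mp h)
    have hs : ∑ c : F, η (1 - c ^ 2) = -1 := by rw [hsum, hη2 hq4]
    rw [hs] at hdiff
    rw [hcard1, hcard2]
    have hq2 : q % 2 = 1 := Nat.odd_iff.mp hqodd
    omega
end

section
/- Let F be a finite field of odd characteristic of order q, let E be the quadratic extension of F (of order q²), and let U_E = {x ∈ E× : x^q = x^{-1}} be the unit circle of E. Define μ on E× by μ(x)=x+x^{-1}. Let H = {c ∈ F∖{2,−2} : c²−4 is a nonzero square in F} and I = {c ∈ F∖{2,−2} : c²−4 is a nonsquare in F}. Then: (i) μ^{-1}({2}) ∩ (F× ∪ U_E) = {1} and μ^{-1}({−2}) ∩ (F× ∪ U_E) = {−1}; (ii) for every c ∈ H, the set {x ∈ F× ∪ U_E : μ(x)=c} has exactly 2 elements and is contained in F×∖{1,−1}; (iii)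 for every c ∈ I, the set {x ∈ F× ∪ U_E : μ(x)=c} has exactly 2 elements and is contained in U_E∖{1,−1}; (iv) μ(F× ∪ U_E) = F and {x ∈ E× : μ(x) ∈ F} = F× ∪ U_E; moreover μ(F×∖{1,−1}) = H and μ(U_E∖{1,−1}) = I. -/
section
variable {F E : Type*} [Field F] [Fintype F] [Field E] [Fintype E] [Algebra F E] {q : ℕ}

lemma lem_frob (hq : Fintype.card F = q) (a b : E) : (a + b) ^ q = a ^ q + b ^ q := by
  classical
  obtain ⟨n, hp, hcard⟩ := FiniteField.card F (ringChar F)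
  haveI : Fact (Nat.Prime (ringChar F)) := ⟨hp⟩
  haveI : CharP E (ringChar F) :=
    charP_of_injective_algebraMap (algebraMap F E).injective (ringChar F)
  rw [← hq, hcard]
  exact add_pow_char_pow a b _ _

lemma lem_fix (hq : Fintype.card F = q) (x : E) :
    x ^ q = x ↔ x ∈ Set.range (algebraMap F E) := by
  classical
  constructor
  · intro hx
    have hq2 : 2 ≤ q := hq ▸ Fintype.one_lt_card
    set p : Polynomial E := Polynomial.X ^ q - Polynomial.X with hpdef
    have hdeg : p.natDegree = q := by
      rw [hpdef, Polynomial.natDegree_sub_eq_left_of_natDegree_lt] <;>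
        simp [Polynomial.natDegree_X_pow] <;> omega
    have hp0 : p ≠ 0 := by
      intro h; rw [h] at hdeg; simp at hdeg; omega
    have hroot : ∀ y : E, p.IsRoot y ↔ y ^ q = y := by
      intro y; simp [hpdef, Polynomial.IsRoot, sub_eq_zero]
    -- image of F inside roots
    set T : Finset E := Finset.univ.image (algebraMap F E) with hT
    have hTsub : T ⊆ p.roots.toFinset := by
      intro z hz
      simp only [hT, Finset.mem_image] at hz
      obtain ⟨y, -, rfl⟩ := hz
      rw [Multiset.mem_toFinset, Polynomial.mem_roots hp0, hroot]
      rw [← map_pow, ← hq, FiniteField.pow_card]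
    have hTcard : T.card = q := by
      rw [hT, Finset.card_image_of_injective _ (algebraMap F E).injective,
        Finset.card_univ, hq]
    have hle : p.roots.toFinset.card ≤ q := by
      calc p.roots.toFinset.card ≤ Multiset.card p.roots := Multiset.toFinset_card_le _
        _ ≤ p.natDegree := Polynomial.card_roots' p
        _ = q := hdeg
    have heq : T = p.roots.toFinset :=
      Finset.eq_of_subset_of_card_le hTsub (hTcard ▸ hle)
    have hxmem : x ∈ p.roots.toFinset := by
      rw [Multiset.mem_toFinset, Polynomial.mem_roots hp0, hroot]; exact hx
    rw [← heq, hT, Finset.mem_image] at hxmem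
    obtain ⟨y, -, hy⟩ := hxmem
    exact ⟨y, hy⟩
  · rintro ⟨y, rfl⟩
    rw [← map_pow, ← hq, FiniteField.pow_card]

lemma lem_sq (hq : Fintype.card F = q) (hqodd : Odd q) (hE : Fintype.card E = q ^ 2)
    (c : F) : ∃ d : E, d ^ 2 = algebraMap F E c := by
  rcases eq_or_ne c 0 with rfl | hc
  · exact ⟨0, by simp⟩
  have hcharE : ringChar E ≠ 2 := by
    obtain ⟨m, rfl⟩ := hqodd
    rw [Ne, FiniteField.even_card_iff_char_two, hE]
    have h3 : (2 * m + 1) % 2 = 1 := by omega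
    rw [Nat.pow_mod, h3]
    norm_num
  have hfc : algebraMap F E c ≠ 0 := by
    simp [map_eq_zero, hc]
  have : IsSquare (algebraMap F E c) := by
    rw [FiniteField.isSquare_iff hcharE hfc, hE]
    obtain ⟨m, rfl⟩ := hqodd
    have harith : (2 * m + 1) ^ 2 / 2 = (2 * m + 1 - 1) * (m + 1) := by
      have h3 : 2 * m + 1 - 1 = 2 * m := by omega
      have h2 : (2 * m + 1) ^ 2 = 2 * m * (m + 1) * 2 + 1 := by ring
      rw [h3]
      omega
    rw [harith, pow_mul, ← map_pow, ← hq, FiniteField.pow_card_sub_one_eq_one c hc,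
      map_one, one_pow]
  obtain ⟨d, hd⟩ := this
  exact ⟨d, by rw [sq]; exact hd.symm⟩

lemma lem_two_ne (hqodd : Odd q) (hE : Fintype.card E = q ^ 2) : (2 : E) ≠ 0 := by
  apply Ring.two_ne_zero
  obtain ⟨m, rfl⟩ := hqodd
  rw [Ne, FiniteField.even_card_iff_char_two, hE]
  have h3 : (2 * m + 1) % 2 = 1 := by omega
  rw [Nat.pow_mod, h3]
  norm_num

/-- the fiber of μ over c is {r, s} where r,s are the quadratic roots -/
lemma lem_fiber (h2 : (2 : E) ≠ 0) (c d : E) (hd : d ^ 2 = c ^ 2 - 4) :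
    {x : E | x ≠ 0 ∧ x + x⁻¹ = c} = {(c + d) / 2, (c - d) / 2} := by
  set r := (c + d) / 2 with hr
  set s := (c - d) / 2 with hs
  have hradd : r + s = c := by rw [hr, hs]; field_simp; ring
  have hrmul : r * s = 1 := by
    rw [hr, hs]; field_simp; linear_combination -hd
  have hrne : r ≠ 0 := left_ne_zero_of_mul_eq_one hrmul
  have hsne : s ≠ 0 := right_ne_zero_of_mul_eq_one hrmul
  ext x
  simp only [Set.mem_setOf_eq, Set.mem_insert_iff, Set.mem_singleton_iff]
  constructor
  · rintro ⟨hx, hxc⟩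
    have hxc' : x ^ 2 - c * x + 1 = 0 := by
      field_simp at hxc
      linear_combination hxc
    have key : (x - r) * (x - s) = 0 := by
      linear_combination hxc' - x * hradd + hrmul
    rcases mul_eq_zero.1 key with h | h
    · left; exact sub_eq_zero.1 h
    · right; exact sub_eq_zero.1 h
  · rintro (rfl | rfl)
    · refine ⟨hrne, ?_⟩
      rw [inv_eq_of_mul_eq_one_right hrmul, hradd]
    · refine ⟨hsne, ?_⟩
      rw [inv_eq_of_mul_eq_one_right (by rw [mul_comm]; exact hrmul), add_comm, hradd]

lemma lem_eqor {a b : E} (ha : a ≠ 0) (hb : b ≠ 0) (h : a + a⁻¹ = b + b⁻¹) :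
    a = b ∨ a = b⁻¹ := by
  have key : (a - b) * (a * b - 1) = 0 := by
    field_simp at h
    linear_combination h
  rcases mul_eq_zero.1 key with h' | h'
  · left; exact sub_eq_zero.1 h'
  · right
    rw [sub_eq_zero] at h'
    exact eq_inv_of_mul_eq_one_left h'

lemma lem_mem (hq : Fintype.card F = q) (x : E) (hx : x ≠ 0) :
    x + x⁻¹ ∈ Set.range (algebraMap F E) ↔ (x ∈ Set.range (algebraMap F E) ∨ x ^ q = x⁻¹) := by
  constructor
  · rintro ⟨c, hc⟩
    have hxq : x ^ q ≠ 0 := pow_ne_zero _ hx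
    have hfrob : x ^ q + (x ^ q)⁻¹ = x + x⁻¹ := by
      have h1 : (x + x⁻¹) ^ q = x ^ q + (x⁻¹) ^ q := lem_frob hq x x⁻¹
      have h2 : (x + x⁻¹) ^ q = x + x⁻¹ := by
        rw [← hc, ← map_pow, ← hq, FiniteField.pow_card]
      rw [← inv_pow]
      rw [inv_pow] at h1 ⊢
      rw [← h1, h2]
    rcases lem_eqor hxq hx hfrob with h | h
    · left; exact (lem_fix hq x).1 h
    · right; exact h
  · rintro (⟨y, rfl⟩ | h)
    · refine ⟨y + y⁻¹, ?_⟩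
      rw [map_add, map_inv₀]
    · apply (lem_fix hq _).1
      rw [lem_frob hq x x⁻¹, h, inv_pow, h, inv_inv, add_comm]

end
theorem stmt5 (q : ℕ) (F E : Type*) [Field F] [Fintype F] [Field E] [Fintype E]
    [Algebra F E] (hq : Fintype.card F = q) (hqodd : Odd q)
    (hE : Fintype.card E = q ^ 2)
    (U : Set E) (hU : U = {x : E | x ≠ 0 ∧ x ^ q = x⁻¹})
    (Fx : Set E) (hFx : Fx = {x : E | x ≠ 0 ∧ ∃ y : F, algebraMap F E y = x})
    (μ : E → E) (hμ : ∀ x, μ x = x + x⁻¹)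
    (H I : Set F)
    (hH : H = {c : F | c ≠ 2 ∧ c ≠ -2 ∧ c ^ 2 - 4 ≠ 0 ∧ IsSquare (c ^ 2 - 4)})
    (hI : I = {c : F | c ≠ 2 ∧ c ≠ -2 ∧ ¬ IsSquare (c ^ 2 - 4)}) :
    {x ∈ Fx ∪ U | μ x = 2} = {1} ∧
    {x ∈ Fx ∪ U | μ x = -2} = {-1} ∧
    (∀ c ∈ H, Nat.card {x : E | x ∈ Fx ∪ U ∧ μ x = algebraMap F E c} = 2 ∧
      {x ∈ Fx ∪ U | μ x = algebraMap F E c} ⊆ Fx \ {1, -1}) ∧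
    (∀ c ∈ I, Nat.card {x : E | x ∈ Fx ∪ U ∧ μ x = algebraMap F E c} = 2 ∧
      {x ∈ Fx ∪ U | μ x = algebraMap F E c} ⊆ U \ {1, -1}) ∧
    μ '' (Fx ∪ U) = Set.range (algebraMap F E) ∧
    {x : E | x ≠ 0 ∧ μ x ∈ Set.range (algebraMap F E)} = Fx ∪ U ∧
    μ '' (Fx \ {1, -1}) = algebraMap F E '' H ∧
    μ '' (U \ {1, -1}) = algebraMap F E '' I := by
  have hinj : Function.Injective (algebraMap F E) := (algebraMap F E).injective
  have h2E : (2 : E) ≠ 0 := lem_two_ne hqodd hE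
  have hf2 : algebraMap F E 2 = 2 := map_ofNat _ 2
  have hfm2 : algebraMap F E (-2) = -2 := by rw [map_neg, hf2]
  have hUnion0 : ∀ x ∈ Fx ∪ U, x ≠ 0 := by
    rw [hFx, hU]; rintro x (⟨hx0, -⟩ | ⟨hx0, -⟩) <;> exact hx0
  have hmem : ∀ x : E, x ≠ 0 →
      (x + x⁻¹ ∈ Set.range (algebraMap F E) ↔ x ∈ Fx ∪ U) := by
    intro x hx
    rw [lem_mem hq x hx, hFx, hU]
    simp only [Set.mem_union, Set.mem_setOf_eq, Set.mem_range]
    constructor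
    · rintro (⟨y, hy⟩ | h)
      · exact Or.inl ⟨hx, y, hy⟩
      · exact Or.inr ⟨hx, h⟩
    · rintro (⟨-, y, hy⟩ | ⟨-, h⟩)
      · exact Or.inl ⟨y, hy⟩
      · exact Or.inr h
  have hsetc : ∀ c : F, {x ∈ Fx ∪ U | μ x = algebraMap F E c} =
      {x : E | x ≠ 0 ∧ x + x⁻¹ = algebraMap F E c} := by
    intro c; ext x
    simp only [Set.mem_setOf_eq, hμ]
    constructor
    · rintro ⟨hxu, hxc⟩; exact ⟨hUnion0 x hxu, hxc⟩
    · rintro ⟨hx0, hxc⟩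
      exact ⟨(hmem x hx0).1 ⟨c, hxc.symm⟩, hxc⟩
  -- elements of Fx ∩ U are ±1
  have hFU : ∀ x : E, x ∈ Fx → x ∈ U → x = 1 ∨ x = -1 := by
    rw [hFx, hU]
    rintro x ⟨hx0, y, hy⟩ ⟨-, hxq⟩
    have hxfix : x ^ q = x := (lem_fix hq x).2 ⟨y, hy⟩
    rw [hxq] at hxfix
    have hx2 : x * x = 1 := by
      have h := mul_inv_cancel₀ hx0
      rw [hxfix] at h; exact h
    exact mul_self_eq_one_iff.1 hx2
  -- fiber elements are ≠ 1 resp ≠ -1 when c ≠ 2 resp c ≠ -2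
  have hne1 : ∀ c : F, c ≠ 2 → ∀ x : E, x + x⁻¹ = algebraMap F E c → x ≠ 1 := by
    intro c hc x hxc h
    subst h
    rw [inv_one, one_add_one_eq_two, ← hf2] at hxc
    exact hc (hinj hxc).symm
  have hnem1 : ∀ c : F, c ≠ -2 → ∀ x : E, x + x⁻¹ = algebraMap F E c → x ≠ -1 := by
    intro c hc x hxc h
    subst h
    rw [inv_neg, inv_one,
      show (-1 : E) + -1 = algebraMap F E (-2) by rw [hfm2]; ring] at hxc
    exact hc (hinj hxc).symm
  -- fibers over 2 and -2
  have hfib2 : {x : E | x ≠ 0 ∧ x + x⁻¹ = algebraMap F E 2} = {1} := by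
    rw [hf2, lem_fiber h2E 2 0 (by norm_num)]
    have e1 : ((2 : E) + 0) / 2 = 1 := by rw [add_zero, div_self h2E]
    have e2 : ((2 : E) - 0) / 2 = 1 := by rw [sub_zero, div_self h2E]
    rw [e1, e2, Set.pair_eq_singleton]
  have hfibm2 : {x : E | x ≠ 0 ∧ x + x⁻¹ = algebraMap F E (-2)} = {-1} := by
    rw [hfm2, lem_fiber h2E (-2) 0 (by norm_num)]
    have e1 : ((-2 : E) + 0) / 2 = -1 := by rw [add_zero, neg_div, div_self h2E]
    have e2 : ((-2 : E) - 0) / 2 = -1 := by rw [sub_zero, neg_div, div_self h2E]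
    rw [e1, e2, Set.pair_eq_singleton]
  -- difference of the two roots
  have hdiff : ∀ c d : E, (c + d) / 2 - (c - d) / 2 = d := by
    intro c d
    rw [div_sub_div_same, show c + d - (c - d) = 2 * d by ring,
      mul_div_cancel_left₀ _ h2E]
  -- key construction for c ∈ H
  have keyH : ∀ c ∈ H, ∃ r s : E, r ≠ s ∧
      {x : E | x ≠ 0 ∧ x + x⁻¹ = algebraMap F E c} = {r, s} ∧
      ({r, s} : Set E) ⊆ Fx \ {1, -1} := by
    intro c hc
    rw [hH] at hc
    obtain ⟨hc2, hcn2, h40, a, ha⟩ := hc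
    have ha0 : a ≠ 0 := by rintro rfl; rw [mul_zero] at ha; exact h40 ha
    set d : E := algebraMap F E a with hddef
    have hd : d ^ 2 = (algebraMap F E c) ^ 2 - 4 := by
      rw [hddef, sq, ← map_mul, ← ha, map_sub, map_pow, map_ofNat]
    have fibEq := lem_fiber h2E (algebraMap F E c) d hd
    set r : E := (algebraMap F E c + d) / 2 with hrdef
    set s : E := (algebraMap F E c - d) / 2 with hsdef
    have hd0 : d ≠ 0 := fun h => ha0 (hinj (by rw [← hddef, h, map_zero]))
    have hrs : r ≠ s := by
      intro h
      apply hd0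
      rw [← hdiff (algebraMap F E c) d, ← hrdef, ← hsdef, h, sub_self]
    have hrfib : r ∈ {x : E | x ≠ 0 ∧ x + x⁻¹ = algebraMap F E c} := by
      rw [fibEq]; exact Or.inl rfl
    have hsfib : s ∈ {x : E | x ≠ 0 ∧ x + x⁻¹ = algebraMap F E c} := by
      rw [fibEq]; exact Or.inr rfl
    obtain ⟨hr0, hrc⟩ := hrfib
    obtain ⟨hs0, hsc⟩ := hsfib
    have hrF : algebraMap F E ((c + a) / 2) = r := by
      rw [map_div₀, map_add, hf2, hrdef, hddef]
    have hsF : algebraMap F E ((c - a) / 2) = s := by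
      rw [map_div₀, map_sub, hf2, hsdef, hddef]
    refine ⟨r, s, hrs, fibEq, ?_⟩
    rintro x (rfl | rfl)
    · refine ⟨hFx ▸ ⟨hr0, _, hrF⟩, ?_⟩
      simp only [Set.mem_insert_iff, Set.mem_singleton_iff]
      push_neg
      exact ⟨hne1 c hc2 _ hrc, hnem1 c hcn2 _ hrc⟩
    · refine ⟨hFx ▸ ⟨hs0, _, hsF⟩, ?_⟩
      simp only [Set.mem_insert_iff, Set.mem_singleton_iff]
      push_neg
      exact ⟨hne1 c hc2 _ hsc, hnem1 c hcn2 _ hsc⟩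
  -- key construction for c ∈ I
  have keyI : ∀ c ∈ I, ∃ r s : E, r ≠ s ∧
      {x : E | x ≠ 0 ∧ x + x⁻¹ = algebraMap F E c} = {r, s} ∧
      ({r, s} : Set E) ⊆ U \ {1, -1} := by
    intro c hc
    rw [hI] at hc
    obtain ⟨hc2, hcn2, hnsq⟩ := hc
    have h40 : c ^ 2 - 4 ≠ 0 := by
      intro h; exact hnsq (by rw [h]; exact ⟨0, by simp⟩)
    obtain ⟨d, hd'⟩ := lem_sq hq hqodd hE (c ^ 2 - 4)
    have hd : d ^ 2 = (algebraMap F E c) ^ 2 - 4 := by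
      rw [hd', map_sub, map_pow, map_ofNat]
    have hd0 : d ≠ 0 := by
      intro h
      apply h40
      apply hinj
      rw [← hd', h, map_zero]; norm_num
    have fibEq := lem_fiber h2E (algebraMap F E c) d hd
    set r : E := (algebraMap F E c + d) / 2 with hrdef
    set s : E := (algebraMap F E c - d) / 2 with hsdef
    have hrs : r ≠ s := by
      intro h
      apply hd0
      rw [← hdiff (algebraMap F E c) d, ← hrdef, ← hsdef, h, sub_self]
    have hrfib : r ∈ {x : E | x ≠ 0 ∧ x + x⁻¹ = algebraMap F E c} := by
      rw [fibEq]; exact Or.inl rfl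
    have hsfib : s ∈ {x : E | x ≠ 0 ∧ x + x⁻¹ = algebraMap F E c} := by
      rw [fibEq]; exact Or.inr rfl
    obtain ⟨hr0, hrc⟩ := hrfib
    obtain ⟨hs0, hsc⟩ := hsfib
    have h2r : 2 * r = algebraMap F E c + d := by
      rw [hrdef, mul_div_cancel₀ _ h2E]
    have h2s : 2 * s = algebraMap F E c - d := by
      rw [hsdef, mul_div_cancel₀ _ h2E]
    -- r and s are not in Fx
    have hnotF : ∀ x : E, 2 * x - algebraMap F E c = d ∨ algebraMap F E c - 2 * x = d →
        x ∉ Fx := by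
      rintro x hx hxF
      rw [hFx] at hxF
      obtain ⟨-, y, hy⟩ := hxF
      have key : ∃ b : F, algebraMap F E b = d := by
        rcases hx with h | h
        · exact ⟨2 * y - c, by rw [map_sub, map_mul, hf2, hy, h]⟩
        · exact ⟨c - 2 * y, by rw [map_sub, map_mul, hf2, hy, h]⟩
      obtain ⟨b, hb⟩ := key
      apply hnsq
      refine ⟨b, ?_⟩
      apply hinj
      rw [← hd', map_mul, hb, sq]
    have hrU : r ∈ U := by
      have hrFU : r ∈ Fx ∪ U := (hmem r hr0).1 ⟨c, hrc.symm⟩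
      rcases hrFU with h | h
      · exact absurd h (hnotF r (Or.inl (by rw [h2r]; ring)))
      · exact h
    have hsU : s ∈ U := by
      have hsFU : s ∈ Fx ∪ U := (hmem s hs0).1 ⟨c, hsc.symm⟩
      rcases hsFU with h | h
      · exact absurd h (hnotF s (Or.inr (by rw [h2s]; ring)))
      · exact h
    refine ⟨r, s, hrs, fibEq, ?_⟩
    rintro x (rfl | rfl)
    · refine ⟨hrU, ?_⟩
      simp only [Set.mem_insert_iff, Set.mem_singleton_iff]
      push_neg
      exact ⟨hne1 c hc2 _ hrc, hnem1 c hcn2 _ hrc⟩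
    · refine ⟨hsU, ?_⟩
      simp only [Set.mem_insert_iff, Set.mem_singleton_iff]
      push_neg
      exact ⟨hne1 c hc2 _ hsc, hnem1 c hcn2 _ hsc⟩
  refine ⟨?_, ?_, ?_, ?_, ?_, ?_, ?_, ?_⟩
  · -- fiber over 2
    rw [show (2 : E) = algebraMap F E 2 from hf2.symm, hsetc 2, hfib2]
  · -- fiber over -2
    rw [show (-2 : E) = algebraMap F E (-2) from hfm2.symm, hsetc (-2), hfibm2]
  · -- c ∈ H
    intro c hc
    obtain ⟨r, s, hrs, fibEq, hsub⟩ := keyH c hc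
    have hset : {x : E | x ∈ Fx ∪ U ∧ μ x = algebraMap F E c} = {r, s} := by
      rw [show {x : E | x ∈ Fx ∪ U ∧ μ x = algebraMap F E c} =
        {x ∈ Fx ∪ U | μ x = algebraMap F E c} from rfl, hsetc c, fibEq]
    constructor
    · rw [hset, Nat.card_coe_set_eq, Set.ncard_pair hrs]
    · rw [show {x ∈ Fx ∪ U | μ x = algebraMap F E c} =
        {x : E | x ∈ Fx ∪ U ∧ μ x = algebraMap F E c} from rfl, hset]
      exact hsub
  · -- c ∈ I
    intro c hc
    obtain ⟨r, s, hrs, fibEq, hsub⟩ := keyI c hc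
    have hset : {x : E | x ∈ Fx ∪ U ∧ μ x = algebraMap F E c} = {r, s} := by
      rw [show {x : E | x ∈ Fx ∪ U ∧ μ x = algebraMap F E c} =
        {x ∈ Fx ∪ U | μ x = algebraMap F E c} from rfl, hsetc c, fibEq]
    constructor
    · rw [hset, Nat.card_coe_set_eq, Set.ncard_pair hrs]
    · rw [show {x ∈ Fx ∪ U | μ x = algebraMap F E c} =
        {x : E | x ∈ Fx ∪ U ∧ μ x = algebraMap F E c} from rfl, hset]
      exact hsub
  · -- image of Fx ∪ U is the range
    ext z
    constructor
    · rintro ⟨x, hx, rfl⟩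
      rw [hμ]
      exact (hmem x (hUnion0 x hx)).2 hx
    · rintro ⟨c, rfl⟩
      obtain ⟨d, hd'⟩ := lem_sq hq hqodd hE (c ^ 2 - 4)
      have hd : d ^ 2 = (algebraMap F E c) ^ 2 - 4 := by
        rw [hd', map_sub, map_pow, map_ofNat]
      have fibEq := lem_fiber h2E (algebraMap F E c) d hd
      have hrfib : (algebraMap F E c + d) / 2 ∈
          {x : E | x ≠ 0 ∧ x + x⁻¹ = algebraMap F E c} := by
        rw [fibEq]; exact Or.inl rfl
      obtain ⟨hr0, hrc⟩ := hrfib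
      exact ⟨_, (hmem _ hr0).1 ⟨c, hrc.symm⟩, by rw [hμ, hrc]⟩
  · -- preimage of range
    ext x
    simp only [Set.mem_setOf_eq, hμ]
    constructor
    · rintro ⟨hx0, hxr⟩
      exact (hmem x hx0).1 hxr
    · intro hx
      exact ⟨hUnion0 x hx, (hmem x (hUnion0 x hx)).2 hx⟩
  · -- μ '' (Fx \ {1,-1}) = f '' H
    ext z
    constructor
    · rintro ⟨x, ⟨hxF, hx1⟩, rfl⟩
      simp only [Set.mem_insert_iff, Set.mem_singleton_iff] at hx1
      push_neg at hx1
      obtain ⟨hx1, hxm1⟩ := hx1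
      rw [hFx] at hxF
      obtain ⟨hx0, y, hy⟩ := hxF
      have hy0 : y ≠ 0 := by rintro rfl; rw [map_zero] at hy; exact hx0 hy.symm
      have hy1 : y ≠ 1 := by rintro rfl; rw [map_one] at hy; exact hx1 hy.symm
      have hym1 : y ≠ -1 := by
        rintro rfl; rw [map_neg, map_one] at hy; exact hxm1 hy.symm
      set c : F := y + y⁻¹ with hcdef
      have hfc : μ x = algebraMap F E c := by
        rw [hμ, hcdef, map_add, map_inv₀, hy]
      have hc2 : c ≠ 2 := by
        intro h
        apply hy1
        have h' : (y - 1) * (y - 1) = 0 := by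
          have hh : y + y⁻¹ = 2 := h
          field_simp at hh
          linear_combination hh
        exact sub_eq_zero.1 (mul_self_eq_zero.1 h')
      have hcn2 : c ≠ -2 := by
        intro h
        apply hym1
        have h' : (y + 1) * (y + 1) = 0 := by
          have hh : y + y⁻¹ = -2 := h
          field_simp at hh
          linear_combination hh
        exact eq_neg_of_add_eq_zero_left (mul_self_eq_zero.1 h')
      have hkey : c ^ 2 - 4 = (y - y⁻¹) * (y - y⁻¹) := by
        rw [hcdef]; field_simp; ring
      have hyy : y - y⁻¹ ≠ 0 := by
        intro h
        rw [sub_eq_zero] at h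
        have : y * y = 1 := by
          nth_rewrite 2 [h]; exact mul_inv_cancel₀ hy0
        rcases mul_self_eq_one_iff.1 this with h1 | h1
        · exact hy1 h1
        · exact hym1 h1
      refine ⟨c, ?_, hfc.symm⟩
      rw [hH]
      exact ⟨hc2, hcn2, hkey ▸ mul_ne_zero hyy hyy, ⟨y - y⁻¹, hkey⟩⟩
    · rintro ⟨c, hc, rfl⟩
      obtain ⟨r, s, hrs, fibEq, hsub⟩ := keyH c hc
      have hrfib : r ∈ {x : E | x ≠ 0 ∧ x + x⁻¹ = algebraMap F E c} := by
        rw [fibEq]; exact Or.inl rfl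
      obtain ⟨hr0, hrc⟩ := hrfib
      exact ⟨r, hsub (Or.inl rfl), by rw [hμ, hrc]⟩
  · -- μ '' (U \ {1,-1}) = f '' I
    ext z
    constructor
    · rintro ⟨x, ⟨hxU, hx1⟩, rfl⟩
      simp only [Set.mem_insert_iff, Set.mem_singleton_iff] at hx1
      push_neg at hx1
      obtain ⟨hx1, hxm1⟩ := hx1
      have hx0 : x ≠ 0 := hUnion0 x (Or.inr hxU)
      obtain ⟨c, hc⟩ := (hmem x hx0).2 (Or.inr hxU)
      have hc2 : c ≠ 2 := by
        rintro rfl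
        have : x ∈ ({1} : Set E) := by
          rw [← hfib2]; exact ⟨hx0, hc.symm⟩
        exact hx1 this
      have hcn2 : c ≠ -2 := by
        rintro rfl
        have : x ∈ ({-1} : Set E) := by
          rw [← hfibm2]; exact ⟨hx0, hc.symm⟩
        exact hxm1 this
      have hnsq : ¬ IsSquare (c ^ 2 - 4) := by
        rintro ⟨a, ha⟩
        rcases eq_or_ne (c ^ 2 - 4) 0 with h0 | h0
        · have : (c - 2) * (c + 2) = 0 := by linear_combination h0
          rcases mul_eq_zero.1 this with h | h
          · exact hc2 (sub_eq_zero.1 h)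
          · exact hcn2 (eq_neg_of_add_eq_zero_left h)
        · have hcH : c ∈ H := by
            rw [hH]; exact ⟨hc2, hcn2, h0, ⟨a, ha⟩⟩
          obtain ⟨r, s, hrs, fibEq, hsub⟩ := keyH c hcH
          have hxmem : x ∈ ({r, s} : Set E) := by
            rw [← fibEq]; exact ⟨hx0, hc.symm⟩
          have hxF : x ∈ Fx \ {1, -1} := hsub hxmem
          rcases hFU x hxF.1 hxU with h | h
          · exact hx1 h
          · exact hxm1 h
      refine ⟨c, ?_, by rw [hμ, ← hc]⟩
      rw [hI]
      exact ⟨hc2, hcn2, hnsq⟩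
    · rintro ⟨c, hc, rfl⟩
      obtain ⟨r, s, hrs, fibEq, hsub⟩ := keyI c hc
      have hrfib : r ∈ {x : E | x ≠ 0 ∧ x + x⁻¹ = algebraMap F E c} := by
        rw [fibEq]; exact Or.inl rfl
      obtain ⟨hr0, hrc⟩ := hrfib
      exact ⟨r, hsub (Or.inl rfl), by rw [hμ, hrc]⟩
end

section
/- Let F be a finite field of odd characteristic of order q, let E be the quadratic extension of F, and let U_E = {x ∈ E× : x^q = x^{-1}}. Let κ : F× → F be κ(x)=x+x^{-1} and λ : U_E → F be λ(x)=x+x^{-1} (which takes values in F). Let φ : F → F, and set χ = φ∘κ and ψ = φ∘λ. Then for every c ∈ F, 2·|φ^{-1}({c})| = |χ^{-1}({c})| + |ψ^{-1}({c})|. -/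
open Finset Polynomial

section
variable {F E : Type*} [Field F] [Fintype F] [Field E] [Fintype E] [Algebra F E]


lemma fixedField {F E : Type*} [Field F] [Fintype F] [Field E] [Fintype E] [Algebra F E]
    (q : ℕ) (hq : Fintype.card F = q) :
    ∀ z : E, z ^ q = z ↔ z ∈ Set.range (algebraMap F E) := by
  classical
  have hq2 : 2 ≤ q := hq ▸ Fintype.one_lt_card
  have hinj := (algebraMap F E).injective
  set t : Finset E := univ.filter (fun z : E => z ^ q = z) with ht
  set im : Finset E := univ.image (algebraMap F E) with him
  have hsub : im ⊆ t := by
    intro z hz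
    simp only [him, mem_image] at hz
    obtain ⟨x, -, rfl⟩ := hz
    simp only [ht, mem_filter, mem_univ, true_and]
    rw [← map_pow]
    congr 1
    rw [← hq]
    exact FiniteField.pow_card x
  have hP : (X ^ q - X : E[X]) ≠ 0 ∧ (X ^ q - X : E[X]).natDegree = q := by
    have hd : (X : E[X]).natDegree < (X ^ q : E[X]).natDegree := by
      simp [natDegree_X_pow]; omega
    have hnd : (X ^ q - X : E[X]).natDegree = q := by
      rw [natDegree_sub_eq_left_of_natDegree_lt hd, natDegree_X_pow]
    refine ⟨fun h0 => ?_, hnd⟩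
    rw [h0] at hnd; simp at hnd; omega
  have htR : t ⊆ (X ^ q - X : E[X]).roots.toFinset := by
    intro z hz
    simp only [ht, mem_filter] at hz
    rw [Multiset.mem_toFinset, mem_roots hP.1]
    simp [hz.2, sub_eq_zero]
  have hcard : t.card ≤ q := by
    calc t.card ≤ (X ^ q - X : E[X]).roots.toFinset.card := Finset.card_le_card htR
    _ ≤ Multiset.card (X ^ q - X : E[X]).roots := Multiset.toFinset_card_le _
    _ ≤ q := le_trans (X ^ q - X : E[X]).card_roots' (le_of_eq hP.2)
  have himcard : im.card = q := by
    rw [him, Finset.card_image_of_injective _ hinj, card_univ, hq]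
  have heq : t = im := (Finset.eq_of_subset_of_card_le hsub (by omega)).symm
  intro z
  constructor
  · intro h
    have : z ∈ t := by simp [ht, h]
    rw [heq, him] at this
    simp only [mem_image, mem_univ, true_and] at this
    obtain ⟨x, hx⟩ := this
    exact ⟨x, hx⟩
  · rintro ⟨x, rfl⟩
    have : algebraMap F E x ∈ im := by simp [him]
    have := hsub this
    simpa [ht] using this


lemma frob_add {F E : Type*} [Field F] [Fintype F] [Field E] [Fintype E] [Algebra F E]
    (q : ℕ) (hq : Fintype.card F = q) (x y : E) : (x + y) ^ q = x ^ q + y ^ q := by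
  obtain ⟨p, hp⟩ := CharP.exists F
  haveI : CharP F p := hp
  obtain ⟨n, hp', hcard⟩ := FiniteField.card F p
  haveI : CharP E p := charP_of_injective_algebraMap (algebraMap F E).injective p
  haveI := Fact.mk hp'
  rw [← hq, hcard]
  exact add_pow_char_pow x y p n


lemma cardU' {E : Type*} [Field E] [Fintype E] [DecidableEq E]
    (q : ℕ) (hq2 : 2 ≤ q) (hE : Fintype.card E = q ^ 2) :
    (univ.filter (fun x : E => x ≠ 0 ∧ x ^ q = x⁻¹)).card = q + 1 := by
  set k := q - 1 with hk
  have hkq : q = k + 1 := by omega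
  have hk1 : 1 ≤ k := by omega
  have hcardu : Fintype.card Eˣ = k * (k + 2) := by
    rw [Fintype.card_units, hE, hkq]; ring_nf; omega
  obtain ⟨g, hg⟩ := IsCyclic.exists_ofOrder_eq_natCard (α := Eˣ)
  rw [Nat.card_eq_fintype_card, hcardu] at hg
  have hord : orderOf (g ^ k) = q + 1 := by
    rw [orderOf_pow, hg]
    have : Nat.gcd (k * (k + 2)) k = k := by
      rw [Nat.gcd_comm]
      exact Nat.gcd_eq_left (dvd_mul_right k (k + 2))
    rw [this, Nat.mul_div_cancel_left _ (by omega)]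
    omega
  have hprim : IsPrimitiveRoot ((g ^ k : Eˣ) : E) (q + 1) :=
    IsPrimitiveRoot.coe_units_iff.mpr (hord ▸ IsPrimitiveRoot.orderOf (g ^ k))
  have hcard := hprim.card_nthRootsFinset
  have hset : univ.filter (fun x : E => x ≠ 0 ∧ x ^ q = x⁻¹) = nthRootsFinset (q + 1) (1 : E) := by
    ext x
    rw [mem_nthRootsFinset (by omega), mem_filter]
    constructor
    · rintro ⟨-, h0, hx⟩
      rw [pow_succ, hx, inv_mul_cancel₀ h0]
    · intro h
      have h0 : x ≠ 0 := by
        rintro rfl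
        rw [zero_pow (by omega)] at h
        exact zero_ne_one h
      refine ⟨mem_univ _, h0, ?_⟩
      apply eq_inv_of_mul_eq_one_left
      rw [← pow_succ]; exact h
  rw [hset, hcard]


lemma quad {K : Type*} [Field K] {b x : K} (h0 : x ≠ 0) (h : x + x⁻¹ = b) :
    x ^ 2 - b * x + 1 = 0 := by
  field_simp at h
  linear_combination h

lemma sol_two {K : Type*} [Field K] {x : K} (h0 : x ≠ 0) (h : x + x⁻¹ = 2) : x = 1 := by
  have h2 := quad h0 h
  have : (x - 1) ^ 2 = 0 := by linear_combination h2
  have := pow_eq_zero_iff (n := 2) (by norm_num) |>.mp this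
  linear_combination this

lemma sol_negtwo {K : Type*} [Field K] {x : K} (h0 : x ≠ 0) (h : x + x⁻¹ = -2) : x = -1 := by
  have h2 := quad h0 h
  have : (x + 1) ^ 2 = 0 := by linear_combination h2
  have := pow_eq_zero_iff (n := 2) (by norm_num) |>.mp this
  linear_combination this

lemma bound {F E : Type*} [Field F] [Fintype F] [Field E] [Fintype E] [Algebra F E]
    [DecidableEq F] [DecidableEq E]
    (q : ℕ) (hq : Fintype.card F = q) (a : F) :
    (univ.filter (fun x : F => x ≠ 0 ∧ x + x⁻¹ = a)).card +
    (univ.filter (fun x : E => (x ≠ 0 ∧ x ^ q = x⁻¹) ∧ algebraMap F E a = x + x⁻¹)).card ≤ 2 := by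
  set ι := algebraMap F E with hι
  have hinj := (algebraMap F E).injective
  set A := univ.filter (fun x : F => x ≠ 0 ∧ x + x⁻¹ = a) with hA
  set B := univ.filter (fun x : E => (x ≠ 0 ∧ x ^ q = x⁻¹) ∧ ι a = x + x⁻¹) with hB
  by_cases ha : a = 2 ∨ a = -2
  · -- each side has at most one element
    obtain ⟨ε, hε, hsolF, hsolE⟩ :
        ∃ ε : F, (ε = 1 ∨ ε = -1) ∧ (∀ x : F, x ≠ 0 → x + x⁻¹ = a → x = ε)
          ∧ (∀ x : E, x ≠ 0 → x + x⁻¹ = ι a → x = ι ε) := by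
      rcases ha with rfl | rfl
      · exact ⟨1, Or.inl rfl, fun x h0 h => sol_two h0 h,
          fun x h0 h => by rw [map_one]; exact sol_two h0 (by rw [h, map_ofNat])⟩
      · exact ⟨-1, Or.inr rfl, fun x h0 h => sol_negtwo h0 h,
          fun x h0 h => by rw [map_neg, map_one]; exact sol_negtwo h0 (by rw [h, map_neg, map_ofNat])⟩
    have hA1 : A ⊆ {ε} := by
      intro x hx
      simp only [hA, mem_filter] at hx
      simp [hsolF x hx.2.1 hx.2.2]
    have hB1 : B ⊆ {ι ε} := by
      intro x hx
      simp only [hB, mem_filter] at hx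
      simp [hsolE x hx.2.1.1 hx.2.2.symm]
    calc A.card + B.card ≤ 1 + 1 :=
          Nat.add_le_add (le_trans (card_le_card hA1) (by simp))
            (le_trans (card_le_card hB1) (by simp))
      _ = 2 := rfl
  · push_neg at ha
    set R := univ.filter (fun x : E => x ^ 2 - ι a * x + 1 = 0) with hR
    have hRcard : R.card ≤ 2 := by
      rcases R.eq_empty_or_nonempty with h | ⟨r, hr⟩
      · simp [h]
      · have hr' : r ^ 2 - ι a * r + 1 = 0 := by
          simpa [hR] using (mem_filter.mp hr).2
        have hsub : R ⊆ {r, ι a - r} := by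
          intro y hy
          have hy' : y ^ 2 - ι a * y + 1 = 0 := by
            simpa [hR] using (mem_filter.mp hy).2
          have : (y - r) * (y - (ι a - r)) = 0 := by linear_combination hy' - hr'
          rcases mul_eq_zero.mp this with h | h
          · simp [sub_eq_zero.mp h]
          · simp [sub_eq_zero.mp h]
        exact le_trans (card_le_card hsub) (card_insert_le _ _ |>.trans (by simp))
    have hAR : A.image ι ⊆ R := by
      intro z hz
      obtain ⟨x, hx, rfl⟩ := mem_image.mp hz
      simp only [hA, mem_filter] at hx
      have := quad hx.2.1 hx.2.2
      simp only [hR, mem_filter, mem_univ, true_and]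
      have : ι (x ^ 2 - a * x + 1) = ι 0 := congrArg ι this
      rw [map_zero] at this
      push_cast [map_add, map_sub, map_mul, map_pow, map_one] at this
      linear_combination this
    have hBR : B ⊆ R := by
      intro x hx
      simp only [hB, mem_filter] at hx
      obtain ⟨-, ⟨h0, -⟩, heq⟩ := hx
      simp only [hR, mem_filter, mem_univ, true_and]
      have hinv : x * x⁻¹ = 1 := mul_inv_cancel₀ h0
      linear_combination x * heq.symm - hinv
    have hdisj : Disjoint (A.image ι) B := by
      rw [Finset.disjoint_left]
      rintro z hz hzB
      obtain ⟨x, hx, rfl⟩ := mem_image.mp hz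
      simp only [hA, mem_filter] at hx
      simp only [hB, mem_filter] at hzB
      have hfix : ι x ^ q = ι x := by
        rw [← map_pow]
        congr 1
        rw [← hq]
        exact FiniteField.pow_card x
      have h0 : ι x ≠ 0 := fun h => hx.2.1 (hinj (by rw [h, map_zero]))
      have h1 : ι x = (ι x)⁻¹ := by
        have h2 := hzB.2.1.2
        rwa [hfix] at h2
      have hsq := mul_inv_cancel₀ h0
      rw [← h1] at hsq
      have : (ι x - 1) * (ι x + 1) = 0 := by linear_combination hsq
      rcases mul_eq_zero.mp this with h | h
      · have hx1 : x = 1 := hinj (by rw [map_one, ← sub_eq_zero]; exact h)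
        apply ha.1
        rw [← hx.2.2, hx1]
        norm_num
      · have hx1 : x = -1 := hinj (by rw [map_neg, map_one]; exact eq_neg_of_add_eq_zero_left h)
        apply ha.2
        rw [← hx.2.2, hx1]
        norm_num
    calc A.card + B.card = (A.image ι).card + B.card := by
          rw [card_image_of_injective _ hinj]
      _ = (A.image ι ∪ B).card := (card_union_of_disjoint hdisj).symm
      _ ≤ R.card := card_le_card (union_subset hAR hBR)
      _ ≤ 2 := hRcard

lemma inRange (q : ℕ) (hq : Fintype.card F = q) {x : E} (h0 : x ≠ 0) (hx : x ^ q = x⁻¹) :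
    x + x⁻¹ ∈ Set.range (algebraMap F E) := by
  rw [← fixedField q hq]
  rw [frob_add q hq, hx, inv_pow, hx, inv_inv, add_comm]

lemma key [DecidableEq F] [DecidableEq E]
    (q : ℕ) (hq : Fintype.card F = q) (hqodd : Odd q) (hE : Fintype.card E = q ^ 2) (a : F) :
    (univ.filter (fun x : F => x ≠ 0 ∧ x + x⁻¹ = a)).card +
    (univ.filter (fun x : E => (x ≠ 0 ∧ x ^ q = x⁻¹) ∧ algebraMap F E a = x + x⁻¹)).card = 2 := by
  have hq2 : 2 ≤ q := hq ▸ Fintype.one_lt_card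
  have hinj := (algebraMap F E).injective
  -- sum over all a of A-card
  have sumA : ∑ b ∈ (univ : Finset F),
      (univ.filter (fun x : F => x ≠ 0 ∧ x + x⁻¹ = b)).card = q - 1 := by
    have h1 := Finset.card_eq_sum_card_fiberwise
      (f := fun x : F => x + x⁻¹) (s := univ.filter (fun x : F => x ≠ 0)) (t := univ)
      (fun x _ => mem_univ _)
    have h2 : (univ.filter (fun x : F => x ≠ 0)).card = q - 1 := by
      rw [Finset.filter_ne', card_erase_of_mem (mem_univ _), card_univ, hq]
    rw [← h2, h1]
    apply Finset.sum_congr rfl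
    intro b _
    rw [Finset.filter_filter]
  -- sum over all a of B-card
  have sumB : ∑ b ∈ (univ : Finset F),
      (univ.filter (fun x : E => (x ≠ 0 ∧ x ^ q = x⁻¹) ∧ algebraMap F E b = x + x⁻¹)).card
        = q + 1 := by
    have h1 := Finset.card_eq_sum_card_fiberwise
      (f := fun x : E => Function.invFun (algebraMap F E) (x + x⁻¹))
      (s := univ.filter (fun x : E => x ≠ 0 ∧ x ^ q = x⁻¹)) (t := univ)
      (fun x _ => mem_univ _)
    rw [← cardU' q hq2 hE, h1]
    apply Finset.sum_congr rfl
    intro b _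
    rw [Finset.filter_filter]
    apply congrArg Finset.card
    apply Finset.filter_congr
    intro x _
    constructor
    · rintro ⟨⟨h0, hx⟩, hb⟩
      refine ⟨⟨h0, hx⟩, ?_⟩
      show Function.invFun (algebraMap F E) (x + x⁻¹) = b
      rw [← hb, Function.leftInverse_invFun hinj b]
    · rintro ⟨⟨h0, hx⟩, hf⟩
      obtain ⟨y, hy⟩ := inRange q hq h0 hx
      refine ⟨⟨h0, hx⟩, ?_⟩
      replace hf : Function.invFun (algebraMap F E) (x + x⁻¹) = b := hf
      rw [← hy, ← hf, ← hy, Function.leftInverse_invFun hinj y]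
  have hsum : ∑ b ∈ (univ : Finset F),
      ((univ.filter (fun x : F => x ≠ 0 ∧ x + x⁻¹ = b)).card +
       (univ.filter (fun x : E => (x ≠ 0 ∧ x ^ q = x⁻¹) ∧ algebraMap F E b = x + x⁻¹)).card)
      = ∑ _b ∈ (univ : Finset F), 2 := by
    rw [Finset.sum_add_distrib, sumA, sumB, Finset.sum_const, card_univ, hq, smul_eq_mul]
    omega
  have := (Finset.sum_eq_sum_iff_of_le (fun b _ => bound q hq b)).mp hsum a (mem_univ a)
  exact this
end


theorem stmt6 (q : ℕ) (F E : Type*) [Field F] [Fintype F] [Field E] [Fintype E]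
    [Algebra F E] (hq : Fintype.card F = q) (hqodd : Odd q)
    (hE : Fintype.card E = q ^ 2)
    (φ : F → F) (c : F) :
    2 * Nat.card {x : F // φ x = c} =
      Nat.card {x : F // x ≠ 0 ∧ φ (x + x⁻¹) = c} +
      Nat.card {x : E // (x ≠ 0 ∧ x ^ q = x⁻¹) ∧
        ∃ y : F, algebraMap F E y = x + x⁻¹ ∧ φ y = c} := by
  classical
  have hinj := (algebraMap F E).injective
  set T : Finset F := univ.filter (fun a : F => φ a = c) with hT
  have hL : Nat.card {x : F // φ x = c} = T.card := by
    rw [Nat.card_eq_fintype_card, Fintype.card_subtype]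
  have hR1 : Nat.card {x : F // x ≠ 0 ∧ φ (x + x⁻¹) = c} =
      ∑ a ∈ T, (univ.filter (fun x : F => x ≠ 0 ∧ x + x⁻¹ = a)).card := by
    rw [Nat.card_eq_fintype_card, Fintype.card_subtype]
    rw [Finset.card_eq_sum_card_fiberwise (f := fun x : F => x + x⁻¹)
      (t := T) (fun x hx => by
        simp only [mem_coe, mem_filter] at hx
        simp only [hT, mem_coe, mem_filter]
        exact ⟨mem_univ _, hx.2.2⟩)]
    apply Finset.sum_congr rfl
    intro a ha
    simp only [hT, mem_filter] at ha
    rw [Finset.filter_filter]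
    apply congrArg Finset.card
    apply Finset.filter_congr
    intro x _
    constructor
    · rintro ⟨⟨h0, -⟩, hx⟩
      exact ⟨h0, hx⟩
    · rintro ⟨h0, hx⟩
      exact ⟨⟨h0, by rw [hx]; exact ha.2⟩, hx⟩
  have hR2 : Nat.card {x : E // (x ≠ 0 ∧ x ^ q = x⁻¹) ∧
      ∃ y : F, algebraMap F E y = x + x⁻¹ ∧ φ y = c} =
      ∑ a ∈ T, (univ.filter (fun x : E =>
        (x ≠ 0 ∧ x ^ q = x⁻¹) ∧ algebraMap F E a = x + x⁻¹)).card := by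
    rw [Nat.card_eq_fintype_card, Fintype.card_subtype]
    rw [Finset.card_eq_sum_card_fiberwise
      (f := fun x : E => Function.invFun (algebraMap F E) (x + x⁻¹))
      (t := T) (fun x hx => by
        simp only [mem_coe, mem_filter] at hx
        obtain ⟨-, -, y, hy, hyc⟩ := hx
        simp only [hT, mem_coe, mem_filter]
        refine ⟨mem_univ _, ?_⟩
        rw [← hy, Function.leftInverse_invFun hinj y]
        exact hyc)]
    apply Finset.sum_congr rfl
    intro a ha
    simp only [hT, mem_filter] at ha
    rw [Finset.filter_filter]
    apply congrArg Finset.card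
    apply Finset.filter_congr
    intro x _
    constructor
    · rintro ⟨⟨hp, y, hy, -⟩, hf⟩
      replace hf : Function.invFun (algebraMap F E) (x + x⁻¹) = a := hf
      refine ⟨hp, ?_⟩
      rw [← hy, ← hf, ← hy, Function.leftInverse_invFun hinj y]
    · rintro ⟨hp, hb⟩
      refine ⟨⟨hp, a, hb, ha.2⟩, ?_⟩
      show Function.invFun (algebraMap F E) (x + x⁻¹) = a
      rw [← hb, Function.leftInverse_invFun hinj a]
  rw [hL, hR1, hR2, ← Finset.sum_add_distrib]
  rw [Finset.sum_congr rfl (fun a _ => key q hq hqodd hE a)]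
  rw [Finset.sum_const, smul_eq_mul, mul_comm]
end

section
/- Let F be a finite field of odd characteristic p, let j and k be nonnegative integers, let d₁=(p^j+1)/2 and d₂=(p^k+1)/2, and suppose gcd(d₂, |F|−1)=1. Let E be the quadratic extension of F and U_E = {x ∈ E× : x^{|F|} = x^{-1}}. Let f₄ : F → F be f₄(x) = ((x+2)^{d₁}−(x−2)^{d₁})^{d₂} / ((x+2)^{d₂}−(x−2)^{d₂})^{d₁} (the denominator is nonzero for all x ∈ F). Then for every x ∈ F× ∪ U_E, one has x^{p^k}+x ≠ 0, the element x+x^{-1} lies in F, and f₄(x+x^{-1}) = σ·(x^{p^j}+x)^{d₂}/(x^{p^k}+x)^{d₁}, where σ = 1 if j and k have the same parity or p ≡ 1 (mod 8) or p ≡ 7 (mod 8), and σ = −1 otherwise. -/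
open Polynomial

lemma auxPowInj {F : Type*} [Field F] [Fintype F] {n : ℕ} (hn : 0 < n)
    (hcop : Nat.Coprime n (Fintype.card F - 1)) {a b : F} (h : a ^ n = b ^ n) : a = b := by
  classical
  rcases eq_or_ne b 0 with rfl | hb
  · rw [zero_pow hn.ne'] at h
    exact pow_eq_zero_iff hn.ne' |>.mp h
  rcases eq_or_ne a 0 with rfl | ha
  · rw [zero_pow hn.ne'] at h
    exact absurd ((pow_eq_zero_iff hn.ne').mp h.symm) hb
  set u := Units.mk0 a ha * (Units.mk0 b hb)⁻¹ with hu
  have hun : u ^ n = 1 := by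
    ext
    push_cast [hu]
    field_simp
    rw [Units.val_mk0, Units.val_mk0, div_pow, h, div_self (pow_ne_zero _ hb)]
  have h1 : orderOf u ∣ n := orderOf_dvd_of_pow_eq_one hun
  have h2 : orderOf u ∣ Fintype.card F - 1 := by
    rw [← Fintype.card_units]
    exact orderOf_dvd_card
  have h3 : orderOf u ∣ 1 := Nat.dvd_gcd h1 h2 |>.trans hcop.dvd
  have h4 : u = 1 := orderOf_eq_one_iff.mp (Nat.dvd_one.mp h3)
  have : (u : F) = 1 := by rw [h4]; rfl
  rw [hu] at this
  push_cast at this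
  field_simp at this
  rw [Units.val_mk0, Units.val_mk0, div_eq_one_iff_eq hb] at this
  exact this

lemma auxFixed {F E : Type*} [Field F] [Fintype F] [Field E] [Algebra F E]
    {z : E} (hz : z ^ Fintype.card F = z) : ∃ y : F, algebraMap F E y = z := by
  classical
  by_contra hcon
  push_neg at hcon
  have hq : 1 < Fintype.card F := Fintype.one_lt_card
  have hf : (X ^ Fintype.card F - X : E[X]) ≠ 0 := FiniteField.X_pow_card_sub_X_ne_zero E hq
  set S : Finset E := Finset.univ.image (algebraMap F E) with hS
  have hcardS : S.card = Fintype.card F := by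
    rw [hS, Finset.card_image_of_injective _ (algebraMap F E).injective, Finset.card_univ]
  have hsub : insert z S ⊆ (X ^ Fintype.card F - X : E[X]).roots.toFinset := by
    intro t ht
    rw [Multiset.mem_toFinset, Polynomial.mem_roots hf]
    have : t ^ Fintype.card F = t := by
      rcases Finset.mem_insert.mp ht with rfl | htS
      · exact hz
      · obtain ⟨y, _, rfl⟩ := Finset.mem_image.mp htS
        rw [← map_pow, FiniteField.pow_card]
    simp [Polynomial.IsRoot, sub_eq_zero, this]
  have h1 : (insert z S).card = Fintype.card F + 1 := by
    rw [Finset.card_insert_of_notMem, hcardS]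
    intro hmem
    obtain ⟨y, _, hy⟩ := Finset.mem_image.mp hmem
    exact hcon y hy
  have h2 := Finset.card_le_card hsub
  have h3 : (X ^ Fintype.card F - X : E[X]).roots.toFinset.card ≤ Fintype.card F := by
    calc (X ^ Fintype.card F - X : E[X]).roots.toFinset.card
        ≤ (X ^ Fintype.card F - X : E[X]).roots.card :=
          (X ^ Fintype.card F - X : E[X]).roots.toFinset_card_le
      _ ≤ (X ^ Fintype.card F - X : E[X]).natDegree := Polynomial.card_roots' _
      _ = Fintype.card F := FiniteField.X_pow_card_sub_X_natDegree_eq E hq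
  omega

lemma auxKey {p : ℕ} [Fact p.Prime] (hpodd : Odd p) {E : Type*} [Field E] [CharP E p]
    {x : E} (hx : x ≠ 0) (m : ℕ) :
    (x + x⁻¹ + 2) ^ ((p ^ m + 1) / 2) - (x + x⁻¹ - 2) ^ ((p ^ m + 1) / 2)
      = 2 * (x ^ ((p ^ m + 1) / 2))⁻¹ * (x ^ p ^ m + x) := by
  have hpm : Odd (p ^ m) := hpodd.pow
  obtain ⟨b, hb⟩ := hpm
  have hd2 : 2 * ((p ^ m + 1) / 2) = p ^ m + 1 := by omega
  set d := (p ^ m + 1) / 2 with hd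
  have h1 : x + x⁻¹ + 2 = (x + 1) ^ 2 * x⁻¹ := by field_simp; ring
  have h2 : x + x⁻¹ - 2 = (x - 1) ^ 2 * x⁻¹ := by field_simp; ring
  have e1 : ((x + 1) ^ 2) ^ d = (x ^ p ^ m + 1) * (x + 1) := by
    rw [← pow_mul, hd2, pow_succ, add_pow_char_pow, one_pow]
  have e2 : ((x - 1) ^ 2) ^ d = (x ^ p ^ m - 1) * (x - 1) := by
    rw [← pow_mul, hd2, pow_succ, sub_pow_char_pow, one_pow]
  rw [h1, h2, mul_pow, mul_pow, e1, e2, inv_pow]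
  ring

lemma auxSign {p : ℕ} [Fact p.Prime] (hpodd : Odd p) (m : ℕ) :
    (2 : ZMod p) ^ ((p ^ m + 1) / 2) = 2 * ((2 : ZMod p) ^ ((p - 1) / 2)) ^ m := by
  have hp2 : p ≠ 2 := by
    rintro rfl
    simp [Nat.odd_iff] at hpodd
  have h2 : (2 : ZMod p) ≠ 0 := by
    intro h
    have h' : ((2 : ℕ) : ZMod p) = 0 := by exact_mod_cast h
    rw [ZMod.natCast_eq_zero_iff] at h'
    exact hp2 ((Nat.prime_dvd_prime_iff_eq (Fact.out) Nat.prime_two).mp h')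
  have hfer : (2 : ZMod p) ^ (p - 1) = 1 := ZMod.pow_card_sub_one_eq_one h2
  induction m with
  | zero => simp
  | succ m ih =>
    obtain ⟨b, hb⟩ := hpodd.pow (n := m)
    obtain ⟨a, ha⟩ := hpodd
    have e1 : (p ^ (m + 1) + 1) / 2 = 2 * a * b + a + b + 1 := by
      have : p ^ (m + 1) + 1 = 2 * (2 * a * b + a + b + 1) := by
        rw [pow_succ, hb, ha]; ring
      omega
    have e2 : (p - 1) / 2 = a := by omega
    have e3 : (p ^ m + 1) / 2 = b + 1 := by omega
    have key : (p ^ (m + 1) + 1) / 2 + (p - 1) / 2 = p * ((p ^ m + 1) / 2) := by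
      rw [e1, e2, e3, ha]; ring
    have hg2 : ((2 : ZMod p) ^ ((p - 1) / 2)) ^ 2 = 1 := by
      rw [← pow_mul]
      have : (p - 1) / 2 * 2 = p - 1 := by omega
      rw [this, hfer]
    have step : (2 : ZMod p) ^ ((p ^ (m + 1) + 1) / 2) * (2 : ZMod p) ^ ((p - 1) / 2)
        = 2 * ((2 : ZMod p) ^ ((p - 1) / 2)) ^ m := by
      rw [← pow_add, key, pow_mul, ZMod.pow_card, ih]
    calc (2 : ZMod p) ^ ((p ^ (m + 1) + 1) / 2)
        = (2 : ZMod p) ^ ((p ^ (m + 1) + 1) / 2) * (((2 : ZMod p) ^ ((p - 1) / 2)) ^ 2) := by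
          rw [hg2, mul_one]
      _ = ((2 : ZMod p) ^ ((p ^ (m + 1) + 1) / 2) * (2 : ZMod p) ^ ((p - 1) / 2))
            * (2 : ZMod p) ^ ((p - 1) / 2) := by ring
      _ = 2 * ((2 : ZMod p) ^ ((p - 1) / 2)) ^ (m + 1) := by rw [step]; ring

lemma auxG {p : ℕ} [Fact p.Prime] (hpodd : Odd p) :
    ((2 : ZMod p) ^ ((p - 1) / 2)) ^ 2 = 1 ∧
    ((p % 8 = 1 ∨ p % 8 = 7) → (2 : ZMod p) ^ ((p - 1) / 2) = 1) ∧
    (¬ (p % 8 = 1 ∨ p % 8 = 7) → (2 : ZMod p) ^ ((p - 1) / 2) = -1) := by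
  have hp2 : p ≠ 2 := by
    rintro rfl
    simp [Nat.odd_iff] at hpodd
  have hp1 : 1 < p := (Fact.out : p.Prime).one_lt
  obtain ⟨a, ha⟩ := hpodd
  have h2 : (2 : ZMod p) ≠ 0 := by
    intro h
    have h' : ((2 : ℕ) : ZMod p) = 0 := by exact_mod_cast h
    rw [ZMod.natCast_eq_zero_iff] at h'
    exact hp2 ((Nat.prime_dvd_prime_iff_eq (Fact.out) Nat.prime_two).mp h')
  have hfer : (2 : ZMod p) ^ (p - 1) = 1 := ZMod.pow_card_sub_one_eq_one h2
  have hdiv : p / 2 = (p - 1) / 2 := by omega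
  have hsq : ((2 : ZMod p) ^ ((p - 1) / 2)) ^ 2 = 1 := by
    rw [← pow_mul]
    have : (p - 1) / 2 * 2 = p - 1 := by omega
    rw [this, hfer]
  refine ⟨hsq, ?_, ?_⟩
  · intro hc
    have hsquare : IsSquare (2 : ZMod p) := (ZMod.exists_sq_eq_two_iff hp2).mpr hc
    have := (ZMod.euler_criterion p h2).mp hsquare
    rwa [hdiv] at this
  · intro hc
    have hns : ¬ IsSquare (2 : ZMod p) := fun hs => hc ((ZMod.exists_sq_eq_two_iff hp2).mp hs)
    have h1 : (2 : ZMod p) ^ ((p - 1) / 2) ≠ 1 := by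
      intro h1
      exact hns ((ZMod.euler_criterion p h2).mpr (by rwa [hdiv]))
    have hmul : (2 : ZMod p) ^ ((p - 1) / 2) * (2 : ZMod p) ^ ((p - 1) / 2) = 1 := by
      rw [← pow_two]; exact hsq
    rcases mul_self_eq_one_iff.mp hmul with h | h
    · exact absurd h h1
    · exact h

theorem stmt8 (p : ℕ) (hp : p.Prime) (hpodd : Odd p) (j k : ℕ)
    (F E : Type*) [Field F] [Fintype F] [Field E] [Fintype E] [Algebra F E]
    [CharP F p] (hE : Fintype.card E = Fintype.card F ^ 2)
    (d₁ d₂ : ℕ) (hd₁ : d₁ = (p ^ j + 1) / 2) (hd₂ : d₂ = (p ^ k + 1) / 2)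
    (hcop : Nat.Coprime d₂ (Fintype.card F - 1))
    (f₄ : F → F)
    (hf₄ : ∀ x : F,
      f₄ x = ((x + 2) ^ d₁ - (x - 2) ^ d₁) ^ d₂ / ((x + 2) ^ d₂ - (x - 2) ^ d₂) ^ d₁)
    (σ : E)
    (hσ : ((j % 2 = k % 2 ∨ p % 8 = 1 ∨ p % 8 = 7) → σ = 1) ∧
      (¬ (j % 2 = k % 2 ∨ p % 8 = 1 ∨ p % 8 = 7) → σ = -1))
    (x : E)
    (hx : (x ≠ 0 ∧ ∃ y : F, algebraMap F E y = x) ∨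
      (x ≠ 0 ∧ x ^ Fintype.card F = x⁻¹)) :
    x ^ (p ^ k) + x ≠ 0 ∧
    ∃ y : F, algebraMap F E y = x + x⁻¹ ∧
      algebraMap F E (f₄ y) = σ * (x ^ (p ^ j) + x) ^ d₂ / (x ^ (p ^ k) + x) ^ d₁ := by
  haveI : Fact p.Prime := ⟨hp⟩
  haveI : CharP E p := charP_of_injective_algebraMap (algebraMap F E).injective p
  have hp2 : p ≠ 2 := by
    rintro rfl
    simp [Nat.odd_iff] at hpodd
  have h2E : (2 : E) ≠ 0 := by
    intro h
    have h' : ((2 : ℕ) : E) = 0 := by exact_mod_cast h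
    rw [CharP.cast_eq_zero_iff E p] at h'
    exact hp2 ((Nat.prime_dvd_prime_iff_eq hp Nat.prime_two).mp h')
  have h2F : (2 : F) ≠ 0 := by
    intro h
    apply h2E
    rw [← map_ofNat (algebraMap F E) 2, h, map_zero]
  have hx0 : x ≠ 0 := by rcases hx with ⟨h, _⟩ | ⟨h, _⟩ <;> exact h
  obtain ⟨y, hy⟩ : ∃ y : F, algebraMap F E y = x + x⁻¹ := by
    rcases hx with ⟨_, y₀, hy₀⟩ | ⟨_, hxc⟩
    · exact ⟨y₀ + y₀⁻¹, by rw [map_add, map_inv₀, hy₀]⟩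
    · apply auxFixed
      obtain ⟨n, hpn, hcard⟩ := FiniteField.card F p
      have h1 : (x⁻¹) ^ Fintype.card F = x := by rw [inv_pow, hxc, inv_inv]
      rw [hcard, add_pow_char_pow, ← hcard, hxc, h1]
      exact add_comm _ _
  have hd₂pos : 0 < d₂ := by
    have := Nat.one_le_pow k p hp.pos
    omega
  have hD : (y + 2) ^ d₂ - (y - 2) ^ d₂ ≠ 0 := by
    intro h
    have h' : (y + 2) ^ d₂ = (y - 2) ^ d₂ := sub_eq_zero.mp h
    have heq : y + 2 = y - 2 := auxPowInj hd₂pos hcop h'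
    have h4 : (2 : F) * 2 = 0 := by linear_combination heq
    rcases mul_eq_zero.mp h4 with h5 | h5 <;> exact h2F h5
  have hIk : (x + x⁻¹ + 2) ^ d₂ - (x + x⁻¹ - 2) ^ d₂ = 2 * (x ^ d₂)⁻¹ * (x ^ p ^ k + x) := by
    rw [hd₂]; exact auxKey hpodd hx0 k
  have hIj : (x + x⁻¹ + 2) ^ d₁ - (x + x⁻¹ - 2) ^ d₁ = 2 * (x ^ d₁)⁻¹ * (x ^ p ^ j + x) := by
    rw [hd₁]; exact auxKey hpodd hx0 j
  have hDE : (x + x⁻¹ + 2) ^ d₂ - (x + x⁻¹ - 2) ^ d₂ ≠ 0 := by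
    have := (map_ne_zero (algebraMap F E)).mpr hD
    simpa only [map_sub, map_pow, map_add, map_ofNat, hy] using this
  have hk0 : x ^ p ^ k + x ≠ 0 := by
    intro h
    apply hDE
    rw [hIk, h, mul_zero]
  refine ⟨hk0, y, hy, ?_⟩
  -- sign
  set φ : ZMod p →+* E := ZMod.castHom dvd_rfl E with hφ
  set gE : E := φ ((2 : ZMod p) ^ ((p - 1) / 2)) with hgE
  have hs1 : (2 : E) ^ d₁ = 2 * gE ^ j := by
    have := congrArg φ (auxSign hpodd j)
    rw [hd₁, hgE]
    simpa only [map_pow, map_mul, map_ofNat] using this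
  have hs2 : (2 : E) ^ d₂ = 2 * gE ^ k := by
    have := congrArg φ (auxSign hpodd k)
    rw [hd₂, hgE]
    simpa only [map_pow, map_mul, map_ofNat] using this
  have hgE2 : gE ^ 2 = 1 := by
    rw [hgE, ← map_pow, (auxG hpodd).1, map_one]
  have hmod : ∀ a : ℕ, gE ^ a = gE ^ (a % 2) := by
    intro a
    conv_lhs => rw [← Nat.div_add_mod a 2]
    rw [pow_add, pow_mul, hgE2, one_pow, one_mul]
  have hσE : (2 : E) ^ d₂ = σ * (2 : E) ^ d₁ := by
    by_cases hc : j % 2 = k % 2 ∨ p % 8 = 1 ∨ p % 8 = 7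
    · rw [hσ.1 hc, one_mul, hs1, hs2]
      rcases hc with hjk | h17
      · rw [hmod k, hmod j, hjk]
      · have hg1 : gE = 1 := by rw [hgE, (auxG hpodd).2.1 h17, map_one]
        rw [hg1, one_pow, one_pow]
    · rw [hσ.2 hc, hs1, hs2]
      push_neg at hc
      obtain ⟨hjk, h8a, h8b⟩ := hc
      have hg : gE = -1 := by
        rw [hgE, (auxG hpodd).2.2 (by tauto), map_neg, map_one]
      have hpow : gE ^ k = -gE ^ j := by
        rw [hmod k, hmod j, hg]
        rcases Nat.mod_two_eq_zero_or_one j with hj | hj <;>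
          rcases Nat.mod_two_eq_zero_or_one k with hk | hk <;>
            simp [hj, hk] at hjk ⊢
      rw [hpow]; ring
  -- final computation
  have hmap : algebraMap F E (f₄ y)
      = ((x + x⁻¹ + 2) ^ d₁ - (x + x⁻¹ - 2) ^ d₁) ^ d₂
        / ((x + x⁻¹ + 2) ^ d₂ - (x + x⁻¹ - 2) ^ d₂) ^ d₁ := by
    rw [hf₄ y]
    simp only [map_div₀, map_pow, map_sub, map_add, map_ofNat, hy]
  rw [hmap, hIj, hIk]
  have expand : ∀ (a : E) (mm nn : ℕ),
      (2 * (x ^ mm)⁻¹ * a) ^ nn = 2 ^ nn * (x ^ (mm * nn))⁻¹ * a ^ nn := by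
    intro a mm nn
    rw [mul_pow, mul_pow, inv_pow, ← pow_mul]
  rw [expand, expand, mul_comm d₂ d₁]
  have hσ' : σ = (2 : E) ^ d₂ * ((2 : E) ^ d₁)⁻¹ := by
    rw [hσE, mul_assoc, mul_inv_cancel₀ (pow_ne_zero _ h2E), mul_one]
  rw [hσ']
  have hxp : x ^ (d₁ * d₂) ≠ 0 := pow_ne_zero _ hx0
  have h2p1 : (2 : E) ^ d₁ ≠ 0 := pow_ne_zero _ h2E
  have h2p2 : (2 : E) ^ d₂ ≠ 0 := pow_ne_zero _ h2E
  have hAk : (x ^ p ^ k + x) ^ d₁ ≠ 0 := pow_ne_zero _ hk0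
  field_simp
end

section
/- Let F be a finite field of odd characteristic p, let j and k be nonnegative integers, let d₁=(p^j+1)/2 and d₂=(p^k+1)/2, and suppose gcd(d₂, |F|−1)=1. Let E be the quadratic extension of F, U_E = {x ∈ E× : x^{|F|} = x^{-1}}, and let f₄ : F → F be f₄(x) = ((x+2)^{d₁}−(x−2)^{d₁})^{d₂} / ((x+2)^{d₂}−(x−2)^{d₂})^{d₁}. Let τ = −1 if p ≡ 3 (mod 4) and j is odd, and τ = 1 otherwise. Then for every x ∈ F× ∪ U_E: f₄((1/x)+(1/x)^{-1}) = f₄(x+x^{-1}), f₄((−x)+(−x)^{-1}) = τ·f₄(x+x^{-1}), and f₄((−1/x)+(−1/x)^{-1}) = τ·f₄(x+x^{-1}). -/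
open Polynomial

theorem stmt9 (p : ℕ) (hp : p.Prime) (hpodd : Odd p) (j k : ℕ)
    (F E : Type*) [Field F] [Fintype F] [Field E] [Fintype E] [Algebra F E]
    [CharP F p] (hE : Fintype.card E = Fintype.card F ^ 2)
    (d₁ d₂ : ℕ) (hd₁ : d₁ = (p ^ j + 1) / 2) (hd₂ : d₂ = (p ^ k + 1) / 2)
    (hcop : Nat.Coprime d₂ (Fintype.card F - 1))
    (f₄ : F → F)
    (hf₄ : ∀ x : F,
      f₄ x = ((x + 2) ^ d₁ - (x - 2) ^ d₁) ^ d₂ / ((x + 2) ^ d₂ - (x - 2) ^ d₂) ^ d₁)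
    (τ : F)
    (hτ : ((p % 4 = 3 ∧ Odd j) → τ = -1) ∧ (¬ (p % 4 = 3 ∧ Odd j) → τ = 1))
    (x : E)
    (hx : (x ≠ 0 ∧ ∃ y : F, algebraMap F E y = x) ∨
      (x ≠ 0 ∧ x ^ Fintype.card F = x⁻¹)) :
    ∃ y y₀ y₁ y₂ : F,
      algebraMap F E y = x + x⁻¹ ∧
      algebraMap F E y₀ = x⁻¹ + (x⁻¹)⁻¹ ∧
      algebraMap F E y₁ = -x + (-x)⁻¹ ∧
      algebraMap F E y₂ = -x⁻¹ + (-x⁻¹)⁻¹ ∧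
      f₄ y₀ = f₄ y ∧ f₄ y₁ = τ * f₄ y ∧ f₄ y₂ = τ * f₄ y := by
  classical
  have hFact : Fact p.Prime := ⟨hp⟩
  set q := Fintype.card F with hq
  have hq2 : 1 < q := Fintype.one_lt_card
  -- Step A: find y with algebraMap y = x + x⁻¹
  have hmapinj : Function.Injective (algebraMap F E) := (algebraMap F E).injective
  obtain ⟨y, hy⟩ : ∃ y : F, algebraMap F E y = x + x⁻¹ := by
    rcases hx with ⟨hx0, z, hz⟩ | ⟨hx0, hxq⟩
    · have hz0 : z ≠ 0 := by rintro rfl; simp at hz; exact hx0 hz.symm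
      exact ⟨z + z⁻¹, by rw [map_add, map_inv₀, hz]⟩
    · -- x + x⁻¹ is fixed by the q-power map
      have hEp : CharP E p := charP_of_injective_algebraMap hmapinj p
      obtain ⟨n, -, hFn⟩ := FiniteField.card F p
      have hfrob : ((x + x⁻¹) : E) ^ q = x + x⁻¹ := by
        rw [hq, hFn, add_pow_char_pow, ← hFn, ← hq]
        rw [hxq, inv_pow, hxq, inv_inv, add_comm]
      -- the fixed points of z ↦ z^q are exactly the image of F
      set T : Finset E := Finset.univ.filter (fun z => z ^ q = z) with hT
      set S : Finset E := Finset.univ.image (algebraMap F E) with hS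
      have hST : S ⊆ T := by
        intro w hw
        simp only [hS, Finset.mem_image] at hw
        obtain ⟨a, -, rfl⟩ := hw
        simp only [hT, Finset.mem_filter, Finset.mem_univ, true_and]
        rw [← map_pow, FiniteField.pow_card]
      have hScard : S.card = q := by
        rw [hS, Finset.card_image_of_injective _ hmapinj, Finset.card_univ]
      have hTcard : T.card ≤ q := by
        set P : E[X] := X ^ q - X with hP
        have hdeg : P.natDegree = q := by
          rw [hP, natDegree_sub_eq_left_of_natDegree_lt, natDegree_X_pow]
          rw [natDegree_X_pow, natDegree_X]; omega
        have hP0 : P ≠ 0 := by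
          intro h; rw [h, natDegree_zero] at hdeg; omega
        have hsub : T ⊆ P.roots.toFinset := by
          intro z hz
          simp only [hT, Finset.mem_filter, Finset.mem_univ, true_and] at hz
          rw [Multiset.mem_toFinset, mem_roots hP0]
          simp [hP, IsRoot, sub_eq_zero, hz]
        calc T.card ≤ P.roots.toFinset.card := Finset.card_le_card hsub
          _ ≤ Multiset.card P.roots := Multiset.toFinset_card_le _
          _ ≤ P.natDegree := card_roots' P
          _ = q := hdeg
      have hSeqT : S = T := Finset.eq_of_subset_of_card_le hST (hTcard.trans_eq hScard.symm)
      have hmem : (x + x⁻¹) ∈ T := by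
        simp only [hT, Finset.mem_filter, Finset.mem_univ, true_and]; exact hfrob
      rw [← hSeqT] at hmem
      simp only [hS, Finset.mem_image, Finset.mem_univ, true_and] at hmem
      exact hmem
  -- parity facts
  have hd₂odd : Odd d₂ := by
    rw [Nat.odd_iff]
    by_contra h
    have h2 : 2 ∣ d₂ := by omega
    have hqodd : Odd q := by
      obtain ⟨n, -, hFn⟩ := FiniteField.card F p
      rw [hq, hFn]; exact hpodd.pow
    have h2' : 2 ∣ (q - 1) := by
      rw [Nat.odd_iff] at hqodd; omega
    have := Nat.dvd_gcd h2 h2'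
    rw [hcop] at this; omega
  have hpj : (p ^ j) % 2 = 1 := by
    rw [← Nat.odd_iff]; exact hpodd.pow
  have hp4 : p % 4 = 1 ∨ p % 4 = 3 := by
    have : p % 2 = 1 := Nat.odd_iff.mp hpodd
    omega
  have h3j : ∀ m : ℕ, (m % 2 = 0 → 3 ^ m % 4 = 1) ∧ (m % 2 = 1 → 3 ^ m % 4 = 3) := by
    intro m
    induction m with
    | zero => simp
    | succ n ih =>
      constructor <;> intro h <;> rw [pow_succ, Nat.mul_mod]
      · rw [ih.2 (by omega)]
      · rw [ih.1 (by omega)]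
  have hmod4 : p ^ j % 4 = 3 ↔ (p % 4 = 3 ∧ Odd j) := by
    rw [Nat.pow_mod]
    rcases hp4 with h | h
    · rw [h]; simp
    · rw [h]
      constructor
      · intro hh
        refine ⟨rfl, ?_⟩
        rw [Nat.odd_iff]
        by_contra hodd
        have := (h3j j).1 (by omega)
        omega
      · rintro ⟨-, hodd⟩
        rw [Nat.odd_iff] at hodd
        exact (h3j j).2 hodd
  -- sign lemma
  have hdivsign : ∀ (a b : ℕ) (u v : F),
      ((-1 : F) ^ a * u) / ((-1 : F) ^ b * v) = (-1 : F) ^ (a + b) * (u / v) := by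
    intro a b u v
    rw [div_eq_mul_inv, div_eq_mul_inv, mul_inv, ← inv_pow, inv_neg, inv_one, pow_add]
    ring
  have key : ∀ z : F, f₄ (-z) = (-1 : F) ^ (d₁ + d₂) * f₄ z := by
    intro z
    rw [hf₄, hf₄]
    have h1 : (-z + 2 : F) = -(z - 2) := by ring
    have h2 : (-z - 2 : F) = -(z + 2) := by ring
    rw [h1, h2]
    have egen : ∀ (d : ℕ) (a b : F), (-b) ^ d - (-a) ^ d
        = (-1) ^ (d + 1) * (a ^ d - b ^ d) := by
      intro d a b
      rcases Nat.even_or_odd d with h | h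
      · rw [h.neg_pow, h.neg_pow, (Even.add_one h).neg_one_pow]; ring
      · rw [h.neg_pow, h.neg_pow, (Odd.add_one h).neg_one_pow]; ring
    rw [egen d₁, egen d₂, mul_pow, mul_pow, ← pow_mul, ← pow_mul, hdivsign]
    congr 1
    rw [show (d₁ + 1) * d₂ + (d₂ + 1) * d₁ = 2 * (d₁ * d₂) + (d₁ + d₂) by ring,
      pow_add, pow_mul, neg_one_sq, one_pow, one_mul]
  have hsign : (-1 : F) ^ (d₁ + d₂) = τ := by
    by_cases hc : p % 4 = 3 ∧ Odd j
    · rw [hτ.1 hc]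
      have hd₁even : d₁ % 2 = 0 := by
        have := hmod4.mpr hc
        omega
      have : Odd (d₁ + d₂) := by
        rw [Nat.odd_iff] at hd₂odd ⊢; omega
      exact this.neg_one_pow
    · rw [hτ.2 hc]
      have hd₁odd : d₁ % 2 = 1 := by
        have h3 : p ^ j % 4 ≠ 3 := fun h => hc (hmod4.mp h)
        omega
      have : Even (d₁ + d₂) := by
        rw [Nat.odd_iff] at hd₂odd
        rw [Nat.even_iff]; omega
      exact this.neg_one_pow
  refine ⟨y, y, -y, -y, hy, ?_, ?_, ?_, rfl, ?_, ?_⟩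
  · rw [hy, inv_inv, add_comm]
  · rw [map_neg, hy, inv_neg, neg_add]
  · rw [map_neg, hy, inv_neg, inv_inv, neg_add, add_comm]
  · rw [key, hsign]
  · rw [key, hsign]
end

section
/- Let F be the finite field of order q=3^n with n odd, let k be an even nonnegative integer, let d₁=(3^n+1)/2, d₂=(3^k+1)/2, e₂=(3^k−1)/2, and let f₄ : F → F be f₄(x) = ((x+2)^{d₁}−(x−2)^{d₁})^{d₂} / ((x+2)^{d₂}−(x−2)^{d₂})^{d₁}. Then for every x ∈ F×, f₄(x+x^{-1}) = (x/(x^{e₂}+x^{-e₂}))^{(q−1)/2} · 1/(x^{e₂}+x^{-e₂}), this value is nonzero, and the factor (x/(x^{e₂}+x^{-e₂}))^{(q−1)/2} lies in {1,−1}. -/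
theorem stmt10 (n k : ℕ) (hn : Odd n) (hk : Even k)
    (F : Type*) [Field F] [Fintype F] (hF : Fintype.card F = 3 ^ n)
    (d₁ d₂ e₂ : ℕ) (hd₁ : d₁ = (3 ^ n + 1) / 2) (hd₂ : d₂ = (3 ^ k + 1) / 2)
    (he₂ : e₂ = (3 ^ k - 1) / 2)
    (f₄ : F → F)
    (hf₄ : ∀ x : F,
      f₄ x = ((x + 2) ^ d₁ - (x - 2) ^ d₁) ^ d₂ / ((x + 2) ^ d₂ - (x - 2) ^ d₂) ^ d₁)
    (x : F) (hx : x ≠ 0) :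
    f₄ (x + x⁻¹) =
      (x / (x ^ e₂ + (x⁻¹) ^ e₂)) ^ ((3 ^ n - 1) / 2) * (x ^ e₂ + (x⁻¹) ^ e₂)⁻¹ ∧
    f₄ (x + x⁻¹) ≠ 0 ∧
    ((x / (x ^ e₂ + (x⁻¹) ^ e₂)) ^ ((3 ^ n - 1) / 2) = 1 ∨
      (x / (x ^ e₂ + (x⁻¹) ^ e₂)) ^ ((3 ^ n - 1) / 2) = -1) := by
  -- numeric groundwork
  obtain ⟨j, hj⟩ := hn
  obtain ⟨i, hi⟩ := hk
  have hn4 : 3 ^ n % 4 = 3 := by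
    subst hj
    rw [pow_succ, pow_mul, Nat.mul_mod, Nat.pow_mod]
    norm_num
  have hk4 : 3 ^ k % 4 = 1 := by
    subst hi
    rw [← two_mul, pow_mul, Nat.pow_mod]
    norm_num
  set m : ℕ := (3 ^ n - 1) / 2 with hm
  have h2d₁ : 2 * d₁ = 3 ^ n + 1 := by omega
  have h2d₂ : 2 * d₂ = 3 ^ k + 1 := by omega
  have hd₂e : d₂ = e₂ + 1 := by omega
  have h2e₂ : 3 ^ k = 2 * e₂ + 1 := by omega
  have hd₁m : d₁ = m + 1 := by omega
  have hmm : m + m = 3 ^ n - 1 := by omega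
  have hd₁even : Even d₁ := by rw [Nat.even_iff]; omega
  have hd₂odd : Odd d₂ := by rw [Nat.odd_iff]; omega
  -- characteristic 3
  have h3 : (3 : F) = 0 := by
    have h0 : ((3 ^ n : ℕ) : F) = 0 := by rw [← hF]; exact Nat.cast_card_eq_zero F
    push_cast at h0
    have hn0 : n ≠ 0 := by omega
    exact pow_eq_zero_iff hn0 |>.mp h0
  haveI : Fact (Nat.Prime 3) := ⟨Nat.prime_three⟩
  haveI hchar : CharP F 3 := by
    have hdvd : ringChar F ∣ 3 := ringChar.dvd (by exact_mod_cast h3)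
    rcases (Nat.prime_three).eq_one_or_self_of_dvd _ hdvd with h | h
    · exact absurd h (CharP.char_ne_one F (ringChar F))
    · rw [← h]; exact ringChar.charP F
  -- field basics
  have hxq : x ^ (3 ^ n) = x := by have := FiniteField.pow_card x; rwa [hF] at this
  have hxm1 : x ^ (3 ^ n - 1) = 1 := by
    have := FiniteField.pow_card_sub_one_eq_one x hx; rwa [hF] at this
  have hab : x ^ e₂ * x⁻¹ ^ e₂ = 1 := by
    rw [← mul_pow, mul_inv_cancel₀ hx, one_pow]
  have hxx : x * x⁻¹ = 1 := mul_inv_cancel₀ hx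
  have hS : x ^ e₂ + x⁻¹ ^ e₂ ≠ 0 := by
    intro h
    have hsq : IsSquare (-1 : F) := ⟨x ^ e₂, by linear_combination -(x ^ e₂ * h) + hab⟩
    rw [FiniteField.isSquare_neg_one_iff, hF] at hsq
    exact hsq hn4
  -- the two base identities
  have hyp : x + x⁻¹ + 2 = (x + 1) ^ 2 * x⁻¹ := by field_simp; ring
  have hym : x + x⁻¹ - 2 = (x - 1) ^ 2 * x⁻¹ := by field_simp; ring
  have hN : (x + x⁻¹ + 2) ^ d₁ - (x + x⁻¹ - 2) ^ d₁ = x * x⁻¹ ^ d₁ := by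
    rw [hyp, hym, mul_pow, mul_pow, ← pow_mul, ← pow_mul, h2d₁,
      pow_succ, pow_succ, add_pow_char_pow, sub_pow_char_pow, hxq, one_pow]
    linear_combination (x * x⁻¹ ^ d₁) * h3
  have hD : (x + x⁻¹ + 2) ^ d₂ - (x + x⁻¹ - 2) ^ d₂ = -(x ^ e₂ + x⁻¹ ^ e₂) := by
    rw [hyp, hym, mul_pow, mul_pow, ← pow_mul, ← pow_mul, h2d₂,
      pow_succ, pow_succ, add_pow_char_pow, sub_pow_char_pow, one_pow, h2e₂,
      hd₂e, pow_succ, pow_succ x⁻¹, pow_mul, pow_two, mul_pow]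
    -- now everything in terms of x^e₂, x⁻¹^e₂, x, x⁻¹
    linear_combination (2 * (x ^ e₂ * x ^ e₂) * x⁻¹ ^ e₂ + 2 * x⁻¹ ^ e₂) * hxx
      + 2 * x ^ e₂ * hab + (x ^ e₂ + x⁻¹ ^ e₂) * h3
  -- epsilon
  have hε2 : x ^ m * x ^ m = 1 := by rw [← pow_add, hmm, hxm1]
  have hε : x ^ m = 1 ∨ x ^ m = -1 := mul_self_eq_one_iff.mp hε2
  have hεinv : (x ^ m)⁻¹ = x ^ m := inv_eq_of_mul_eq_one_right hε2
  have hεd₂ : (x ^ m) ^ d₂ = x ^ m := by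
    rcases hε with h | h
    · rw [h, one_pow]
    · rw [h, hd₂odd.neg_one_pow]
  -- f₄ value
  have hNb : x * x⁻¹ ^ d₁ = x⁻¹ ^ m := by
    rw [hd₁m, pow_succ]
    linear_combination x⁻¹ ^ m * hxx
  have hNpow : (x * x⁻¹ ^ d₁) ^ d₂ = x ^ m := by
    rw [hNb, inv_pow, inv_pow, hεd₂, hεinv]
  have hval : f₄ (x + x⁻¹) = x ^ m * ((x ^ e₂ + x⁻¹ ^ e₂) ^ d₁)⁻¹ := by
    rw [hf₄, hN, hD, hd₁even.neg_pow, hNpow, div_eq_mul_inv]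
  have hrhs : (x / (x ^ e₂ + x⁻¹ ^ e₂)) ^ m * (x ^ e₂ + x⁻¹ ^ e₂)⁻¹
      = x ^ m * ((x ^ e₂ + x⁻¹ ^ e₂) ^ d₁)⁻¹ := by
    rw [div_pow, hd₁m, pow_succ, mul_inv, div_eq_mul_inv, mul_assoc]
  refine ⟨by rw [hval, hrhs], ?_, ?_⟩
  · rw [hval]
    have hεne : x ^ m ≠ 0 := pow_ne_zero _ hx
    exact mul_ne_zero hεne (inv_ne_zero (pow_ne_zero _ hS))
  · have hw : x / (x ^ e₂ + x⁻¹ ^ e₂) ≠ 0 := div_ne_zero hx hS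
    have hw1 : (x / (x ^ e₂ + x⁻¹ ^ e₂)) ^ (3 ^ n - 1) = 1 := by
      have := FiniteField.pow_card_sub_one_eq_one _ hw; rwa [hF] at this
    exact mul_self_eq_one_iff.mp (by rw [← pow_add, hmm, hw1])
end

section
/- Let F be the finite field of order q=3^n with n odd, let k be an even nonnegative integer with gcd(n,k)=1, let d₁=(3^n+1)/2, d₂=(3^k+1)/2, and let f₄ : F → F be f₄(x) = ((x+2)^{d₁}−(x−2)^{d₁})^{d₂} / ((x+2)^{d₂}−(x−2)^{d₂})^{d₁}. For a ∈ F×, the set {b ∈ F× : f₄(b+b^{-1}) = f₄(a+a^{-1})} is exactly {a, 1/a}. -/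
private lemma cube_inj {F : Type*} [Field F] (h3 : (3:F) = 0) {x y : F} (h : x^3 = y^3) :
    x = y := by
  have h0 : (x - y)^3 = 0 := by linear_combination h - x*y*(x-y)*h3
  have h1 : x - y = 0 := pow_eq_zero_iff (by norm_num : (3:ℕ) ≠ 0) |>.mp h0
  exact sub_eq_zero.mp h1

private lemma pow_pow3_inj {F : Type*} [Field F] (h3 : (3:F) = 0) (t : ℕ) {x y : F}
    (h : x ^ 3 ^ t = y ^ 3 ^ t) : x = y := by
  induction t with
  | zero => simpa using h
  | succ t ih =>
    apply ih
    apply cube_inj h3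
    rw [← pow_mul, ← pow_mul, ← pow_succ]
    exact h

private lemma frob_gcd_fix {F : Type*} [Field F] (h3 : (3:F) = 0) (m n : ℕ) :
    ∀ r : F, r ^ 3 ^ m = r → r ^ 3 ^ n = r → r ^ 3 ^ Nat.gcd m n = r := by
  induction m, n using Nat.gcd.induction with
  | H0 n => intro r h1 h2; simpa using h2
  | H1 m n hm ih =>
    intro r h1 h2
    rw [Nat.gcd_rec]
    refine ih r ?_ h1
    have hmul : ∀ j : ℕ, r ^ 3 ^ (m * j) = r := by
      intro j
      induction j with
      | zero => simp
      | succ j ihj =>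
        have hstep : m * (j+1) = m * j + m := by ring
        rw [hstep, pow_add, pow_mul, ihj]
        exact h1
    have key : (r ^ 3 ^ (n % m)) ^ 3 ^ (m * (n / m)) = r ^ 3 ^ (m * (n / m)) := by
      rw [hmul (n / m), ← pow_mul, ← pow_add, Nat.mod_add_div]
      exact h2
    exact pow_pow3_inj h3 _ key

theorem stmt11 (n k : ℕ) (hn : Odd n) (hk : Even k) (hgcd : Nat.gcd n k = 1)
    (F : Type*) [Field F] [Fintype F] (hF : Fintype.card F = 3 ^ n)
    (d₁ d₂ : ℕ) (hd₁ : d₁ = (3 ^ n + 1) / 2) (hd₂ : d₂ = (3 ^ k + 1) / 2)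
    (f₄ : F → F)
    (hf₄ : ∀ x : F,
      f₄ x = ((x + 2) ^ d₁ - (x - 2) ^ d₁) ^ d₂ / ((x + 2) ^ d₂ - (x - 2) ^ d₂) ^ d₁)
    (a : F) (ha : a ≠ 0) :
    {b : F | b ≠ 0 ∧ f₄ (b + b⁻¹) = f₄ (a + a⁻¹)} = {a, a⁻¹} := by
  classical
  -- numerical facts
  obtain ⟨j, hj⟩ := hn
  obtain ⟨i, hi⟩ := hk
  have hq4 : 3 ^ n % 4 = 3 := by
    rw [hj, pow_succ, pow_mul, Nat.mul_mod, Nat.pow_mod]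
    norm_num
  have h3k4 : 3 ^ k % 4 = 1 := by
    rw [hi, ← two_mul, pow_mul, Nat.pow_mod]
    norm_num
  have h3n3 : 3 ≤ 3 ^ n := by
    calc (3:ℕ) = 3 ^ 1 := (pow_one 3).symm
    _ ≤ 3 ^ n := Nat.pow_le_pow_right (by norm_num) (by omega)
  have h3k1 : 1 ≤ 3 ^ k := Nat.one_le_pow _ _ (by norm_num)
  obtain ⟨M, e, hq1, hq2, h3k, hd2e, hMd1, h2m, hme2, hd1ev⟩ :
      ∃ M e, 2*d₁ = 3^n+1 ∧ 2*d₂ = 3^k+1 ∧ 3^k = 2*e+1 ∧ d₂ = e+1 ∧ d₁ = M+2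
        ∧ 2*(M+1) = 3^n - 1 ∧ (M+1+e) % 2 = 1 ∧ d₁ % 2 = 0 := by
    refine ⟨(3^n-1)/2 - 1, (3^k-1)/2, ?_, ?_, ?_, ?_, ?_, ?_, ?_, ?_⟩ <;> omega
  have hd1even : Even d₁ := Nat.even_iff.mpr hd1ev
  have hmeodd : Odd (M+1+e) := Nat.odd_iff.mpr hme2
  -- characteristic 3
  have hchar : CharP F 3 := by
    obtain ⟨p, hpchar⟩ := CharP.exists F
    haveI := hpchar
    obtain ⟨w, hpp, hcardp⟩ := FiniteField.card F p
    rw [hF] at hcardp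
    have hdvd : p ∣ 3 ^ n := hcardp ▸ dvd_pow_self p w.ne_zero
    have hp3 : p = 3 :=
      (Nat.prime_dvd_prime_iff_eq hpp (by norm_num)).mp (hpp.dvd_of_dvd_pow hdvd)
    exact hp3 ▸ hpchar
  haveI := hchar
  haveI : Fact (Nat.Prime 3) := ⟨by norm_num⟩
  have h3 : (3:F) = 0 := by exact_mod_cast CharP.cast_eq_zero F 3
  have h2 : (2:F) = -1 := by linear_combination h3
  -- field facts
  have hcard : ∀ x : F, x ^ 3 ^ n = x := by
    intro x; rw [← hF]; exact FiniteField.pow_card x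
  have hunit : ∀ x : F, x ≠ 0 → x ^ (2*(M+1)) = 1 := by
    intro x hx; rw [h2m, ← hF]; exact FiniteField.pow_card_sub_one_eq_one x hx
  have hneg1 : ¬ IsSquare (-1 : F) := by
    rw [FiniteField.isSquare_neg_one_iff, hF, hq4]
    simp
  have hTne : ∀ c : F, c ≠ 0 → c ^ (2*e) + 1 ≠ 0 := by
    intro c hc h
    apply hneg1
    refine ⟨c ^ e, ?_⟩
    rw [← pow_add]
    have : e + e = 2 * e := by ring
    rw [this]
    linear_combination -h
  set G : F → F := fun c => c ^ (M+1+e) * (c ^ (2*e) + 1) ^ M with hG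
  -- Lemma A : value of f₄ on b + b⁻¹
  have hA : ∀ c : F, c ≠ 0 → f₄ (c + c⁻¹) = G c := by
    intro c hc
    have hT : c ^ (2*e) + 1 ≠ 0 := hTne c hc
    have hc1 : c + c⁻¹ + 2 = (c+1)^2 * c⁻¹ := by field_simp; ring
    have hc2 : c + c⁻¹ - 2 = (c-1)^2 * c⁻¹ := by field_simp; ring
    have hN : (c + c⁻¹ + 2) ^ d₁ - (c + c⁻¹ - 2) ^ d₁ = c * (c ^ d₁)⁻¹ := by
      rw [hc1, hc2, mul_pow, mul_pow, inv_pow, ← pow_mul, ← pow_mul, ← sub_mul]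
      congr 1
      rw [hq1, pow_succ, pow_succ, hcard, hcard]
      linear_combination c * h3
    have hD1 : (c + c⁻¹ + 2) ^ d₂ - (c + c⁻¹ - 2) ^ d₂
        = -(c * (c^(2*e) + 1)) * (c ^ d₂)⁻¹ := by
      rw [hc1, hc2, mul_pow, mul_pow, inv_pow, ← pow_mul, ← pow_mul, ← sub_mul, hq2]
      congr 1
      rw [pow_succ, pow_succ, add_pow_char_pow, sub_pow_char_pow, one_pow, h3k, pow_succ]
      linear_combination (c^(2*e)*c + c) * h3
    rw [hf₄, hN, hD1]
    have hnum : (c * (c ^ d₁)⁻¹) ^ d₂ = c ^ d₂ * (c ^ (d₁ * d₂))⁻¹ := by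
      rw [mul_pow, inv_pow, ← pow_mul]
    have hden : (-(c * (c^(2*e)+1)) * (c ^ d₂)⁻¹) ^ d₁
        = c ^ d₁ * (c^(2*e)+1) ^ d₁ * (c ^ (d₂ * d₁))⁻¹ := by
      rw [mul_pow, hd1even.neg_pow, mul_pow, inv_pow, ← pow_mul]
    have hden0 : c ^ d₁ * (c^(2*e)+1) ^ d₁ * (c ^ (d₂ * d₁))⁻¹ ≠ 0 :=
      mul_ne_zero (mul_ne_zero (pow_ne_zero _ hc) (pow_ne_zero _ hT))
        (inv_ne_zero (pow_ne_zero _ hc))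
    rw [hnum, hden, div_eq_iff hden0]
    have hkey : G c * (c ^ d₁ * (c^(2*e)+1) ^ d₁) = c ^ d₂ := by
      simp only [hG]
      have h1 : (c^(2*e)+1) ^ M * (c^(2*e)+1) ^ d₁ = 1 := by
        rw [← pow_add]
        have hx : M + d₁ = 2*(M+1) := by omega
        rw [hx]; exact hunit _ hT
      have h2' : c ^ (M+1+e) * c ^ d₁ = c ^ d₂ := by
        rw [← pow_add]
        have hx : M+1+e+d₁ = 2*(M+1) + d₂ := by omega
        rw [hx, pow_add, hunit _ hc, one_mul]
      calc c ^ (M+1+e) * (c^(2*e)+1) ^ M * (c ^ d₁ * (c^(2*e)+1) ^ d₁)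
          = (c ^ (M+1+e) * c ^ d₁) * ((c^(2*e)+1) ^ M * (c^(2*e)+1) ^ d₁) := by ring
        _ = c ^ d₂ := by rw [h1, h2', mul_one]
    calc c ^ d₂ * (c ^ (d₁ * d₂))⁻¹
        = (G c * (c ^ d₁ * (c^(2*e)+1) ^ d₁)) * (c ^ (d₁ * d₂))⁻¹ := by rw [hkey]
      _ = G c * (c ^ d₁ * (c^(2*e)+1) ^ d₁ * (c ^ (d₂ * d₁))⁻¹) := by
          rw [Nat.mul_comm d₁ d₂]; ring
  -- Lemma B : G never vanishes on nonzero elements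
  have hB : ∀ c : F, c ≠ 0 → G c ≠ 0 := by
    intro c hc
    simp only [hG]
    exact mul_ne_zero (pow_ne_zero _ hc) (pow_ne_zero _ (hTne c hc))
  -- Lemma D : G is odd
  have hD' : ∀ c : F, G (-c) = - G c := by
    intro c
    simp only [hG]
    have hsq : (-c) ^ (2*e) = c ^ (2*e) := by rw [pow_mul, pow_mul, neg_sq]
    rw [hmeodd.neg_pow, hsq, neg_mul]
  -- Lemma C : G is invariant under inversion
  have hC : ∀ c : F, c ≠ 0 → G c⁻¹ = G c := by
    intro c hc
    have hT := hTne c hc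
    have hX : c ^ (M+1+e) * (c^(2*e)) ^ M ≠ 0 :=
      mul_ne_zero (pow_ne_zero _ hc) (pow_ne_zero _ (pow_ne_zero _ hc))
    apply mul_right_cancel₀ hX
    simp only [hG]
    have l1 : (c⁻¹) ^ (M+1+e) * c ^ (M+1+e) = 1 := by
      rw [← mul_pow, inv_mul_cancel₀ hc, one_pow]
    have l2 : ((c⁻¹)^(2*e)+1) ^ M * (c^(2*e)) ^ M = (c^(2*e)+1) ^ M := by
      rw [← mul_pow]
      congr 1
      field_simp
      rw [add_mul, ← mul_pow, one_div, inv_mul_cancel₀ hc, one_pow]; ring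
    have l4 : c ^ (2*(M+1+e)) * (c^(2*e)) ^ M = 1 := by
      rw [← pow_mul, ← pow_add]
      have hx : 2*(M+1+e) + 2*e*M = 2*(M+1)*(e+1) := by ring
      rw [hx, pow_mul, hunit _ hc, one_pow]
    calc (c⁻¹)^(M+1+e) * ((c⁻¹)^(2*e)+1)^M * (c^(M+1+e) * (c^(2*e))^M)
        = ((c⁻¹)^(M+1+e) * c^(M+1+e)) * (((c⁻¹)^(2*e)+1)^M * (c^(2*e))^M) := by ring
      _ = (c^(2*e)+1)^M := by rw [l1, l2, one_mul]
      _ = (c^(2*(M+1+e)) * (c^(2*e))^M) * (c^(2*e)+1)^M := by rw [l4, one_mul]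
      _ = c^(M+1+e) * (c^(2*e)+1)^M * (c^(M+1+e) * (c^(2*e))^M) := by
          rw [two_mul, pow_add]; ring
  -- square of G
  have hGsq : ∀ c : F, c ≠ 0 → (G c)^2 * (c^(2*e)+1)^2 = c^(2*e) := by
    intro c hc
    have hT := hTne c hc
    simp only [hG]
    rw [mul_pow, ← pow_mul, ← pow_mul, mul_assoc, ← pow_add]
    have e1 : (M+1+e)*2 = 2*(M+1) + 2*e := by ring
    have e2 : M*2+2 = 2*(M+1) := by ring
    rw [e1, e2, pow_add, hunit _ hc, hunit _ hT, one_mul, mul_one]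
  have h2ne : (2:F) ≠ 0 := by
    rw [h2]; exact neg_ne_zero.mpr one_ne_zero
  -- main argument
  ext b
  simp only [Set.mem_setOf_eq, Set.mem_insert_iff, Set.mem_singleton_iff]
  constructor
  · rintro ⟨hb, hfb⟩
    rw [hA b hb, hA a ha] at hfb
    have hGa0 : G a ≠ 0 := hB a ha
    have hsq : b^(2*e) * (a^(2*e)+1)^2 = a^(2*e) * (b^(2*e)+1)^2 := by
      linear_combination (b^(2*e)+1)^2 * hGsq a ha - (a^(2*e)+1)^2 * hGsq b hb
        + (a^(2*e)+1)^2*(b^(2*e)+1)^2*(G b + G a) * hfb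
    have hfac : (b^(2*e) - a^(2*e)) * (1 - b^(2*e) * a^(2*e)) = 0 := by
      linear_combination hsq
    rcases mul_eq_zero.mp hfac with hcase | hcase
    · -- b^(2e) = a^(2e) : b = a or b = -a
      have hr2e : (b * a⁻¹) ^ (2*e) = 1 := by
        rw [mul_pow, sub_eq_zero.mp hcase, inv_pow, mul_inv_cancel₀ (pow_ne_zero _ ha)]
      have hr3 : (b*a⁻¹) ^ (3:ℕ) = b*a⁻¹ := by
        have g1 : (b*a⁻¹) ^ 3 ^ k = b*a⁻¹ := by
          rw [h3k, pow_succ, hr2e, one_mul]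
        have g2 : (b*a⁻¹) ^ 3 ^ n = b*a⁻¹ := hcard _
        have hfix := frob_gcd_fix h3 k n (b*a⁻¹) g1 g2
        rwa [Nat.gcd_comm k n, hgcd, pow_one] at hfix
      have hrne : b * a⁻¹ ≠ 0 := mul_ne_zero hb (inv_ne_zero ha)
      have hsplit : (b*a⁻¹ - 1) * (b*a⁻¹ + 1) * (b*a⁻¹) = 0 := by
        linear_combination hr3
      rcases mul_eq_zero.mp hsplit with hx | hx
      · rcases mul_eq_zero.mp hx with hy | hy
        · left
          have hba : b * a⁻¹ = 1 := by linear_combination hy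
          field_simp at hba
          exact hba
        · exfalso
          have hba : b = -a := by
            have h' : b * a⁻¹ = -1 := by linear_combination hy
            field_simp at h'
            linear_combination h'
          rw [hba, hD' a] at hfb
          apply hGa0
          have h0 : (2:F) * G a = 0 := by linear_combination -hfb
          exact (mul_eq_zero.mp h0).resolve_left h2ne
      · exact absurd hx hrne
    · -- b^(2e) * a^(2e) = 1 : b = a⁻¹ or b = -a⁻¹
      have hr2e : (b * a) ^ (2*e) = 1 := by
        rw [mul_pow]; linear_combination -hcase
      have hr3 : (b*a) ^ (3:ℕ) = b*a := by
        have g1 : (b*a) ^ 3 ^ k = b*a := by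
          rw [h3k, pow_succ, hr2e, one_mul]
        have g2 : (b*a) ^ 3 ^ n = b*a := hcard _
        have hfix := frob_gcd_fix h3 k n (b*a) g1 g2
        rwa [Nat.gcd_comm k n, hgcd, pow_one] at hfix
      have hrne : b * a ≠ 0 := mul_ne_zero hb ha
      have hsplit : (b*a - 1) * (b*a + 1) * (b*a) = 0 := by
        linear_combination hr3
      rcases mul_eq_zero.mp hsplit with hx | hx
      · rcases mul_eq_zero.mp hx with hy | hy
        · right
          have hba : b * a = 1 := by linear_combination hy
          exact eq_inv_of_mul_eq_one_left hba
        · exfalso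
          have hba : b = -a⁻¹ := by
            have h' : b * a = -1 := by linear_combination hy
            field_simp
            linear_combination h'
          rw [hba, hD' a⁻¹, hC a ha] at hfb
          apply hGa0
          have h0 : (2:F) * G a = 0 := by linear_combination -hfb
          exact (mul_eq_zero.mp h0).resolve_left h2ne
      · exact absurd hx hrne
  · rintro (rfl | rfl)
    · exact ⟨ha, rfl⟩
    · refine ⟨inv_ne_zero ha, ?_⟩
      rw [hA _ (inv_ne_zero ha), hA a ha, hC a ha]
end

section
/- Let F be the finite field of order q=3^n with n odd, let k be an even nonnegative integer with gcd(n,k)=1, let d₁=(3^n+1)/2, d₂=(3^k+1)/2, and let f₄ : F → F be f₄(x) = ((x+2)^{d₁}−(x−2)^{d₁})^{d₂} / ((x+2)^{d₂}−(x−2)^{d₂})^{d₁}. Let η be the extended quadratic character of F (η(0)=0, nonzero squares to 1, nonsquares to −1). Then for every c ∈ F, the cardinality of {x ∈ F× : f₄(x+x^{-1}) = c} equals 0 if c=0 and equals 1+η(1−c²) otherwise. -/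
theorem stmt12 (n k : ℕ) (hn : Odd n) (hk : Even k) (hgcd : Nat.gcd n k = 1)
    (F : Type*) [Field F] [Fintype F] (hF : Fintype.card F = 3 ^ n)
    (d₁ d₂ : ℕ) (hd₁ : d₁ = (3 ^ n + 1) / 2) (hd₂ : d₂ = (3 ^ k + 1) / 2)
    (f₄ : F → F)
    (hf₄ : ∀ x : F,
      f₄ x = ((x + 2) ^ d₁ - (x - 2) ^ d₁) ^ d₂ / ((x + 2) ^ d₂ - (x - 2) ^ d₂) ^ d₁)
    (η : F → ℤ) (hη0 : η 0 = 0)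
    (hη : ∀ c : F, c ≠ 0 → (IsSquare c → η c = 1) ∧ (¬ IsSquare c → η c = -1))
    (c : F) :
    (c = 0 → Nat.card {x : F // x ≠ 0 ∧ f₄ (x + x⁻¹) = c} = 0) ∧
    (c ≠ 0 → (Nat.card {x : F // x ≠ 0 ∧ f₄ (x + x⁻¹) = c} : ℤ) = 1 + η (1 - c ^ 2)) := by
  classical
  have hn0 : n ≠ 0 := by rintro rfl; simp [Nat.odd_iff] at hn
  -- mod facts
  have h3n4 : 3 ^ n % 4 = 3 := by
    obtain ⟨j, hj⟩ := hn
    have hj' : n = 2 * j + 1 := by omega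
    subst hj'
    rw [pow_succ, pow_mul, Nat.mul_mod, Nat.pow_mod]
    norm_num
  have h3k8 : 3 ^ k % 8 = 1 := by
    obtain ⟨j, hj⟩ := hk
    have hj' : k = 2 * j := by omega
    subst hj'
    rw [pow_mul, Nat.pow_mod]
    norm_num
  set m : ℕ := (3 ^ n - 1) / 2 with hm_def
  set σ : ℕ := (3 ^ k - 1) / 2 with hσ_def
  have h2d₁' : 2 * d₁ = 3 ^ n + 1 := by omega
  have hd₁m' : d₁ = m + 1 := by omega
  have h2m' : 2 * m = 3 ^ n - 1 := by omega
  have hmm' : m + m = 3 ^ n - 1 := by omega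
  have hd₁even : Even d₁ := by rw [Nat.even_iff]; omega
  have hmodd : Odd m := by rw [Nat.odd_iff]; omega
  have h2d₂' : 2 * d₂ = 3 ^ k + 1 := by omega
  have hd₂σ' : d₂ = σ + 1 := by omega
  have hk3' : (3:ℕ) ^ k = σ * 2 + 1 := by omega
  have hσeven : Even σ := by rw [Nat.even_iff]; omega
  -- gcd fact
  have hgcdσ : Nat.gcd σ (3 ^ n - 1) = 2 := by
    have hg2 : Nat.gcd (3 ^ k - 1) (3 ^ n - 1) ∣ 2 := by
      set g := Nat.gcd (3 ^ k - 1) (3 ^ n - 1) with hg_def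
      have hgpos : 0 < g := Nat.gcd_pos_of_pos_right _ (by omega)
      haveI : NeZero g := ⟨hgpos.ne'⟩
      have h1 : ((3 : ZMod g)) ^ k = 1 := by
        have : ((3 ^ k - 1 : ℕ) : ZMod g) = 0 :=
          (ZMod.natCast_eq_zero_iff _ _).mpr (Nat.gcd_dvd_left _ _)
        have h3k : ((3 ^ k : ℕ) : ZMod g) = ((1 : ℕ) : ZMod g) := by
          have hle : (1:ℕ) ≤ 3 ^ k := Nat.one_le_pow _ _ (by norm_num)
          rw [← Nat.sub_add_cancel hle, Nat.cast_add, this, zero_add]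
        push_cast at h3k
        exact h3k
      have h2 : ((3 : ZMod g)) ^ n = 1 := by
        have : ((3 ^ n - 1 : ℕ) : ZMod g) = 0 :=
          (ZMod.natCast_eq_zero_iff _ _).mpr (Nat.gcd_dvd_right _ _)
        have h3k : ((3 ^ n : ℕ) : ZMod g) = ((1 : ℕ) : ZMod g) := by
          have hle : (1:ℕ) ≤ 3 ^ n := Nat.one_le_pow _ _ (by norm_num)
          rw [← Nat.sub_add_cancel hle, Nat.cast_add, this, zero_add]
        push_cast at h3k
        exact h3k
      have hord : orderOf (3 : ZMod g) ∣ Nat.gcd n k :=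
        Nat.dvd_gcd (orderOf_dvd_of_pow_eq_one h2) (orderOf_dvd_of_pow_eq_one h1)
      rw [hgcd] at hord
      have h31 : (3 : ZMod g) = 1 := orderOf_eq_one_iff.mp (Nat.dvd_one.mp hord)
      have : ((2 : ℕ) : ZMod g) = 0 := by
        push_cast
        rw [show (2 : ZMod g) = 3 - 1 by ring, h31, sub_self]
      exact (ZMod.natCast_eq_zero_iff _ _).mp this
    have hσdvd : σ ∣ 3 ^ k - 1 := ⟨2, by omega⟩
    have hd : Nat.gcd σ (3 ^ n - 1) ∣ 2 :=
      dvd_trans (Nat.dvd_gcd (dvd_trans (Nat.gcd_dvd_left _ _) hσdvd) (Nat.gcd_dvd_right _ _)) hg2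
    have h2d : 2 ∣ Nat.gcd σ (3 ^ n - 1) :=
      Nat.dvd_gcd (by omega) (by omega)
    exact Nat.dvd_antisymm hd h2d
  -- characteristic
  have h3F : (3 : F) = 0 := by
    have hcast : ((3 ^ n : ℕ) : F) = 0 := by
      rw [← hF]; exact FiniteField.cast_card_eq_zero F
    push_cast at hcast
    exact pow_eq_zero_iff hn0 |>.mp hcast
  haveI hp3 : Fact (Nat.Prime 3) := ⟨by norm_num⟩
  have hring : ringChar F = 3 := by
    have hdvd : ringChar F ∣ 3 := (CharP.cast_eq_zero_iff F (ringChar F) 3).mp (by exact_mod_cast h3F)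
    rcases (Nat.Prime.eq_one_or_self_of_dvd (by norm_num) _ hdvd) with h1 | h1
    · exact absurd h1 CharP.ringChar_ne_one
    · exact h1
  haveI hchar : CharP F 3 := hring ▸ ringChar.charP F
  have hone_ne : (-1 : F) ≠ 1 := by
    intro h
    have : (1 : F) = 0 := by linear_combination h3F + h
    exact one_ne_zero this
  have hring2 : ringChar F ≠ 2 := by rw [hring]; norm_num
  have hcard2 : Fintype.card F / 2 = m := by rw [hF]; omega
  -- basic power facts
  have hpow_card : ∀ a : F, a ^ (3:ℕ) ^ n = a := by
    intro a; rw [← hF]; exact FiniteField.pow_card a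
  have hpow_sub_one : ∀ a : F, a ≠ 0 → a ^ (3 ^ n - 1) = 1 := by
    intro a ha
    have := FiniteField.pow_card_sub_one_eq_one a ha
    rwa [hF] at this
  have hsq1 : ∀ a : F, a ≠ 0 → a ^ m * a ^ m = 1 := by
    intro a ha
    rw [← pow_add, hmm']
    exact hpow_sub_one a ha
  have hpm : ∀ a : F, a ≠ 0 → a ^ m = 1 ∨ a ^ m = -1 :=
    fun a ha => mul_self_eq_one_iff.mp (hsq1 a ha)
  have htm : ∀ x : F, x ≠ 0 → (x ^ σ) ^ m = 1 := by
    intro x hx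
    rw [← pow_mul, mul_comm, pow_mul]
    rcases hpm x hx with h | h
    · rw [h, one_pow]
    · rw [h, hσeven.neg_one_pow]
  have hisq : ∀ a : F, a ≠ 0 → (IsSquare a ↔ a ^ m = 1) := by
    intro a ha
    rw [FiniteField.isSquare_iff hring2 ha, hcard2]
  -- kernel lemma
  have hker : ∀ x y : F, x ≠ 0 → y ≠ 0 → x ^ σ = y ^ σ → x ^ m = y ^ m → x = y := by
    intro x y hx hy hσe hme
    have hw0 : x * y⁻¹ ≠ 0 := mul_ne_zero hx (inv_ne_zero hy)
    have h1 : (x * y⁻¹) ^ σ = 1 := by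
      rw [mul_pow, inv_pow, hσe, mul_inv_cancel₀ (pow_ne_zero _ hy)]
    have h2 : (x * y⁻¹) ^ (3 ^ n - 1) = 1 := hpow_sub_one _ hw0
    have h3 : (x * y⁻¹) ^ 2 = 1 := by
      have hd : orderOf (x * y⁻¹) ∣ 2 := by
        rw [← hgcdσ]
        exact Nat.dvd_gcd (orderOf_dvd_of_pow_eq_one h1) (orderOf_dvd_of_pow_eq_one h2)
      exact orderOf_dvd_iff_pow_eq_one.mp hd
    have h4 : (x * y⁻¹) * (x * y⁻¹) = 1 := by rw [← sq]; exact h3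
    rcases mul_self_eq_one_iff.mp h4 with h | h
    · field_simp at h; exact h
    · exfalso
      have hxy : x = -y := by
        have := congrArg (· * y) h
        simpa [mul_assoc, inv_mul_cancel₀ hy, neg_mul, one_mul] using this
      rw [hxy, hmodd.neg_pow] at hme
      have hym : y ^ m * y ^ m = 1 := hsq1 y hy
      have h0 : y ^ m = 0 := by
        have h2' : (2 : F) * y ^ m = 0 := by linear_combination -hme
        have h2neg : (2 : F) = -1 := by linear_combination h3F
        rw [h2neg] at h2'
        simpa using h2'
      rw [h0, mul_zero] at hym
      exact zero_ne_one hym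
  -- main reduction
  have hfrob_add : ∀ a : F, (a + 1) ^ (3:ℕ) ^ k = a ^ (3:ℕ) ^ k + 1 := by
    intro a; rw [add_pow_char_pow, one_pow]
  have hfrob_sub : ∀ a : F, (a - 1) ^ (3:ℕ) ^ k = a ^ (3:ℕ) ^ k - 1 := by
    intro a; rw [sub_pow_char_pow, one_pow]
  have key : ∀ x : F, x ≠ 0 →
      (f₄ (x + x⁻¹) = c ↔
        x ^ σ = c * x ^ m * ((x ^ σ) ^ 2 + 1) ^ m * ((x ^ σ) ^ 2 + 1)) := by
    intro x hx
    have ht0 : x ^ σ ≠ 0 := pow_ne_zero _ hx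
    set t : F := x ^ σ with ht_def
    set u : F := t ^ 2 + 1 with hu_def
    have hxu : x ^ (3:ℕ) ^ k = t ^ 2 * x := by
      rw [hk3', pow_succ, pow_mul, ht_def]
    have hu0 : u ≠ 0 := by
      intro h
      have ht2 : t ^ 2 = -1 := by rw [hu_def] at h; linear_combination h
      have h1 : (t ^ 2) ^ m = 1 := by
        rw [← pow_mul, show 2 * m = 3 ^ n - 1 from h2m']
        exact hpow_sub_one t ht0
      rw [ht2, hmodd.neg_pow, one_pow] at h1
      exact hone_ne h1
    have hyp2 : (x + x⁻¹ + 2) * x = (x + 1) ^ 2 := by field_simp; ring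
    have hym2 : (x + x⁻¹ - 2) * x = (x - 1) ^ 2 := by field_simp; ring
    have hxd₁ : (x : F) ^ d₁ ≠ 0 := pow_ne_zero _ hx
    have hxd₂ : (x : F) ^ d₂ ≠ 0 := pow_ne_zero _ hx
    have hNp : (x + x⁻¹ + 2) ^ d₁ * x ^ d₁ = (x + 1) ^ 2 := by
      rw [← mul_pow, hyp2, ← pow_mul, h2d₁', pow_succ, hpow_card, sq]
    have hNm : (x + x⁻¹ - 2) ^ d₁ * x ^ d₁ = (x - 1) ^ 2 := by
      rw [← mul_pow, hym2, ← pow_mul, h2d₁', pow_succ, hpow_card, sq]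
    have hNdiff : ((x + x⁻¹ + 2) ^ d₁ - (x + x⁻¹ - 2) ^ d₁) * x ^ d₁ = x := by
      rw [sub_mul, hNp, hNm]
      linear_combination x * h3F
    have hN : (x + x⁻¹ + 2) ^ d₁ - (x + x⁻¹ - 2) ^ d₁ = x / x ^ d₁ :=
      (eq_div_iff hxd₁).mpr hNdiff
    have hDp : (x + x⁻¹ + 2) ^ d₂ * x ^ d₂ = (t ^ 2 * x + 1) * (x + 1) := by
      rw [← mul_pow, hyp2, ← pow_mul, h2d₂', pow_succ, hfrob_add, hxu]
    have hDm : (x + x⁻¹ - 2) ^ d₂ * x ^ d₂ = (t ^ 2 * x - 1) * (x - 1) := by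
      rw [← mul_pow, hym2, ← pow_mul, h2d₂', pow_succ, hfrob_sub, hxu]
    have hDdiff : ((x + x⁻¹ + 2) ^ d₂ - (x + x⁻¹ - 2) ^ d₂) * x ^ d₂ = -(x * u) := by
      rw [sub_mul, hDp, hDm, hu_def]
      linear_combination (t ^ 2 * x + x) * h3F
    have hD : (x + x⁻¹ + 2) ^ d₂ - (x + x⁻¹ - 2) ^ d₂ = -(x * u) / x ^ d₂ :=
      (eq_div_iff hxd₂).mpr hDdiff
    have hf : f₄ (x + x⁻¹) = x ^ d₂ / (x * u) ^ d₁ := by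
      rw [hf₄, hN, hD, neg_div, hd₁even.neg_pow, div_pow, div_pow, ← pow_mul, ← pow_mul,
        mul_comm d₂ d₁, div_div_div_cancel_right₀ (pow_ne_zero _ hx)]
    have hxu0 : x * u ≠ 0 := mul_ne_zero hx hu0
    have hWne : (x * u) ^ m * (x * u) ≠ 0 := mul_ne_zero (pow_ne_zero _ hxu0) hxu0
    have hxud₁ : (x * u) ^ d₁ = (x * u) ^ m * (x * u) := by rw [hd₁m', pow_succ]
    have hxd₂' : x ^ d₂ = t * x := by rw [hd₂σ', pow_succ, ht_def]
    rw [hf, hxud₁, div_eq_iff hWne, hxd₂', mul_pow]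
    constructor
    · intro h
      apply mul_right_cancel₀ hx
      linear_combination h
    · intro h
      linear_combination x * h
  -- counting z^2 = a
  have hcount : ∀ a : F, (Nat.card {z : F // z ^ 2 = a} : ℤ) = 1 + η a := by
    intro a
    have hc0 : Nat.card {z : F // z ^ 2 = a} = Set.ncard {z : F | z ^ 2 = a} := by
      rw [← Nat.card_coe_set_eq]; rfl
    rcases eq_or_ne a 0 with rfl | ha
    · have hset : {z : F | z ^ 2 = 0} = {0} := by
        ext z; simp [pow_eq_zero_iff]
      rw [hc0, hset, Set.ncard_singleton, hη0]
      norm_num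
    by_cases hsq : IsSquare a
    · obtain ⟨b, rfl⟩ := hsq
      have hb0 : b ≠ 0 := by rintro rfl; simp at ha
      have hbne : b ≠ -b := by
        intro h
        apply hb0
        have h2' : (2 : F) * b = 0 := by linear_combination h
        have h2neg : (2 : F) = -1 := by linear_combination h3F
        rw [h2neg] at h2'
        simpa using h2'
      have hset : {z : F | z ^ 2 = b * b} = {b, -b} := by
        ext z
        simp only [Set.mem_setOf_eq, Set.mem_insert_iff, Set.mem_singleton_iff]
        constructor
        · intro h
          have h2' : (z - b) * (z + b) = 0 := by linear_combination h
          rcases mul_eq_zero.mp h2' with h' | h'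
          · left; exact sub_eq_zero.mp h'
          · right; exact eq_neg_of_add_eq_zero_left h'
        · rintro (rfl | rfl) <;> ring
      rw [hc0, hset, Set.ncard_pair hbne, (hη (b * b) ha).1 ⟨b, rfl⟩]
      norm_num
    · have hset : {z : F | z ^ 2 = a} = ∅ := by
        ext z
        simp only [Set.mem_setOf_eq, Set.mem_empty_iff_false, iff_false]
        intro h
        exact hsq ⟨z, by rw [← h]; ring⟩
      rw [hc0, hset, Set.ncard_empty, (hη a ha).2 hsq]
      norm_num
  -- well-definedness of the bijection
  have hwd : ∀ x : F, x ≠ 0 → f₄ (x + x⁻¹) = c →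
      (c * (x ^ σ - (x ^ σ)⁻¹)) ^ 2 = 1 - c ^ 2 := by
    intro x hx0 hxf
    have hQ := (key x hx0).mp hxf
    have ht0 : x ^ σ ≠ 0 := pow_ne_zero _ hx0
    set t : F := x ^ σ with ht_def
    have hu0 : (t ^ 2 + 1) ≠ 0 := by
      intro h
      rw [h, mul_zero] at hQ
      exact ht0 hQ
    have hA := hsq1 x hx0
    have hB := hsq1 (t ^ 2 + 1) hu0
    have hT : t ^ 2 = c ^ 2 * (t ^ 2 + 1) ^ 2 := by
      linear_combination (t + c * x ^ m * (t ^ 2 + 1) ^ m * (t ^ 2 + 1)) * hQ +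
        (c ^ 2 * (t ^ 2 + 1) ^ 2 * ((t ^ 2 + 1) ^ m * (t ^ 2 + 1) ^ m)) * hA +
        (c ^ 2 * (t ^ 2 + 1) ^ 2) * hB
    have hh : (t - t⁻¹) * t = t ^ 2 - 1 := by
      field_simp
    apply mul_right_cancel₀ (pow_ne_zero 2 ht0)
    calc (c * (t - t⁻¹)) ^ 2 * t ^ 2 = c ^ 2 * ((t - t⁻¹) * t) ^ 2 := by ring
      _ = c ^ 2 * (t ^ 2 - 1) ^ 2 := by rw [hh]
      _ = (1 - c ^ 2) * t ^ 2 := by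
          linear_combination (-1 : F) * hT + (-(t ^ 2 * c ^ 2)) * h3F
  constructor
  · -- c = 0
    intro hc
    haveI : IsEmpty {x : F // x ≠ 0 ∧ f₄ (x + x⁻¹) = c} := by
      constructor
      rintro ⟨x, hx0, hxf⟩
      have h := (key x hx0).mp hxf
      rw [hc] at h
      simp only [zero_mul, mul_zero] at h
      exact pow_ne_zero σ hx0 h
    exact Nat.card_of_isEmpty
  · -- c ≠ 0
    intro hc
    have hc2 : (c : F) ^ 2 ≠ 0 := pow_ne_zero _ hc
    have hbij : Function.Bijective (fun p : {x : F // x ≠ 0 ∧ f₄ (x + x⁻¹) = c} =>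
        (⟨c * (p.1 ^ σ - (p.1 ^ σ)⁻¹), hwd p.1 p.2.1 p.2.2⟩ :
          {z : F // z ^ 2 = 1 - c ^ 2})) := by
      constructor
      · -- injective
        rintro ⟨x₁, hx₁0, hf₁⟩ ⟨x₂, hx₂0, hf₂⟩ hΦeq
        simp only [Subtype.mk.injEq] at hΦeq
        have hQ₁ := (key x₁ hx₁0).mp hf₁
        have hQ₂ := (key x₂ hx₂0).mp hf₂
        have ht₁0 : x₁ ^ σ ≠ 0 := pow_ne_zero _ hx₁0
        have ht₂0 : x₂ ^ σ ≠ 0 := pow_ne_zero _ hx₂0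
        set t₁ : F := x₁ ^ σ with ht₁_def
        set t₂ : F := x₂ ^ σ with ht₂_def
        set z : F := c * (t₁ - t₁⁻¹) with hz_def
        have hzsq : z ^ 2 = 1 - c ^ 2 := hwd x₁ hx₁0 hf₁
        have hz₂ : z = c * (t₂ - t₂⁻¹) := hΦeq
        have hu₁0 : (t₁ ^ 2 + 1) ≠ 0 := by
          intro h; rw [h, mul_zero] at hQ₁; exact ht₁0 hQ₁
        have hu₂0 : (t₂ ^ 2 + 1) ≠ 0 := by
          intro h; rw [h, mul_zero] at hQ₂; exact ht₂0 hQ₂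
        have hA₁ := hsq1 x₁ hx₁0
        have hA₂ := hsq1 x₂ hx₂0
        have hB₁ := hsq1 (t₁ ^ 2 + 1) hu₁0
        have hB₂ := hsq1 (t₂ ^ 2 + 1) hu₂0
        set e₁ : F := x₁ ^ m * (t₁ ^ 2 + 1) ^ m with he₁_def
        set e₂ : F := x₂ ^ m * (t₂ ^ 2 + 1) ^ m with he₂_def
        have he₁ : e₁ * e₁ = 1 := by
          rw [he₁_def]
          linear_combination ((t₁ ^ 2 + 1) ^ m * (t₁ ^ 2 + 1) ^ m) * hA₁ + hB₁
        have he₂ : e₂ * e₂ = 1 := by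
          rw [he₂_def]
          linear_combination ((t₂ ^ 2 + 1) ^ m * (t₂ ^ 2 + 1) ^ m) * hA₂ + hB₂
        have hz₁t : z * t₁ = c * (t₁ ^ 2 - 1) := by
          have hh : (t₁ - t₁⁻¹) * t₁ = t₁ ^ 2 - 1 := by field_simp
          rw [hz_def]
          linear_combination c * hh
        have hz₂t : z * t₂ = c * (t₂ ^ 2 - 1) := by
          have hh : (t₂ - t₂⁻¹) * t₂ = t₂ ^ 2 - 1 := by field_simp
          rw [hz₂]
          linear_combination c * hh
        have hQ₁' : t₁ = c * e₁ * (t₁ ^ 2 + 1) := by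
          rw [he₁_def]; linear_combination hQ₁
        have hQ₂' : t₂ = c * e₂ * (t₂ ^ 2 + 1) := by
          rw [he₂_def]; linear_combination hQ₂
        have hlin₁ : c * t₁ = -(e₁ + z) := by
          apply mul_right_cancel₀ ht₁0
          linear_combination hz₁t + e₁ * hQ₁' + (c * (t₁ ^ 2 + 1)) * he₁ + (c * t₁ ^ 2) * h3F
        have hlin₂ : c * t₂ = -(e₂ + z) := by
          apply mul_right_cancel₀ ht₂0
          linear_combination hz₂t + e₂ * hQ₂' + (c * (t₂ ^ 2 + 1)) * he₂ + (c * t₂ ^ 2) * h3F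
        have hsame : e₁ = e₂ → x₁ = x₂ := by
          intro hee
          have ht12 : t₁ = t₂ := by
            apply mul_left_cancel₀ hc
            rw [hlin₁, hlin₂, hee]
          have hbne : (t₁ ^ 2 + 1) ^ m ≠ 0 := by
            intro h; rw [h, zero_mul] at hB₁; exact zero_ne_one hB₁
          have hmm2 : x₁ ^ m = x₂ ^ m := by
            apply mul_right_cancel₀ hbne
            rw [he₁_def, he₂_def, ← ht12] at hee
            exact hee
          exact hker x₁ x₂ hx₁0 hx₂0 (by rw [← ht₁_def, ← ht₂_def, ht12]) hmm2
        have hopp : e₁ = -e₂ → False := by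
          intro hee
          have htt : t₁ * t₂ = -1 := by
            apply mul_left_cancel₀ hc2
            calc c ^ 2 * (t₁ * t₂) = c ^ 2 * (-1) := by
                  linear_combination (c * t₂) * hlin₁ + (-(e₁ + z)) * hlin₂ +
                    (e₂ + z) * hee + (-1 : F) * he₂ + hzsq
              _ = c ^ 2 * (-1) := rfl
          have h₁m : t₁ ^ m = 1 := by rw [ht₁_def]; exact htm x₁ hx₁0
          have h₂m : t₂ ^ m = 1 := by rw [ht₂_def]; exact htm x₂ hx₂0
          have hbad : (-1 : F) ^ m = 1 := by
            rw [← htt, mul_pow, h₁m, h₂m, mul_one]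
          rw [hmodd.neg_pow, one_pow] at hbad
          exact hone_ne hbad
        apply Subtype.ext
        show x₁ = x₂
        rcases mul_self_eq_one_iff.mp he₁ with hv₁ | hv₁ <;>
          rcases mul_self_eq_one_iff.mp he₂ with hv₂ | hv₂
        · exact hsame (hv₁.trans hv₂.symm)
        · exact (hopp (by rw [hv₁, hv₂]; norm_num)).elim
        · exact (hopp (by rw [hv₁, hv₂])).elim
        · exact hsame (hv₁.trans hv₂.symm)
      · -- surjective
        rintro ⟨z, hz⟩
        have hcinv : c⁻¹ ≠ 0 := inv_ne_zero hc
        set tp : F := -(1 + z) * c⁻¹ with htp_def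
        set tq : F := (1 - z) * c⁻¹ with htq_def
        have hprod : tp * tq = -1 := by
          rw [htp_def, htq_def]
          field_simp
          linear_combination hz
        have htp0 : tp ≠ 0 := by
          intro h; rw [h, zero_mul] at hprod; simp at hprod
        have htq0 : tq ≠ 0 := by
          intro h; rw [h, mul_zero] at hprod; simp at hprod
        have hinvp : tp⁻¹ = -tq := inv_eq_of_mul_eq_one_right (by linear_combination -hprod)
        have hinvq : tq⁻¹ = -tp := inv_eq_of_mul_eq_one_right (by linear_combination -hprod)
        have hsum : tp + tq = z * c⁻¹ := by
          rw [htp_def, htq_def]; linear_combination (-(z * c⁻¹)) * h3F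
        have hdiff : tp - tq = c⁻¹ := by
          rw [htp_def, htq_def]; linear_combination (-(c⁻¹ : F)) * h3F
        obtain ⟨tt, ε, htt0, httm, hε2, hS, hD⟩ :
            ∃ tt ε : F, tt ≠ 0 ∧ tt ^ m = 1 ∧ ε * ε = 1 ∧ tt + tt⁻¹ = ε * c⁻¹ ∧
              tt - tt⁻¹ = z * c⁻¹ := by
          rcases hpm tp htp0 with h | h
          · refine ⟨tp, 1, htp0, h, by norm_num, ?_, ?_⟩
            · rw [hinvp, one_mul]; linear_combination hdiff
            · rw [hinvp]; linear_combination hsum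
          · have hmp : tp ^ m * tq ^ m = (-1 : F) ^ m := by rw [← mul_pow, hprod]
            rw [h, hmodd.neg_pow, one_pow] at hmp
            have hqm : tq ^ m = 1 := by linear_combination -hmp
            refine ⟨tq, -1, htq0, hqm, by norm_num, ?_, ?_⟩
            · rw [hinvq]; linear_combination -hdiff
            · rw [hinvq]; linear_combination hsum
        have hε0 : ε ≠ 0 := by intro h; rw [h, mul_zero] at hε2; simp at hε2
        obtain ⟨s₀, hs₀⟩ := (hisq tt htt0).mpr httm
        have hs₀0 : s₀ ≠ 0 := by rintro rfl; rw [mul_zero] at hs₀; exact htt0 hs₀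
        set A : ℤ := Nat.gcdA σ (3 ^ n - 1) with hA_def
        set B : ℤ := Nat.gcdB σ (3 ^ n - 1) with hB_def
        have hbez : (2 : ℤ) = σ * A + ((3 ^ n - 1 : ℕ) : ℤ) * B := by
          have hgab := Nat.gcd_eq_gcd_ab σ (3 ^ n - 1)
          rw [hgcdσ] at hgab
          exact_mod_cast hgab
        set x₀ : F := s₀ ^ A with hx₀_def
        have hx₀0 : x₀ ≠ 0 := zpow_ne_zero _ hs₀0
        have hs₀q : s₀ ^ (((3 ^ n - 1 : ℕ) : ℤ)) = 1 := by
          rw [zpow_natCast]; exact hpow_sub_one s₀ hs₀0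
        have hx₀σ : x₀ ^ σ = tt := by
          have h1 : x₀ ^ σ = s₀ ^ (A * (σ : ℤ)) := by
            rw [hx₀_def, ← zpow_natCast (s₀ ^ A) σ, ← zpow_mul]
          have hAσ : A * (σ : ℤ) = 2 - ((3 ^ n - 1 : ℕ) : ℤ) * B := by
            linear_combination -hbez
          rw [h1, hAσ, zpow_sub₀ hs₀0, zpow_mul, hs₀q, one_zpow, div_one, zpow_two, ← hs₀]
        set u : F := tt ^ 2 + 1 with hu_def
        have huv : u = ε * c⁻¹ * tt := by
          rw [hu_def]
          calc tt ^ 2 + 1 = (tt + tt⁻¹) * tt := by field_simp [htt0]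
            _ = ε * c⁻¹ * tt := by rw [hS]
        have hu0 : u ≠ 0 := by
          rw [huv]; exact mul_ne_zero (mul_ne_zero hε0 hcinv) htt0
        have hum := hpm u hu0
        have hx₀m := hpm x₀ hx₀0
        have hεum : ε * u ^ m = 1 ∨ ε * u ^ m = -1 := by
          rcases mul_self_eq_one_iff.mp hε2 with h1 | h1 <;> rcases hum with h2 | h2 <;>
            rw [h1, h2] <;> norm_num
        obtain ⟨x, hxne, hxσ, hxm⟩ : ∃ x : F, x ≠ 0 ∧ x ^ σ = tt ∧ x ^ m = ε * u ^ m := by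
          by_cases h : x₀ ^ m = ε * u ^ m
          · exact ⟨x₀, hx₀0, hx₀σ, h⟩
          · refine ⟨-x₀, neg_ne_zero.mpr hx₀0, by rw [hσeven.neg_pow]; exact hx₀σ, ?_⟩
            rcases hx₀m with h1 | h1 <;> rcases hεum with h2 | h2
            · exact absurd (h1.trans h2.symm) h
            · rw [hmodd.neg_pow, h1, h2]
            · rw [hmodd.neg_pow, h1, h2]; norm_num
            · exact absurd (h1.trans h2.symm) h
        have hQx : x ^ σ = c * x ^ m * ((x ^ σ) ^ 2 + 1) ^ m * ((x ^ σ) ^ 2 + 1) := by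
          rw [hxσ, hxm, ← hu_def]
          have h1 : u ^ m * u ^ m = 1 := hsq1 u hu0
          calc tt = c * c⁻¹ * (ε * ε) * (u ^ m * u ^ m) * tt := by
                rw [mul_inv_cancel₀ hc, hε2, h1]; ring
            _ = c * (ε * u ^ m) * u ^ m * (ε * c⁻¹ * tt) := by ring
            _ = c * (ε * u ^ m) * u ^ m * u := by rw [← huv]
        refine ⟨⟨x, hxne, (key x hxne).mpr hQx⟩, ?_⟩
        apply Subtype.ext
        show c * (x ^ σ - (x ^ σ)⁻¹) = z
        rw [hxσ, hD, mul_comm z c⁻¹, ← mul_assoc, mul_inv_cancel₀ hc, one_mul]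
    rw [Nat.card_eq_of_bijective _ hbij]
    exact hcount (1 - c ^ 2)
end

section
/- Let F be the finite field of order q=3^n with n odd, let k be an even nonnegative integer, let d₁=(3^n+1)/2, d₂=(3^k+1)/2, and let f₄ : F → F be f₄(x) = ((x+2)^{d₁}−(x−2)^{d₁})^{d₂} / ((x+2)^{d₂}−(x−2)^{d₂})^{d₁}. Let E be the quadratic extension of F and U_E = {x ∈ E× : x^{3^n} = x^{-1}}. Then for every x ∈ U_E: x^{3^k}+x ≠ 0, the element x+x^{-1} lies in F, and (f₄(x+x^{-1}))² = 1 + ((x^{3^k+1}−1)/(x^{3^k}+x))². -/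
/-- In a finite field extension, any element fixed by `z ↦ z ^ card F` lies in the
image of the base field. -/
lemma aux_fixed_mem {F E : Type*} [Field F] [Fintype F] [Field E] [Fintype E] [Algebra F E]
    (z : E) (hz : z ^ (Fintype.card F) = z) : ∃ y : F, algebraMap F E y = z := by
  classical
  set q := Fintype.card F with hq
  set i := algebraMap F E with hi
  have hinj : Function.Injective i := (algebraMap F E).injective
  set S : Finset E := Finset.univ.image i with hS
  have hScard : S.card = q := by
    rw [hS, Finset.card_image_of_injective _ hinj, Finset.card_univ, hq]
  have hq1 : 1 < q := Fintype.one_lt_card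
  set P : Polynomial E := Polynomial.X ^ q - Polynomial.X with hP
  have hP0 : P ≠ 0 := FiniteField.X_pow_card_sub_X_ne_zero E hq1
  have hdeg : P.natDegree = q := FiniteField.X_pow_card_sub_X_natDegree_eq E hq1
  have hroot : ∀ w : E, w ^ q = w → w ∈ P.roots.toFinset := by
    intro w hw
    rw [Multiset.mem_toFinset, Polynomial.mem_roots hP0]
    simp [hP, Polynomial.IsRoot, hw, sub_eq_zero]
  have hSsub : S ⊆ P.roots.toFinset := by
    intro w hw
    rw [hS, Finset.mem_image] at hw
    obtain ⟨y, -, rfl⟩ := hw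
    apply hroot
    rw [← map_pow, FiniteField.pow_card]
  by_contra hcon
  push_neg at hcon
  have hzS : z ∉ S := by
    intro hmem
    rw [hS, Finset.mem_image] at hmem
    obtain ⟨y, -, hy⟩ := hmem
    exact hcon y hy
  have hsub2 : insert z S ⊆ P.roots.toFinset := by
    intro w hw
    rcases Finset.mem_insert.1 hw with rfl | hw
    · exact hroot w hz
    · exact hSsub hw
  have hcard : (insert z S).card ≤ P.roots.toFinset.card := Finset.card_le_card hsub2
  rw [Finset.card_insert_of_notMem hzS, hScard] at hcard
  have h1 : P.roots.toFinset.card ≤ Multiset.card P.roots := Multiset.toFinset_card_le _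
  have h2 : Multiset.card P.roots ≤ P.natDegree := Polynomial.card_roots' P
  omega

/-- The final purely algebraic identity. -/
lemma aux_field {E : Type*} [Field E] (u v : E) (hu : u ≠ 0) (hv : v ≠ 0)
    (hvu : v + u ≠ 0) :
    (v + v⁻¹) * (u + u⁻¹) / ((v⁻¹ + u⁻¹) * (v + u)) = 1 + ((v * u - 1) / (v + u)) ^ 2 := by
  have hinv : v⁻¹ + u⁻¹ ≠ 0 := by
    have hrw : v⁻¹ + u⁻¹ = (u + v) / (v * u) := by field_simp
    rw [hrw]
    exact div_ne_zero (by rwa [add_comm]) (mul_ne_zero hv hu)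
  rw [div_eq_iff (mul_ne_zero hinv hvu)]
  field_simp
  ring

theorem stmt13 (n k : ℕ) (hn : Odd n) (hk : Even k)
    (F E : Type*) [Field F] [Fintype F] [Field E] [Fintype E] [Algebra F E]
    (hF : Fintype.card F = 3 ^ n) (hE : Fintype.card E = Fintype.card F ^ 2)
    (d₁ d₂ : ℕ) (hd₁ : d₁ = (3 ^ n + 1) / 2) (hd₂ : d₂ = (3 ^ k + 1) / 2)
    (f₄ : F → F)
    (hf₄ : ∀ x : F,
      f₄ x = ((x + 2) ^ d₁ - (x - 2) ^ d₁) ^ d₂ / ((x + 2) ^ d₂ - (x - 2) ^ d₂) ^ d₁)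
    (x : E) (hx : x ≠ 0) (hxU : x ^ (3 ^ n) = x⁻¹) :
    x ^ (3 ^ k) + x ≠ 0 ∧
    ∃ y : F, algebraMap F E y = x + x⁻¹ ∧
      (algebraMap F E (f₄ y)) ^ 2 = 1 + ((x ^ (3 ^ k + 1) - 1) / (x ^ (3 ^ k) + x)) ^ 2 := by
  haveI hp3 : Fact (Nat.Prime 3) := ⟨by norm_num⟩
  -- characteristic of F is 3
  haveI hcharF : CharP F 3 := by
    have h := FiniteField.card F (ringChar F)
    obtain ⟨m, hprime, hcard⟩ := h
    have hdvd : ringChar F ∣ 3 ^ n := by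
      rw [← hF, hcard]
      exact dvd_pow_self _ (by exact_mod_cast m.pos.ne')
    have h3 : ringChar F = 3 :=
      (Nat.prime_dvd_prime_iff_eq hprime (by norm_num)).1 (hprime.dvd_of_dvd_pow hdvd)
    exact h3 ▸ ringChar.charP F
  haveI hcharE : CharP E 3 :=
    charP_of_injective_algebraMap (algebraMap F E).injective 3
  have h3E : (3 : E) = 0 := by exact_mod_cast CharP.cast_eq_zero E 3
  -- basic arithmetic
  have h2d1 : 2 * d₁ = 3 ^ n + 1 := by
    rw [hd₁]
    have hodd : Odd (3 ^ n) := Odd.pow ⟨1, by norm_num⟩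
    obtain ⟨c, hc⟩ := hodd
    omega
  have h2d2 : 2 * d₂ = 3 ^ k + 1 := by
    rw [hd₂]
    have hodd : Odd (3 ^ k) := Odd.pow ⟨1, by norm_num⟩
    obtain ⟨c, hc⟩ := hodd
    omega
  -- 3^n + 1 = 4 * m with m odd
  obtain ⟨t, ht⟩ := hn
  have h8 : (8 : ℕ) ∣ 9 ^ t - 1 := by
    have := Nat.sub_dvd_pow_sub_pow 9 1 t
    simpa using this
  obtain ⟨c, hc⟩ := h8
  have h9t : (9 : ℕ) ^ t = 8 * c + 1 := by
    have h1 : 1 ≤ (9 : ℕ) ^ t := Nat.one_le_pow _ _ (by norm_num)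
    omega
  have h3n : (3 : ℕ) ^ n = 3 * 9 ^ t := by
    rw [ht, pow_succ, pow_mul]
    norm_num
    ring
  have hm4 : 3 ^ n + 1 = 4 * (6 * c + 1) := by rw [h3n, h9t]; ring
  have hmodd : Odd (6 * c + 1) := ⟨3 * c, by ring⟩
  -- 3^k - 1 = 4 * r
  obtain ⟨j, hj⟩ := hk
  have h8k : (8 : ℕ) ∣ 9 ^ j - 1 := by
    have := Nat.sub_dvd_pow_sub_pow 9 1 j
    simpa using this
  obtain ⟨c', hc'⟩ := h8k
  have h9j : (9 : ℕ) ^ j = 8 * c' + 1 := by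
    have h1 : 1 ≤ (9 : ℕ) ^ j := Nat.one_le_pow _ _ (by norm_num)
    omega
  have h3k : (3 : ℕ) ^ k = 9 ^ j := by
    rw [hj, ← two_mul, pow_mul]
    norm_num
  have hr4 : 3 ^ k - 1 = 4 * (2 * c') := by rw [h3k, h9j]; omega
  -- x ^ (3^n + 1) = 1
  have hq1 : x ^ (3 ^ n + 1) = 1 := by
    rw [pow_succ, hxU, inv_mul_cancel₀ hx]
  -- Claim 1 : x ^ 3^k + x ≠ 0
  have claim1 : x ^ (3 ^ k) + x ≠ 0 := by
    intro h
    have hk1 : 1 ≤ 3 ^ k := Nat.one_le_pow _ _ (by norm_num)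
    have hs1 : x ^ (3 ^ k - 1) = -1 := by
      have h1 : x ^ (3 ^ k - 1) * x = (-1) * x := by
        rw [← pow_succ, Nat.sub_add_cancel hk1]
        linear_combination h
      exact mul_right_cancel₀ hx h1
    have hone : ((-1 : E)) ^ (6 * c + 1) = 1 := by
      calc ((-1 : E)) ^ (6 * c + 1) = (x ^ (3 ^ k - 1)) ^ (6 * c + 1) := by rw [hs1]
        _ = (x ^ (3 ^ n + 1)) ^ (2 * c') := by
            rw [← pow_mul, ← pow_mul, hr4, hm4]; ring_nf
        _ = 1 := by rw [hq1, one_pow]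
    rw [hmodd.neg_one_pow] at hone
    have : (1 : E) = 0 := by linear_combination h3E + hone
    exact one_ne_zero this
  refine ⟨claim1, ?_⟩
  -- Claim 2 : x + x⁻¹ is in the base field
  have hfix : (x + x⁻¹) ^ (Fintype.card F) = x + x⁻¹ := by
    rw [hF, add_pow_char_pow, hxU, inv_pow, hxU, inv_inv, add_comm]
  obtain ⟨y, hy⟩ := aux_fixed_mem (x + x⁻¹) hfix
  refine ⟨y, hy, ?_⟩
  -- notation
  set z := x + x⁻¹ with hzdef
  have hfy : algebraMap F E (f₄ y) =
      ((z + 2) ^ d₁ - (z - 2) ^ d₁) ^ d₂ / ((z + 2) ^ d₂ - (z - 2) ^ d₂) ^ d₁ := by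
    rw [hf₄ y, map_div₀]
    simp only [map_pow, map_sub, map_add, map_ofNat, hy]
  have hplus : (z + 2) * x = (x + 1) ^ 2 := by
    rw [hzdef]; field_simp; ring
  have hminus : (z - 2) * x = (x - 1) ^ 2 := by
    rw [hzdef]; field_simp; ring
  -- numerator base identity
  have hA : ((z + 2) ^ d₁ - (z - 2) ^ d₁) * x ^ d₁ = -z := by
    have e1 : (z + 2) ^ d₁ * x ^ d₁ = (x⁻¹ + 1) * (x + 1) := by
      rw [← mul_pow, hplus, ← pow_mul, h2d1, pow_succ,
        add_pow_char_pow, hxU, one_pow]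
    have e2 : (z - 2) ^ d₁ * x ^ d₁ = (x⁻¹ - 1) * (x - 1) := by
      rw [← mul_pow, hminus, ← pow_mul, h2d1, pow_succ,
        sub_pow_char_pow, hxU, one_pow]
    rw [sub_mul, e1, e2, hzdef]
    linear_combination (x + x⁻¹) * h3E
  -- denominator base identity
  have hB : ((z + 2) ^ d₂ - (z - 2) ^ d₂) * x ^ d₂ = -(x ^ (3 ^ k) + x) := by
    have e1 : (z + 2) ^ d₂ * x ^ d₂ = (x ^ (3 ^ k) + 1) * (x + 1) := by
      rw [← mul_pow, hplus, ← pow_mul, h2d2, pow_succ,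
        add_pow_char_pow, one_pow]
    have e2 : (z - 2) ^ d₂ * x ^ d₂ = (x ^ (3 ^ k) - 1) * (x - 1) := by
      rw [← mul_pow, hminus, ← pow_mul, h2d2, pow_succ,
        sub_pow_char_pow, one_pow]
    rw [sub_mul, e1, e2]
    linear_combination (x ^ (3 ^ k) + x) * h3E
  have hxpow1 : x ^ (d₁ * (2 * d₂)) = 1 := by
    rw [show d₁ * (2 * d₂) = (3 ^ n + 1) * d₂ by rw [← h2d1]; ring, pow_mul, hq1, one_pow]
  have hxpow2 : x ^ (d₂ * (2 * d₁)) = 1 := by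
    rw [show d₂ * (2 * d₁) = (3 ^ n + 1) * d₂ by rw [← h2d1]; ring, pow_mul, hq1, one_pow]
  -- squared numerator
  have hA2 : ((z + 2) ^ d₁ - (z - 2) ^ d₁) ^ (2 * d₂) = z ^ (3 ^ k + 1) := by
    have := congrArg (· ^ (2 * d₂)) hA
    simp only [mul_pow, ← pow_mul] at this
    rw [hxpow1, mul_one] at this
    rw [this, (even_two_mul d₂).neg_pow, h2d2]
  -- squared denominator
  have hB2 : ((z + 2) ^ d₂ - (z - 2) ^ d₂) ^ (2 * d₁) =
      ((x ^ (3 ^ k))⁻¹ + x⁻¹) * (x ^ (3 ^ k) + x) := by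
    have := congrArg (· ^ (2 * d₁)) hB
    simp only [mul_pow, ← pow_mul] at this
    rw [hxpow2, mul_one] at this
    rw [this, (even_two_mul d₁).neg_pow, h2d1, pow_succ, add_pow_char_pow,
      ← pow_mul, mul_comm (3 ^ k) (3 ^ n), pow_mul, hxU, inv_pow]
  -- final computation
  have hXs : z ^ (3 ^ k + 1) = (x ^ (3 ^ k) + (x ^ (3 ^ k))⁻¹) * z := by
    rw [pow_succ, hzdef, add_pow_char_pow, inv_pow]
  have hv : x ^ (3 ^ k) ≠ 0 := pow_ne_zero _ hx
  have hinv : (x ^ (3 ^ k))⁻¹ + x⁻¹ ≠ 0 := by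
    have hrw : (x ^ (3 ^ k))⁻¹ + x⁻¹ = (x + x ^ (3 ^ k)) / (x ^ (3 ^ k) * x) := by
      field_simp
    rw [hrw]
    exact div_ne_zero (by rwa [add_comm]) (mul_ne_zero hv hx)
  rw [hfy, div_pow, ← pow_mul, ← pow_mul, mul_comm d₂ 2, mul_comm d₁ 2, hA2, hB2, hXs,
    pow_succ x (3 ^ k), hzdef]
  exact aux_field x (x ^ (3 ^ k)) hx hv claim1
end

section
/- Let F be the finite field of order q=3^n with n odd and let k be an even nonnegative integer. Let E be the quadratic extension of F and U_E = {x ∈ E× : x^{3^n} = x^{-1}}. Then for every x ∈ U_E, the element y = ((x^{3^k+1}−1)/(x^{3^k}+x))² of E lies in F and is not a nonzero square of F (i.e., either y=0 or y is a nonsquare of F). -/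
open Polynomial

lemma aux_div (K : Type*) [Field K] (a x : K) (ha : a ≠ 0) (hx : x ≠ 0) (hd : a + x ≠ 0) :
    ((a * x)⁻¹ - 1) / (a⁻¹ + x⁻¹) = -((a * x - 1) / (a + x)) := by
  have hdi : a⁻¹ + x⁻¹ ≠ 0 := by
    rw [inv_add_inv ha hx]
    exact div_ne_zero hd (mul_ne_zero ha hx)
  have h2 : -((a * x - 1) / (a + x)) = (1 - a * x) / (a + x) := by ring
  rw [h2, div_eq_div_iff hdi hd]
  field_simp
  ring

/-- A Frobenius-fixed element of a finite extension lies in the image of the base field. -/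
lemma fixed_mem_range (F E : Type*) [Field F] [Fintype F] [Field E] [Fintype E] [Algebra F E]
    (t : E) (ht : t ^ (Fintype.card F) = t) : ∃ a : F, algebraMap F E a = t := by
  classical
  set q := Fintype.card F with hq
  have hq1 : 1 < q := Fintype.one_lt_card
  have hp0 : (X ^ q - X : E[X]) ≠ 0 := FiniteField.X_pow_card_sub_X_ne_zero E hq1
  set A : Finset E := Finset.univ.image (algebraMap F E) with hA
  have hAcard : A.card = q := by
    rw [hA, Finset.card_image_of_injective _ (algebraMap F E).injective, Finset.card_univ]
  have hsub : A ⊆ (X ^ q - X : E[X]).roots.toFinset := by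
    intro a ha
    rw [hA, Finset.mem_image] at ha
    obtain ⟨b, -, rfl⟩ := ha
    rw [Multiset.mem_toFinset, mem_roots hp0, IsRoot.def]
    simp only [eval_sub, eval_pow, eval_X]
    rw [← map_pow, FiniteField.pow_card, sub_self]
  have hcardle : (X ^ q - X : E[X]).roots.toFinset.card ≤ q := by
    calc (X ^ q - X : E[X]).roots.toFinset.card ≤ Multiset.card (X ^ q - X : E[X]).roots :=
          Multiset.toFinset_card_le _
      _ ≤ (X ^ q - X : E[X]).natDegree := Polynomial.card_roots' _
      _ = q := FiniteField.X_pow_card_sub_X_natDegree_eq E hq1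
  have heq : A = (X ^ q - X : E[X]).roots.toFinset :=
    Finset.eq_of_subset_of_card_le hsub (hAcard ▸ hcardle)
  have htmem : t ∈ (X ^ q - X : E[X]).roots.toFinset := by
    rw [Multiset.mem_toFinset, mem_roots hp0, IsRoot.def]
    simp [ht]
  rw [← heq, hA, Finset.mem_image] at htmem
  obtain ⟨a, -, ha⟩ := htmem
  exact ⟨a, ha⟩

theorem stmt14 (n k : ℕ) (hn : Odd n) (hk : Even k)
    (F E : Type*) [Field F] [Fintype F] [Field E] [Fintype E] [Algebra F E]
    (hF : Fintype.card F = 3 ^ n) (hE : Fintype.card E = Fintype.card F ^ 2)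
    (x : E) (hx : x ≠ 0) (hxU : x ^ (3 ^ n) = x⁻¹) :
    ∃ y : F, algebraMap F E y = ((x ^ (3 ^ k + 1) - 1) / (x ^ (3 ^ k) + x)) ^ 2 ∧
      (y = 0 ∨ ¬ IsSquare y) := by
  -- characteristic of E is 3
  haveI hchar : CharP E 3 := by
    obtain ⟨m, hp, hcard⟩ := FiniteField.card E (ringChar E)
    have hdvd : ringChar E ∣ 3 := by
      have h1 : ringChar E ∣ 3 ^ (n * 2) := by
        rw [pow_mul, ← hF, ← hE, hcard]
        exact dvd_pow_self _ m.ne_zero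
      exact hp.dvd_of_dvd_pow h1
    have h3 : ringChar E = 3 := (Nat.prime_dvd_prime_iff_eq hp (by norm_num)).mp hdvd
    exact h3 ▸ ringChar.charP E
  haveI : Fact (Nat.Prime 3) := ⟨by norm_num⟩
  have h2ne : (2 : E) ≠ 0 := by
    have h3 : (3 : E) = 0 := by exact_mod_cast CharP.cast_eq_zero E 3
    intro h2
    have : (1 : E) = 0 := by linear_combination h3 - h2
    exact one_ne_zero this
  have hpow : ∀ m : ℕ, (x ^ m) ^ (3 ^ n) = (x ^ m)⁻¹ := by
    intro m
    rw [← pow_mul, mul_comm, pow_mul, hxU, inv_pow]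
  set z : E := (x ^ (3 ^ k + 1) - 1) / (x ^ (3 ^ k) + x) with hz
  -- key: z ^ (3^n) = -z
  have hzq : z ^ (3 ^ n) = -z := by
    by_cases hd : x ^ (3 ^ k) + x = 0
    · rw [hz, hd, div_zero, neg_zero, zero_pow (by positivity)]
    · set a := x ^ (3 ^ k) with ha
      have ha0 : a ≠ 0 := pow_ne_zero _ hx
      have e1 : x ^ (3 ^ k + 1) = a * x := by rw [ha, pow_succ]
      have hxinv : x ^ (3 ^ n) = x⁻¹ := hxU
      have hdi : a⁻¹ + x⁻¹ ≠ 0 := by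
        rw [inv_add_inv ha0 hx]
        exact div_ne_zero hd (mul_ne_zero ha0 hx)
      calc z ^ (3 ^ n)
          = ((x ^ (3 ^ k + 1)) ^ (3 ^ n) - 1) / ((x ^ (3 ^ k)) ^ (3 ^ n) + x ^ (3 ^ n)) := by
            rw [hz, div_pow, sub_pow_char_pow, add_pow_char_pow, one_pow]
        _ = ((a * x)⁻¹ - 1) / (a⁻¹ + x⁻¹) := by
            rw [hpow, hpow, hxinv, e1, ← ha]
        _ = -z := by
            rw [hz, e1]
            exact aux_div E a x ha0 hx hd
  -- z² is Frobenius-fixed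
  have hz2 : (z ^ 2) ^ Fintype.card F = z ^ 2 := by
    rw [hF, ← pow_mul, mul_comm, pow_mul, hzq, neg_sq]
  obtain ⟨y0, hy0⟩ := fixed_mem_range F E (z ^ 2) hz2
  refine ⟨y0, hy0, ?_⟩
  rcases eq_or_ne y0 0 with h0 | h0
  · exact Or.inl h0
  · right
    rintro ⟨b, hb⟩
    set B : E := algebraMap F E b with hB
    have hBq : B ^ (3 ^ n) = B := by
      rw [hB, ← map_pow, ← hF, FiniteField.pow_card]
    have hsq : z ^ 2 = B ^ 2 := by
      rw [← hy0, hb, hB, map_mul, sq]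
    have hfac : (z - B) * (z + B) = 0 := by linear_combination hsq
    have hcases : z = B ∨ z = -B := by
      rcases mul_eq_zero.mp hfac with h | h
      · exact Or.inl (sub_eq_zero.mp h)
      · exact Or.inr (eq_neg_of_add_eq_zero_left h)
    have hzz : z ^ (3 ^ n) = z := by
      rcases hcases with h | h
      · rw [h, hBq]
      · rw [h, Odd.neg_pow ((by decide : Odd 3).pow), hBq]
    have hzzero : z = 0 := by
      have h2z : (2 : E) * z = 0 := by
        have := hzz.symm.trans hzq
        linear_combination this
      exact (mul_eq_zero.mp h2z).resolve_left h2ne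
    apply h0
    have : algebraMap F E y0 = 0 := by rw [hy0, hzzero]; ring
    exact (map_eq_zero_iff _ (algebraMap F E).injective).mp this
end

section
/- Let F be the finite field of order 3^n with n odd and let k be an even nonnegative integer. Let E be the quadratic extension of F and U_E = {x ∈ E× : x^{3^n} = x^{-1}}. If x, y ∈ U_E satisfy (x^{3^k+1}−1)/(x^{3^k}+x) = (y^{3^k+1}−1)/(y^{3^k}+y), then x = y or x = −1/y. -/
section aux
variable {E : Type*} [Field E]

private lemma neg_one_pow_pow (b m : ℕ) : (((-1 : E) ^ b) ^ (3 ^ m)) = (-1 : E) ^ b := by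
  rcases Nat.even_or_odd b with hb | hb
  · rw [hb.neg_one_pow, one_pow]
  · rw [hb.neg_one_pow]
    exact Odd.neg_one_pow (Odd.pow (⟨1, by norm_num⟩ : Odd (3:ℕ)))

private lemma neg_one_sq' (b : ℕ) : ((-1 : E) ^ b) * ((-1 : E) ^ b) = 1 := by
  rw [← pow_add]
  exact Even.neg_one_pow ⟨b, rfl⟩

private lemma neg_one_pow_inv (b : ℕ) : ((-1 : E) ^ b)⁻¹ = (-1 : E) ^ b :=
  inv_eq_of_mul_eq_one_right (neg_one_sq' b)

private lemma iter_fix (x : E) (m : ℕ) (h : x ^ 3 ^ m = x) : ∀ c, x ^ 3 ^ (c * m) = x := by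
  intro c
  induction c with
  | zero => simp
  | succ c ih => rw [Nat.succ_mul, pow_add, pow_mul, ih, h]

private lemma iter_neg (x : E) (m : ℕ) (h : x ^ 3 ^ m = -x) :
    ∀ c, x ^ 3 ^ (c * m) = (-1) ^ c * x := by
  intro c
  induction c with
  | zero => simp
  | succ c ih =>
    rw [Nat.succ_mul, pow_add, pow_mul, ih, mul_pow, neg_one_pow_pow, h, pow_succ]
    ring

private lemma nat_bezout (n k : ℕ) (hn : 0 < n) :
    ∃ a b : ℕ, a * n = Nat.gcd n k + b * k := by
  rcases Nat.eq_zero_or_pos k with rfl | hk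
  · exact ⟨1, 0, by simp⟩
  · set A := Nat.gcdA n k
    set B := Nat.gcdB n k
    have hg : (Nat.gcd n k : ℤ) = n * A + k * B := Nat.gcd_eq_gcd_ab n k
    set t : ℤ := A.natAbs + B.natAbs + 1 with ht
    have hA : -A ≤ (A.natAbs : ℤ) := by
      have := Int.natAbs_eq A; omega
    have hB : B ≤ (B.natAbs : ℤ) := Int.le_natAbs
    have hk1 : (1 : ℤ) ≤ k := by exact_mod_cast hk
    have hn1 : (1 : ℤ) ≤ n := by exact_mod_cast hn
    have htpos : (0:ℤ) ≤ t := by positivity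
    have ha : 0 ≤ A + t * k := by nlinarith
    have hb : 0 ≤ t * n - B := by nlinarith
    refine ⟨(A + t * k).toNat, (t * n - B).toNat, ?_⟩
    have : ((A + t * k).toNat : ℤ) * n = Nat.gcd n k + ((t * n - B).toNat : ℤ) * k := by
      rw [Int.toNat_of_nonneg ha, Int.toNat_of_nonneg hb, hg]
      ring
    exact_mod_cast this

private lemma two_g_dvd {n k g : ℕ} (hn : Odd n) (hk : Even k) (hgn : g ∣ n) (hgk : g ∣ k) :
    2 * g ∣ k := by
  obtain ⟨c, rfl⟩ := hgk
  have hgodd : Odd g := hn.of_dvd_nat hgn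
  rcases Nat.even_or_odd c with hc | hc
  · obtain ⟨d, rfl⟩ := hc
    exact ⟨d, by ring⟩
  · exact absurd hk (Nat.not_even_iff_odd.mpr (hgodd.mul hc))

variable [CharP E 3]

private lemma pow3_inj (M : ℕ) {a b : E} (h : a ^ 3 ^ M = b ^ 3 ^ M) : a = b := by
  haveI : Fact (Nat.Prime 3) := ⟨by norm_num⟩
  have := (iterateFrobenius E 3 M).injective
  apply this
  simpa [iterateFrobenius_def] using h

private lemma two_ne_zero'' : (2 : E) ≠ 0 := by
  intro hc
  have : (3:ℕ) ∣ 2 := (CharP.cast_eq_zero_iff E 3 2).mp (by exact_mod_cast hc)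
  omega

private lemma endgame {n k : ℕ} (hn : Odd n) (hk : Even k) {w : E} (hw : w ≠ 0)
    (h1 : w ^ 3 ^ k = -w) (h2g : w ^ 3 ^ (2 * Nat.gcd n k) = w) : False := by
  obtain ⟨c, hc⟩ := two_g_dvd hn hk (Nat.gcd_dvd_left n k) (Nat.gcd_dvd_right n k)
  have hfix : w ^ 3 ^ k = w := by
    rw [hc, mul_comm]; exact iter_fix w (2 * Nat.gcd n k) h2g c
  rw [h1] at hfix
  apply hw
  have h2w : (2 : E) * w = 0 := by linear_combination - hfix
  exact (mul_eq_zero.mp h2w).resolve_left two_ne_zero''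

private lemma keyA (n k : ℕ) (hn : Odd n) (hk : Even k) (w : E) (hw : w ≠ 0)
    (h1 : w ^ 3 ^ k = -w) (h2 : w ^ 3 ^ n = -w) : False := by
  obtain ⟨a, b, hab⟩ := nat_bezout n k hn.pos
  set g := Nat.gcd n k with hg
  have e1 : (w ^ 3 ^ g) ^ 3 ^ (b * k) = (-1) ^ a * w := by
    rw [← pow_mul, ← pow_add, ← hab, iter_neg w n h2 a]
  have e2 : ((-1) ^ (a + b) * w) ^ 3 ^ (b * k) = (-1) ^ a * w := by
    rw [mul_pow, neg_one_pow_pow, iter_neg w k h1 b, ← mul_assoc, ← pow_add]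
    have h3 : (-1 : E) ^ (a + b + b) = (-1) ^ a := by
      rw [pow_add, pow_add, mul_assoc, neg_one_sq', mul_one]
    rw [h3]
  have hv : w ^ 3 ^ g = (-1) ^ (a + b) * w := pow3_inj (b * k) (e1.trans e2.symm)
  apply endgame hn hk hw h1
  rw [two_mul, pow_add, pow_mul, hv, mul_pow, neg_one_pow_pow, hv, ← mul_assoc, neg_one_sq',
    one_mul]

private lemma keyB (n k : ℕ) (hn : Odd n) (hk : Even k) (x : E) (hx : x ≠ 0)
    (h1 : x ^ 3 ^ k = -x) (h2 : x ^ 3 ^ n = x⁻¹) : False := by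
  obtain ⟨a, b, hab⟩ := nat_bezout n k hn.pos
  set g := Nat.gcd n k with hg
  have h2n : x ^ 3 ^ (2 * n) = x := by
    rw [two_mul, pow_add, pow_mul, h2, inv_pow, h2, inv_inv]
  apply endgame hn hk hx h1
  rcases Nat.even_or_odd a with ha | ha
  · obtain ⟨d, hd⟩ := ha
    have e1 : (x ^ 3 ^ g) ^ 3 ^ (b * k) = x := by
      rw [← pow_mul, ← pow_add, ← hab, show a * n = d * (2 * n) by rw [hd]; ring]
      exact iter_fix x (2 * n) h2n d
    have e2 : ((-1) ^ b * x) ^ 3 ^ (b * k) = x := by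
      rw [mul_pow, neg_one_pow_pow, iter_neg x k h1 b, ← mul_assoc, neg_one_sq', one_mul]
    have hv : x ^ 3 ^ g = (-1) ^ b * x := pow3_inj (b * k) (e1.trans e2.symm)
    rw [two_mul, pow_add, pow_mul, hv, mul_pow, neg_one_pow_pow, hv, ← mul_assoc, neg_one_sq',
      one_mul]
  · obtain ⟨d, hd⟩ := ha
    have e1 : (x ^ 3 ^ g) ^ 3 ^ (b * k) = x⁻¹ := by
      rw [← pow_mul, ← pow_add, ← hab, show a * n = d * (2 * n) + n by rw [hd]; ring,
        pow_add, pow_mul, iter_fix x (2 * n) h2n d, h2]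
    have e2 : ((-1) ^ b * x⁻¹) ^ 3 ^ (b * k) = x⁻¹ := by
      rw [mul_pow, neg_one_pow_pow, inv_pow, iter_neg x k h1 b, mul_inv, neg_one_pow_inv,
        ← mul_assoc, neg_one_sq', one_mul]
    have hv : x ^ 3 ^ g = (-1) ^ b * x⁻¹ := pow3_inj (b * k) (e1.trans e2.symm)
    rw [two_mul, pow_add, pow_mul, hv, mul_pow, neg_one_pow_pow, inv_pow, hv, mul_inv,
      neg_one_pow_inv, inv_inv, ← mul_assoc, neg_one_sq', one_mul]

end aux

theorem stmt15 (n k : ℕ) (hn : Odd n) (hk : Even k)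
    (F E : Type*) [Field F] [Fintype F] [Field E] [Fintype E] [Algebra F E]
    (hF : Fintype.card F = 3 ^ n) (hE : Fintype.card E = Fintype.card F ^ 2)
    (x y : E) (hx : x ≠ 0) (hxU : x ^ (3 ^ n) = x⁻¹)
    (hy : y ≠ 0) (hyU : y ^ (3 ^ n) = y⁻¹)
    (h : (x ^ (3 ^ k + 1) - 1) / (x ^ (3 ^ k) + x)
        = (y ^ (3 ^ k + 1) - 1) / (y ^ (3 ^ k) + y)) :
    x = y ∨ x = -1 / y := by
  -- characteristic 3
  have hE3 : Fintype.card E = 3 ^ (2 * n) := by rw [hE, hF, ← pow_mul, mul_comm]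
  haveI : CharP E (ringChar E) := ringChar.charP E
  obtain ⟨m, hp, hcard⟩ := FiniteField.card E (ringChar E)
  haveI hC : CharP E 3 := by
    have h3 : Nat.Prime 3 := by norm_num
    have hdvd : ringChar E ∣ 3 ^ (2 * n) := by
      rw [← hE3, hcard]
      exact dvd_pow_self _ (by positivity)
    have : ringChar E = 3 := (Nat.prime_dvd_prime_iff_eq hp h3).mp (hp.dvd_of_dvd_pow hdvd)
    exact this ▸ ringChar.charP E
  haveI : Fact (Nat.Prime 3) := ⟨by norm_num⟩
  -- denominators are nonzero
  have Dx : x ^ 3 ^ k + x ≠ 0 := by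
    intro h0
    exact keyB n k hn hk x hx (by linear_combination h0) hxU
  have Dy : y ^ 3 ^ k + y ≠ 0 := by
    intro h0
    exact keyB n k hn hk y hy (by linear_combination h0) hyU
  -- cross multiply
  rw [div_eq_div_iff Dx Dy] at h
  -- key identity
  have key : (x * y) ^ 3 ^ k * (x - y) + (x * y + 1) * (x - y) ^ 3 ^ k + (x - y) = 0 := by
    have hD : (x - y) ^ 3 ^ k = x ^ 3 ^ k - y ^ 3 ^ k := sub_pow_char_pow (p := 3) x y k
    have hM : (x * y) ^ 3 ^ k = x ^ 3 ^ k * y ^ 3 ^ k := mul_pow x y _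
    rw [hD, hM]
    have hx1 : x ^ (3 ^ k + 1) = x ^ 3 ^ k * x := by rw [pow_add, pow_one]
    have hy1 : y ^ (3 ^ k + 1) = y ^ 3 ^ k * y := by rw [pow_add, pow_one]
    rw [hx1, hy1] at h
    linear_combination h
  by_cases hd : x - y = 0
  · exact Or.inl (sub_eq_zero.mp hd)
  by_cases hu : x * y + 1 = 0
  · right
    rw [eq_div_iff hy]
    linear_combination hu
  -- the unit circle element w
  set w : E := (x - y) / (x * y + 1) with hw
  have hwne : w ≠ 0 := div_ne_zero hd hu
  have hadd : ∀ M : ℕ, (x * y + 1) ^ 3 ^ M = (x * y) ^ 3 ^ M + 1 := by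
    intro M
    rw [add_pow_char_pow, one_pow]
  have hwk : w ^ 3 ^ k = -w := by
    have hQ : (x * y) ^ 3 ^ k + 1 ≠ 0 := by rw [← hadd k]; exact pow_ne_zero _ hu
    rw [hw, div_pow, hadd k, div_eq_iff hQ]
    field_simp
    linear_combination key
  have hwn : w ^ 3 ^ n = -w := by
    have h1n : (x - y) ^ 3 ^ n = x⁻¹ - y⁻¹ := by
      rw [sub_pow_char_pow (p := 3) x y n, hxU, hyU]
    have h2n' : (x * y + 1) ^ 3 ^ n = x⁻¹ * y⁻¹ + 1 := by
      rw [hadd n, mul_pow, hxU, hyU]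
    have hQn : x⁻¹ * y⁻¹ + 1 ≠ 0 := by
      have heq : x⁻¹ * y⁻¹ + 1 = (x * y + 1) * (x⁻¹ * y⁻¹) := by field_simp; ring
      rw [heq]
      exact mul_ne_zero hu (mul_ne_zero (inv_ne_zero hx) (inv_ne_zero hy))
    rw [hw, div_pow, h1n, h2n', div_eq_iff hQn]
    field_simp
    ring
  exact (keyA n k hn hk w hwne hwk hwn).elim
end

section
/- Let F be the finite field of order 3^n with n odd and let k be an even nonnegative integer. Let E be the quadratic extension of F and U_E = {x ∈ E× : x^{3^n} = x^{-1}}. If x, y ∈ U_E satisfy (x^{3^k+1}−1)/(x^{3^k}+x) = −(y^{3^k+1}−1)/(y^{3^k}+y), then x = −y or x = 1/y. -/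
-- numeric helpers
lemma nm8_odd {n : ℕ} (hn : Odd n) : 3 ^ n % 8 = 3 := by
  obtain ⟨m, rfl⟩ := hn
  have h9 : 9 ^ m % 8 = 1 := by simp [Nat.pow_mod]
  have : 3 ^ (2 * m + 1) = 9 ^ m * 3 := by rw [pow_succ, pow_mul]; norm_num
  rw [this]
  omega

lemma nm8_even {k : ℕ} (hk : Even k) : 3 ^ k % 8 = 1 := by
  obtain ⟨m, rfl⟩ := hk
  have : 3 ^ (m + m) = 9 ^ m := by rw [← two_mul, pow_mul]; norm_num
  rw [this]
  simp [Nat.pow_mod]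

lemma keyNat1 {n k e : ℕ} (hn : Odd n) (hk : Even k) (hk0 : k ≠ 0)
    (he : e = 2 * Nat.gcd e (3 ^ k - 1)) (hdvd : e ∣ 3 ^ n + 1) : False := by
  have hB : (3 : ℕ) ^ k % 8 = 1 := nm8_even hk
  have hBpos : 1 ≤ (3:ℕ) ^ k := Nat.one_le_pow _ _ (by norm_num)
  have h8B : 8 ∣ 3 ^ k - 1 := by omega
  have h2e : 2 ∣ e := ⟨_, he⟩
  have h2d : 2 ∣ Nat.gcd e (3 ^ k - 1) := Nat.dvd_gcd h2e (dvd_trans (by norm_num) h8B)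
  have h4e : 4 ∣ e := by omega
  have h4d : 4 ∣ Nat.gcd e (3 ^ k - 1) := Nat.dvd_gcd h4e (dvd_trans (by norm_num) h8B)
  have h8e : 8 ∣ e := by omega
  have h8C : 8 ∣ 3 ^ n + 1 := dvd_trans h8e hdvd
  have hC : (3 : ℕ) ^ n % 8 = 3 := nm8_odd hn
  omega

lemma keyNat2 {n k e : ℕ} (hn : Odd n) (hk : Even k) (hk0 : k ≠ 0)
    (he1 : e = 2 * Nat.gcd e (3 ^ n - 1)) (he2 : e = 2 * Nat.gcd e (3 ^ k - 1)) : False := by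
  have hB : (3 : ℕ) ^ k % 8 = 1 := nm8_even hk
  have hBpos : 1 ≤ (3:ℕ) ^ k := Nat.one_le_pow _ _ (by norm_num)
  have h8B : 8 ∣ 3 ^ k - 1 := by omega
  have h2e : 2 ∣ e := ⟨_, he2⟩
  have h2d : 2 ∣ Nat.gcd e (3 ^ k - 1) := Nat.dvd_gcd h2e (dvd_trans (by norm_num) h8B)
  have h4e : 4 ∣ e := by omega
  have h4d : 4 ∣ Nat.gcd e (3 ^ k - 1) := Nat.dvd_gcd h4e (dvd_trans (by norm_num) h8B)
  have heq : Nat.gcd e (3 ^ n - 1) = Nat.gcd e (3 ^ k - 1) := by omega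
  have h4A : 4 ∣ 3 ^ n - 1 := dvd_trans (heq ▸ h4d) (Nat.gcd_dvd_right _ _)
  have hC : (3 : ℕ) ^ n % 8 = 3 := nm8_odd hn
  have hApos : 1 ≤ (3:ℕ) ^ n := Nat.one_le_pow _ _ (by norm_num)
  omega


lemma ordEq {E : Type*} [Field E] [CharP E 3] (u : E) (m : ℕ) (hm : m ≠ 0)
    (hu : u ^ m = -1) : orderOf u = 2 * Nat.gcd (orderOf u) m := by
  have hr : ringChar E = 3 := ringChar.eq E 3
  have h2 : orderOf (u ^ m) = 2 := by
    rw [hu, orderOf_neg_one, if_neg (by rw [hr]; norm_num)]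
  rw [orderOf_pow' u hm] at h2
  have hg : Nat.gcd (orderOf u) m ∣ orderOf u := Nat.gcd_dvd_left _ _
  have := Nat.eq_mul_of_div_eq_right hg h2
  omega

-- u^{3^k} = -u, u^{3^n+1} = 1 impossible
lemma noSol1 {E : Type*} [Field E] [CharP E 3] {n k : ℕ} (hn : Odd n) (hk : Even k)
    (u : E) (hu : u ≠ 0) (huk : u ^ (3 ^ k) = -u) (hun : u ^ (3 ^ n + 1) = 1) : False := by
  have h2 : (2 : E) = -1 := by
    have h3 : ((3 : ℕ) : E) = 0 := CharP.cast_eq_zero E 3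
    push_cast at h3
    linear_combination h3
  rcases Nat.eq_zero_or_pos k with hk0 | hk0
  · subst hk0
    rw [pow_zero, pow_one] at huk
    apply hu
    have : (2 : E) * u = 0 := by linear_combination huk
    rw [h2] at this
    simpa using this
  · have hB1 : 3 ≤ (3:ℕ) ^ k := by
      calc (3:ℕ) = 3 ^ 1 := (pow_one 3).symm
      _ ≤ 3 ^ k := Nat.pow_le_pow_right (by norm_num) hk0
    have hsp : (3:ℕ) ^ k = (3 ^ k - 1) + 1 := by omega
    have hukm : u ^ (3 ^ k - 1) = -1 := by
      have := huk
      rw [hsp, pow_succ] at this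
      have h1 : u ^ (3 ^ k - 1) * u = -1 * u := by rw [this]; ring
      exact mul_right_cancel₀ hu h1
    have he := ordEq u (3 ^ k - 1) (by omega) hukm
    exact keyNat1 hn hk (by omega) he (orderOf_dvd_of_pow_eq_one hun)

lemma noSol2 {E : Type*} [Field E] [CharP E 3] {n k : ℕ} (hn : Odd n) (hk : Even k)
    (u : E) (hu : u ≠ 0) (huk : u ^ (3 ^ k) = -u) (hun : u ^ (3 ^ n) = -u) : False := by
  have h2 : (2 : E) = -1 := by
    have h3 : ((3 : ℕ) : E) = 0 := CharP.cast_eq_zero E 3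
    push_cast at h3
    linear_combination h3
  rcases Nat.eq_zero_or_pos k with hk0 | hk0
  · subst hk0
    rw [pow_zero, pow_one] at huk
    apply hu
    have : (2 : E) * u = 0 := by linear_combination huk
    rw [h2] at this
    simpa using this
  · have hB1 : 3 ≤ (3:ℕ) ^ k := by
      calc (3:ℕ) = 3 ^ 1 := (pow_one 3).symm
      _ ≤ 3 ^ k := Nat.pow_le_pow_right (by norm_num) hk0
    have hA1 : 1 ≤ (3:ℕ) ^ n := Nat.one_le_pow _ _ (by norm_num)
    have hukm : u ^ (3 ^ k - 1) = -1 := by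
      rw [show (3:ℕ)^k = (3 ^ k - 1) + 1 by omega, pow_succ] at huk
      exact mul_right_cancel₀ hu (by rw [huk]; ring)
    have hunm : u ^ (3 ^ n - 1) = -1 := by
      rw [show (3:ℕ)^n = (3 ^ n - 1) + 1 by omega, pow_succ] at hun
      exact mul_right_cancel₀ hu (by rw [hun]; ring)
    have hn1 : (3:ℕ) ^ n - 1 ≠ 0 := by
      have : 3 ≤ (3:ℕ) ^ n := by
        calc (3:ℕ) = 3 ^ 1 := (pow_one 3).symm
        _ ≤ 3 ^ n := Nat.pow_le_pow_right (by norm_num) hn.pos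
      omega
    exact keyNat2 hn hk (by omega) (ordEq u _ hn1 hunm) (ordEq u _ (by omega) hukm)

theorem stmt16 (n k : ℕ) (hn : Odd n) (hk : Even k)
    (F E : Type*) [Field F] [Fintype F] [Field E] [Fintype E] [Algebra F E]
    (hF : Fintype.card F = 3 ^ n) (hE : Fintype.card E = Fintype.card F ^ 2)
    (x y : E) (hx : x ≠ 0) (hxU : x ^ (3 ^ n) = x⁻¹)
    (hy : y ≠ 0) (hyU : y ^ (3 ^ n) = y⁻¹)
    (h : (x ^ (3 ^ k + 1) - 1) / (x ^ (3 ^ k) + x)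
        = -((y ^ (3 ^ k + 1) - 1) / (y ^ (3 ^ k) + y))) :
    x = -y ∨ x = 1 / y := by
  -- characteristic 3
  haveI : Fact (Nat.Prime 3) := ⟨by norm_num⟩
  haveI hrc : CharP E (ringChar E) := ringChar.charP E
  have hchar3 : ringChar E = 3 := by
    obtain ⟨m, hp, hc⟩ := FiniteField.card E (ringChar E)
    rw [hE, hF, ← pow_mul] at hc
    have hd : ringChar E ∣ 3 ^ (n * 2) := by
      rw [hc]
      exact dvd_pow_self _ (by positivity)
    have := (Nat.Prime.dvd_of_dvd_pow hp hd)
    have h3 : Nat.Prime 3 := by norm_num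
    exact (Nat.prime_dvd_prime_iff_eq hp h3).mp this
  haveI hE3 : CharP E 3 := hchar3 ▸ hrc
  have h3odd : Odd (3:ℕ) := ⟨1, by norm_num⟩
  have hq_odd : Odd ((3:ℕ) ^ k) := h3odd.pow
  have h3n_odd : Odd ((3:ℕ) ^ n) := h3odd.pow
  have hqe : Even ((3:ℕ) ^ k + 1) := Odd.add_one hq_odd
  -- denominators nonzero
  have hdenx : x ^ (3 ^ k) + x ≠ 0 := by
    intro h0
    refine noSol1 hn hk x hx (by linear_combination h0) ?_
    rw [pow_succ, hxU, inv_mul_cancel₀ hx]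
  have hdeny : y ^ (3 ^ k) + y ≠ 0 := by
    intro h0
    refine noSol1 hn hk y hy (by linear_combination h0) ?_
    rw [pow_succ, hyU, inv_mul_cancel₀ hy]
  rw [← neg_div, div_eq_div_iff hdenx hdeny] at h
  -- switch to z = -y
  obtain ⟨z, hzdef⟩ : ∃ z : E, z = -y := ⟨-y, rfl⟩
  have hyz : y = -z := by rw [hzdef]; ring
  have hz : z ≠ 0 := by rw [hzdef]; exact neg_ne_zero.mpr hy
  have hzU : z ^ (3 ^ n) = z⁻¹ := by
    rw [hzdef, Odd.neg_pow h3n_odd, hyU, neg_inv]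
  rw [hyz, Odd.neg_pow hq_odd, Even.neg_pow hqe] at h
  have eq5 : (x ^ (3 ^ k + 1) - 1) * (z ^ (3 ^ k) + z)
      = (z ^ (3 ^ k + 1) - 1) * (x ^ (3 ^ k) + x) := by linear_combination -h
  have key : (x - z) * ((x * z) ^ (3 ^ k) + 1) + (x - z) ^ (3 ^ k) * (x * z + 1) = 0 := by
    rw [sub_pow_char_pow, mul_pow]
    linear_combination eq5
  by_cases hdz : x - z = 0
  · left; rw [hzdef] at hdz; linear_combination hdz
  by_cases hw : x * z + 1 = 0
  · right
    have hxy : x * y = 1 := by rw [hyz]; linear_combination -hw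
    rw [eq_div_iff hy]
    linear_combination hxy
  -- contradiction case
  exfalso
  set u : E := (x * z + 1) / (x - z) with hudef
  have hu : u ≠ 0 := div_ne_zero hw hdz
  have huk : u ^ (3 ^ k) = -u := by
    rw [hudef, div_pow, add_pow_char_pow, one_pow, mul_pow]
    rw [div_eq_iff (pow_ne_zero _ hdz), neg_mul, div_mul_eq_mul_div,
      ← neg_div, eq_div_iff hdz]
    linear_combination key
  have hun : u ^ (3 ^ n) = -u := by
    rw [hudef, div_pow, add_pow_char_pow, one_pow, mul_pow, sub_pow_char_pow,
      hxU, hzU]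
    have hxzi : x⁻¹ - z⁻¹ ≠ 0 := by
      rw [sub_ne_zero]
      intro hcon
      apply hdz
      rw [sub_eq_zero]
      exact inv_injective hcon
    rw [show -((x * z + 1) / (x - z)) = -(x * z + 1) / (x - z) from (neg_div _ _).symm,
      div_eq_div_iff hxzi hdz]
    linear_combination (z⁻¹ + z) * (mul_inv_cancel₀ hx) - (x⁻¹ + x) * (mul_inv_cancel₀ hz)
  exact noSol2 hn hk u hu huk hun
end
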